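/- arXiv:1908.01198 — 9 statements merged into one kernel-verified Lean document; each statement's English description precedes it below -/
import Mathlib

section
/- Let N be a positive integer, let g be an N-density-like arithmetic function such that the series ∑_{d=1}^∞ (1 − g(d))/d converges, and set f(n) = ∏_{d|n} g(d). Let {L_t}_{t≥1} be a sequence of positive integers such that (i) L_t divides L_{t+1} for all t ≥ 1, (ii) L_t → ∞ as t → ∞, and (iii) there exists a function h : ℝ_{>0} → ℝ with h(x) → ∞ as x → ∞ such that every integer n ≥ 1 with gcd(n, N) = 1 that does not divide L_t satisfies n > h(t). Then the sequence A_t = (1/L_t) ∑_{r | L_t} f(r) φ(L_t / r) converges to a limit A_f ∈ [0, 1], and A_f is the mean value of f, i.e. lim_{x→∞} (1/x) ∑_{n ≤ x} f(n) = A_f. -/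
open Filter Finset

private lemma aux_one_sub_sum_le_prod (s : Finset ℕ) (u : ℕ → ℝ)
    (h0 : ∀ d ∈ s, 0 ≤ u d) (h1 : ∀ d ∈ s, u d ≤ 1) :
    1 - ∑ d ∈ s, (1 - u d) ≤ ∏ d ∈ s, u d := by
  classical
  induction s using Finset.induction_on with
  | empty => simp
  | @insert a s ha ih =>
    rw [Finset.sum_insert ha, Finset.prod_insert ha]
    have hP : 0 ≤ ∏ d ∈ s, u d :=
      Finset.prod_nonneg fun d hd => h0 d (Finset.mem_insert_of_mem hd)
    have hS : 0 ≤ ∑ d ∈ s, (1 - u d) :=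
      Finset.sum_nonneg fun d hd => by
        have := h1 d (Finset.mem_insert_of_mem hd); linarith
    have hih : 1 - ∑ d ∈ s, (1 - u d) ≤ ∏ d ∈ s, u d :=
      ih (fun d hd => h0 d (Finset.mem_insert_of_mem hd))
        (fun d hd => h1 d (Finset.mem_insert_of_mem hd))
    have ha0 := h0 a (Finset.mem_insert_self a s)
    have ha1 := h1 a (Finset.mem_insert_self a s)
    nlinarith [mul_le_mul_of_nonneg_left hih ha0]

private lemma aux_card_coprime (k : ℕ) (hk : 0 < k) :
    ((Finset.Icc 1 k).filter (fun m => Nat.gcd m k = 1)).card = Nat.totient k := by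
  rcases eq_or_lt_of_le (show 1 ≤ k from hk) with h1 | h2
  · have : k = 1 := h1.symm
    subst this
    decide
  · rw [Nat.totient_eq_card_coprime]
    congr 1
    ext m
    simp only [Finset.mem_filter, Finset.mem_Icc, Finset.mem_range, Nat.Coprime]
    constructor
    · rintro ⟨⟨h1m, hmk⟩, hg⟩
      refine ⟨?_, by rwa [Nat.gcd_comm]⟩
      rcases lt_or_eq_of_le hmk with hlt | heq
      · exact hlt
      · subst heq; rw [Nat.gcd_self] at hg; omega
    · rintro ⟨hmk, hg⟩
      rw [Nat.gcd_comm] at hg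
      refine ⟨⟨?_, hmk.le⟩, hg⟩
      rcases Nat.eq_zero_or_pos m with hm0 | hm0
      · subst hm0; rw [Nat.gcd_zero_left] at hg; omega
      · exact hm0

private lemma aux_card_fiber (Lv r : ℕ) (hL : 0 < Lv) (hr : r ∣ Lv) (hrpos : 0 < r) :
    ((Finset.Ioc 0 Lv).filter (fun n => Nat.gcd n Lv = r)).card = Nat.totient (Lv / r) := by
  have hdivpos : 0 < Lv / r := Nat.div_pos (Nat.le_of_dvd hL hr) hrpos
  rw [← aux_card_coprime (Lv / r) hdivpos]
  rw [show Finset.Icc 1 (Lv / r) = Finset.Ioc 0 (Lv / r) from Finset.Icc_add_one_left_eq_Ioc 0 _]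
  apply Finset.card_nbij' (i := fun n => n / r) (j := fun m => m * r)
  · intro n hn
    simp only [Finset.mem_coe, Finset.mem_filter, Finset.mem_Ioc] at hn ⊢
    obtain ⟨⟨hn0, hnL⟩, hg⟩ := hn
    have hrn : r ∣ n := hg ▸ Nat.gcd_dvd_left n Lv
    refine ⟨⟨Nat.div_pos (Nat.le_of_dvd hn0 hrn) hrpos, Nat.div_le_div_right hnL⟩, ?_⟩
    have := Nat.coprime_div_gcd_div_gcd (m := n) (n := Lv) (hg ▸ hrpos)
    rwa [hg] at this
  · intro m hm
    simp only [Finset.mem_coe, Finset.mem_filter, Finset.mem_Ioc] at hm ⊢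
    obtain ⟨⟨hm0, hmL⟩, hg⟩ := hm
    refine ⟨⟨Nat.mul_pos hm0 hrpos, ?_⟩, ?_⟩
    · calc m * r ≤ (Lv / r) * r := Nat.mul_le_mul_right r hmL
        _ = Lv := Nat.div_mul_cancel hr
    · conv_lhs => rw [show Lv = (Lv / r) * r from (Nat.div_mul_cancel hr).symm]
      rw [Nat.gcd_mul_right, hg, one_mul]
  · intro n hn
    simp only [Finset.mem_coe, Finset.mem_filter, Finset.mem_Ioc] at hn
    exact Nat.div_mul_cancel (hn.2 ▸ Nat.gcd_dvd_left n Lv)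
  · intro m _
    dsimp only; rw [Nat.mul_comm]; exact Nat.mul_div_cancel_left m hrpos

private lemma aux_sum_gcd (f : ℕ → ℝ) (Lv : ℕ) (hL : 0 < Lv) :
    ∑ n ∈ Finset.Ioc 0 Lv, f (Nat.gcd n Lv)
      = ∑ r ∈ Lv.divisors, f r * (Nat.totient (Lv / r) : ℝ) := by
  classical
  rw [← Finset.sum_fiberwise_of_maps_to (g := fun n => Nat.gcd n Lv) (t := Lv.divisors)
    (fun n hn => Nat.mem_divisors.mpr ⟨Nat.gcd_dvd_right n Lv, hL.ne'⟩)]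
  apply Finset.sum_congr rfl
  intro r hr
  have hrd := Nat.mem_divisors.mp hr
  have hrpos : 0 < r := Nat.pos_of_mem_divisors hr
  have : ∀ n ∈ (Finset.Ioc 0 Lv).filter (fun n => Nat.gcd n Lv = r),
      f (Nat.gcd n Lv) = f r := by
    intro n hn
    rw [(Finset.mem_filter.mp hn).2]
  rw [Finset.sum_congr rfl this, Finset.sum_const,
    aux_card_fiber Lv r hL hrd.1 hrpos, nsmul_eq_mul, mul_comm]

private lemma aux_sum_gcd_mul (f : ℕ → ℝ) (Lv : ℕ) (q : ℕ) :
    ∑ n ∈ Finset.Ioc 0 (q * Lv), f (Nat.gcd n Lv)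
      = q * ∑ n ∈ Finset.Ioc 0 Lv, f (Nat.gcd n Lv) := by
  induction q with
  | zero => simp
  | succ q ih =>
    rw [show (q + 1) * Lv = q * Lv + Lv by ring,
      ← Finset.sum_Ioc_consecutive _ (Nat.zero_le (q * Lv)) (Nat.le_add_right _ _), ih]
    have hshift : ∑ n ∈ Finset.Ioc (q * Lv) (q * Lv + Lv), f (Nat.gcd n Lv)
        = ∑ n ∈ Finset.Ioc 0 Lv, f (Nat.gcd n Lv) := by
      rw [show Finset.Ioc (q * Lv) (q * Lv + Lv)
          = (Finset.Ioc 0 Lv).map (addLeftEmbedding (q * Lv)) by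
        rw [Finset.map_add_left_Ioc]; simp, Finset.sum_map]
      apply Finset.sum_congr rfl
      intro m _
      simp only [addLeftEmbedding_apply]
      rw [Nat.add_comm, Nat.gcd_add_mul_right_left]
    rw [hshift]
    push_cast
    ring

private lemma aux_sum_gcd_bound (f : ℕ → ℝ) (Lv : ℕ) (hL : 0 < Lv)
    (hf0 : ∀ n, 1 ≤ n → 0 ≤ f n) (hf1 : ∀ n, 1 ≤ n → f n ≤ 1) (M : ℕ) :
    |∑ n ∈ Finset.Ioc 0 M, f (Nat.gcd n Lv)
      - (∑ n ∈ Finset.Ioc 0 Lv, f (Nat.gcd n Lv)) / (Lv : ℝ) * M| ≤ (Lv : ℝ) := by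
  set S : ℝ := ∑ n ∈ Finset.Ioc 0 Lv, f (Nat.gcd n Lv) with hSdef
  have hgcd_pos : ∀ n : ℕ, 0 < Nat.gcd n Lv := fun n => Nat.gcd_pos_of_pos_right n hL
  have hterm0 : ∀ n : ℕ, 0 ≤ f (Nat.gcd n Lv) := fun n => hf0 _ (hgcd_pos n)
  have hterm1 : ∀ n : ℕ, f (Nat.gcd n Lv) ≤ 1 := fun n => hf1 _ (hgcd_pos n)
  set q := M / Lv with hq
  set s := M % Lv with hs
  have hM : M = q * Lv + s := by rw [hq, hs]; exact (Nat.div_add_mod' M Lv).symm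
  have hsL : s < Lv := Nat.mod_lt M hL
  have hsplit : ∑ n ∈ Finset.Ioc 0 M, f (Nat.gcd n Lv)
      = q * S + ∑ n ∈ Finset.Ioc (q * Lv) M, f (Nat.gcd n Lv) := by
    rw [← aux_sum_gcd_mul f Lv q,
      ← Finset.sum_Ioc_consecutive (fun n => f (Nat.gcd n Lv)) (Nat.zero_le (q * Lv))
        (by omega : q * Lv ≤ M)]
  set R : ℝ := ∑ n ∈ Finset.Ioc (q * Lv) M, f (Nat.gcd n Lv) with hRdef
  have hR0 : 0 ≤ R := Finset.sum_nonneg fun n _ => hterm0 n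
  have hRs : R ≤ (s : ℝ) := by
    have := Finset.sum_le_card_nsmul (Finset.Ioc (q * Lv) M)
      (fun n => f (Nat.gcd n Lv)) 1 (fun n _ => hterm1 n)
    rw [Nat.card_Ioc] at this
    have hcard : ((M - q * Lv : ℕ) : ℝ) = (s : ℝ) := by
      rw [hM, Nat.add_sub_cancel_left]
    simpa [hcard] using this
  have hS0 : 0 ≤ S := Finset.sum_nonneg fun n _ => hterm0 n
  have hSL : S ≤ (Lv : ℝ) := by
    have := Finset.sum_le_card_nsmul (Finset.Ioc 0 Lv)
      (fun n => f (Nat.gcd n Lv)) 1 (fun n _ => hterm1 n)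
    simpa [Nat.card_Ioc] using this
  have hLpos : (0 : ℝ) < (Lv : ℝ) := by exact_mod_cast hL
  have hMc : (M : ℝ) = q * Lv + s := by exact_mod_cast congrArg (Nat.cast : ℕ → ℝ) hM
  have hkey : S / (Lv : ℝ) * M = q * S + S * s / Lv := by
    rw [hMc]; field_simp
  rw [hsplit, hkey]
  have hsc : (s : ℝ) < (Lv : ℝ) := by exact_mod_cast hsL
  have hs0 : (0 : ℝ) ≤ (s : ℝ) := Nat.cast_nonneg s
  have h1 : S * s / Lv ≤ (s : ℝ) := by
    rw [div_le_iff₀ hLpos]; nlinarith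
  have h2 : 0 ≤ S * s / Lv := by positivity
  rw [abs_le]
  constructor <;> nlinarith

/-- **Main theorem (existence of the mean value).**
Let `N` be a positive integer, `g` an `N`-density-like arithmetic function
(`0 < g n ≤ 1` for all `n ≥ 1`, with `g n = 1` whenever `gcd(n, N) > 1`) such that
`∑ (1 - g d)/d` converges, and set `f n = ∏_{d ∣ n} g d`.  Let `{L t}` be a sequence of
positive integers with `L t ∣ L (t+1)`, `L t → ∞`, and such that every `n ≥ 1` coprime to
`N` not dividing `L t` satisfies `n > h t` for some `h → ∞`.  Then the sequence
`A t = (1/L t) ∑_{r ∣ L t} f r · φ(L t / r)` converges to a limit `A_f ∈ [0,1]`, which is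
the mean value of `f`. -/
theorem mean_value_of_density_like
    (N : ℕ) (hN : 1 ≤ N) (g : ℕ → ℝ)
    (hg_pos : ∀ n : ℕ, 1 ≤ n → 0 < g n)
    (hg_le : ∀ n : ℕ, 1 ≤ n → g n ≤ 1)
    (hg_N : ∀ n : ℕ, 1 ≤ n → 1 < Nat.gcd n N → g n = 1)
    (hsum : Summable fun d : ℕ => (1 - g d) / d)
    (f : ℕ → ℝ) (hf : ∀ n : ℕ, f n = ∏ d ∈ n.divisors, g d)
    (L : ℕ → ℕ)
    (hLpos : ∀ t : ℕ, 1 ≤ t → 0 < L t)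
    (hLdvd : ∀ t : ℕ, 1 ≤ t → L t ∣ L (t + 1))
    (hLtop : Tendsto (fun t : ℕ => L t) atTop atTop)
    (h : ℝ → ℝ) (hh : Tendsto h atTop atTop)
    (hhL : ∀ t : ℕ, 1 ≤ t → ∀ n : ℕ, 1 ≤ n → Nat.gcd n N = 1 → ¬ n ∣ L t → h t < n)
    (A : ℕ → ℝ)
    (hA : ∀ t : ℕ, A t =
      (∑ r ∈ (L t).divisors, f r * (Nat.totient (L t / r) : ℝ)) / (L t : ℝ)) :
    ∃ Af : ℝ, Af ∈ Set.Icc (0 : ℝ) 1 ∧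
      Tendsto A atTop (nhds Af) ∧
      Tendsto (fun x : ℝ => (∑ n ∈ Finset.Icc 1 ⌊x⌋₊, f n) / x) atTop (nhds Af) := by
  classical
  have hIcc : ∀ m : ℕ, Finset.Icc 1 m = Finset.Ioc 0 m := fun m => Finset.Icc_add_one_left_eq_Ioc 0 m
  -- basic facts about f
  have hfpos : ∀ n : ℕ, 1 ≤ n → 0 < f n := by
    intro n hn
    rw [hf n]
    exact Finset.prod_pos fun d hd => hg_pos d (Nat.pos_of_mem_divisors hd)
  have hf0 : ∀ n : ℕ, 1 ≤ n → 0 ≤ f n := fun n hn => (hfpos n hn).le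
  have hf1 : ∀ n : ℕ, 1 ≤ n → f n ≤ 1 := by
    intro n hn
    rw [hf n]
    exact Finset.prod_le_one (fun d hd => (hg_pos d (Nat.pos_of_mem_divisors hd)).le)
      (fun d hd => hg_le d (Nat.pos_of_mem_divisors hd))
  have hfanti : ∀ r n : ℕ, r ∣ n → 0 < n → f n ≤ f r := by
    intro r n hrn hn
    have hr : 0 < r := Nat.pos_of_dvd_of_pos hrn hn
    have hsub : r.divisors ⊆ n.divisors := Nat.divisors_subset_of_dvd hn.ne' hrn
    have hfact : f n = (∏ d ∈ n.divisors \ r.divisors, g d) * f r := by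
      rw [hf n, hf r, ← Finset.prod_sdiff hsub]
    have hc0 : 0 ≤ ∏ d ∈ n.divisors \ r.divisors, g d :=
      Finset.prod_nonneg fun d hd =>
        (hg_pos d (Nat.pos_of_mem_divisors (Finset.mem_sdiff.mp hd).1)).le
    have hc1 : (∏ d ∈ n.divisors \ r.divisors, g d) ≤ 1 :=
      Finset.prod_le_one
        (fun d hd => (hg_pos d (Nat.pos_of_mem_divisors (Finset.mem_sdiff.mp hd).1)).le)
        (fun d hd => hg_le d (Nat.pos_of_mem_divisors (Finset.mem_sdiff.mp hd).1))
    have hfr : 0 ≤ f r := hf0 r hr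
    rw [hfact]
    nlinarith
  -- A t as average
  have hAS : ∀ t : ℕ, 1 ≤ t → A t =
      (∑ n ∈ Finset.Ioc 0 (L t), f (Nat.gcd n (L t))) / (L t : ℝ) := by
    intro t ht
    rw [hA t, ← aux_sum_gcd f (L t) (hLpos t ht)]
  have hS0 : ∀ t : ℕ, 1 ≤ t → 0 ≤ ∑ n ∈ Finset.Ioc 0 (L t), f (Nat.gcd n (L t)) := by
    intro t ht
    exact Finset.sum_nonneg fun n _ =>
      hf0 _ (Nat.gcd_pos_of_pos_right n (hLpos t ht))
  have hSle : ∀ t : ℕ, 1 ≤ t →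
      (∑ n ∈ Finset.Ioc 0 (L t), f (Nat.gcd n (L t))) ≤ (L t : ℝ) := by
    intro t ht
    have := Finset.sum_le_card_nsmul (Finset.Ioc 0 (L t))
      (fun n => f (Nat.gcd n (L t))) 1
      (fun n _ => hf1 _ (Nat.gcd_pos_of_pos_right n (hLpos t ht)))
    simpa [Nat.card_Ioc] using this
  have hA0 : ∀ t : ℕ, 1 ≤ t → 0 ≤ A t := by
    intro t ht
    rw [hAS t ht]
    exact div_nonneg (hS0 t ht) (Nat.cast_nonneg _)
  have hA1 : ∀ t : ℕ, 1 ≤ t → A t ≤ 1 := by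
    intro t ht
    rw [hAS t ht]
    have hL : (0 : ℝ) < L t := by exact_mod_cast hLpos t ht
    rw [div_le_one hL]
    exact hSle t ht
  -- A is antitone from index 1 on
  have hAanti : ∀ t : ℕ, 1 ≤ t → A (t + 1) ≤ A t := by
    intro t ht
    obtain ⟨k, hk⟩ := hLdvd t ht
    have hLt := hLpos t ht
    have hLt1 := hLpos (t + 1) (by omega)
    have hkpos : 0 < k := by
      rcases Nat.eq_zero_or_pos k with h0 | h0
      · rw [h0, Nat.mul_zero] at hk; omega
      · exact h0
    have hstep : (∑ n ∈ Finset.Ioc 0 (L (t + 1)), f (Nat.gcd n (L (t + 1))))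
        ≤ (k : ℝ) * ∑ n ∈ Finset.Ioc 0 (L t), f (Nat.gcd n (L t)) := by
      have hle : (∑ n ∈ Finset.Ioc 0 (L (t + 1)), f (Nat.gcd n (L (t + 1))))
          ≤ ∑ n ∈ Finset.Ioc 0 (L (t + 1)), f (Nat.gcd n (L t)) := by
        apply Finset.sum_le_sum
        intro n hn
        apply hfanti
        · exact Nat.dvd_gcd (Nat.gcd_dvd_left n (L t))
            ((Nat.gcd_dvd_right n (L t)).trans (hLdvd t ht))
        · exact Nat.gcd_pos_of_pos_right n hLt1
      calc (∑ n ∈ Finset.Ioc 0 (L (t + 1)), f (Nat.gcd n (L (t + 1)))) ≤ _ := hle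
        _ = (k : ℝ) * ∑ n ∈ Finset.Ioc 0 (L t), f (Nat.gcd n (L t)) := by
            rw [show L (t + 1) = k * L t by rw [hk]; ring, aux_sum_gcd_mul]
    rw [hAS t ht, hAS (t + 1) (by omega)]
    have hLtR : (0 : ℝ) < L t := by exact_mod_cast hLt
    have hLt1R : (0 : ℝ) < L (t + 1) := by exact_mod_cast hLt1
    rw [div_le_div_iff₀ hLt1R hLtR]
    have hkc : (L (t + 1) : ℝ) = (k : ℝ) * (L t : ℝ) := by
      rw [hk]; push_cast; ring
    have hSt0 := hS0 t ht
    nlinarith [hstep, hLtR]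
  -- convergence of A
  have hbdd : BddBelow (Set.range fun t : ℕ => A (t + 1)) := by
    refine ⟨0, ?_⟩
    rintro x ⟨t, rfl⟩
    exact hA0 (t + 1) (by omega)
  have hanti : Antitone fun t : ℕ => A (t + 1) :=
    antitone_nat_of_succ_le fun t => hAanti (t + 1) (by omega)
  set Af := ⨅ t : ℕ, A (t + 1) with hAfdef
  have htend' : Tendsto (fun t : ℕ => A (t + 1)) atTop (nhds Af) :=
    tendsto_atTop_ciInf hanti hbdd
  have htendA : Tendsto A atTop (nhds Af) := (tendsto_add_atTop_iff_nat 1).mp htend'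
  have hAfle : ∀ t : ℕ, 1 ≤ t → Af ≤ A t := by
    intro t ht
    have := ciInf_le hbdd (t - 1)
    rwa [show t - 1 + 1 = t by omega] at this
  have hAf0 : 0 ≤ Af := le_ciInf fun t => hA0 (t + 1) (by omega)
  have hAf1 : Af ≤ 1 := le_trans (ciInf_le hbdd 0) (hA1 1 le_rfl)
  refine ⟨Af, ⟨hAf0, hAf1⟩, htendA, ?_⟩
  -- mean value
  simp only [hIcc]
  rw [Metric.tendsto_atTop]
  intro ε hε
  -- tail control for the series
  obtain ⟨s₀, hs₀⟩ := summable_iff_vanishing.mp hsum (Set.Ioo (-(ε / 4)) (ε / 4))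
    (Ioo_mem_nhds (by linarith) (by linarith))
  set D : ℕ := s₀.sup id + 1 with hDdef
  have hD : ∀ u : Finset ℕ, (∀ d ∈ u, D ≤ d) → ∑ d ∈ u, (1 - g d) / d < ε / 4 := by
    intro u hu
    have hdisj : Disjoint u s₀ := by
      rw [Finset.disjoint_left]
      intro d hd hds₀
      have h1 := Finset.le_sup (f := id) hds₀
      have h2 := hu d hd
      simp only [id] at h1
      omega
    exact (hs₀ u hdisj).2
  -- choose a good index t
  have ev1 : ∀ᶠ t : ℕ in atTop, A t < Af + ε / 4 :=
    htendA.eventually_lt_const (by linarith)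
  have ev2 : ∀ᶠ t : ℕ in atTop, (D : ℝ) ≤ h t :=
    (hh.comp tendsto_natCast_atTop_atTop).eventually_ge_atTop (D : ℝ)
  obtain ⟨t, ht1, htA, htD⟩ :
      ∃ t : ℕ, 1 ≤ t ∧ A t < Af + ε / 4 ∧ (D : ℝ) ≤ h t := by
    obtain ⟨t, h1, h2, h3⟩ := ((eventually_ge_atTop 1).and (ev1.and ev2)).exists
    exact ⟨t, h1, h2, h3⟩
  have hLt := hLpos t ht1
  have hLtR : (0 : ℝ) < L t := by exact_mod_cast hLt
  -- error term
  set errQ : ℕ → ℝ :=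
    fun n => ∑ d ∈ n.divisors.filter (fun d : ℕ => h (t : ℝ) < (d : ℝ)), (1 - g d)
    with herrQdef
  have herrQ0 : ∀ n : ℕ, 0 ≤ errQ n := by
    intro n
    simp only [herrQdef]
    apply Finset.sum_nonneg
    intro d hd
    have := hg_le d (Nat.pos_of_mem_divisors (Finset.mem_filter.mp hd).1)
    linarith
  -- pointwise lower bound
  have hpt : ∀ M : ℕ, ∀ n ∈ Finset.Ioc 0 M, f (Nat.gcd n (L t)) - errQ n ≤ f n := by
    intro M n hn
    obtain ⟨hn0, -⟩ := Finset.mem_Ioc.mp hn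
    set m := Nat.gcd n (L t) with hm
    have hmn : m ∣ n := Nat.gcd_dvd_left n (L t)
    have hm0 : 0 < m := Nat.gcd_pos_of_pos_right n hLt
    have hsub : m.divisors ⊆ n.divisors := Nat.divisors_subset_of_dvd hn0.ne' hmn
    have hfact : f n = (∏ d ∈ n.divisors \ m.divisors, g d) * f m := by
      rw [hf n, hf m, ← Finset.prod_sdiff hsub]
    have hTge : 1 - (∑ d ∈ n.divisors \ m.divisors, (1 - g d))
        ≤ ∏ d ∈ n.divisors \ m.divisors, g d := by
      apply aux_one_sub_sum_le_prod
      · intro d hd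
        exact (hg_pos d (Nat.pos_of_mem_divisors (Finset.mem_sdiff.mp hd).1)).le
      · intro d hd
        exact hg_le d (Nat.pos_of_mem_divisors (Finset.mem_sdiff.mp hd).1)
    have hTle : (∑ d ∈ n.divisors \ m.divisors, (1 - g d)) ≤ errQ n := by
      have hfilter : (∑ d ∈ n.divisors \ m.divisors, (1 - g d))
          = ∑ d ∈ (n.divisors \ m.divisors).filter (fun d => Nat.gcd d N = 1),
              (1 - g d) := by
        refine (Finset.sum_filter_of_ne ?_).symm
        intro d hd hne
        have hd0 : 0 < d := Nat.pos_of_mem_divisors (Finset.mem_sdiff.mp hd).1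
        have hgcdpos : 0 < Nat.gcd d N := Nat.gcd_pos_of_pos_right d hN
        by_contra hc
        have hgt : 1 < Nat.gcd d N := by omega
        rw [hg_N d hd0 hgt] at hne
        simp at hne
      rw [hfilter]
      simp only [herrQdef]
      apply Finset.sum_le_sum_of_subset_of_nonneg
      · intro d hd
        simp only [Finset.mem_filter, Finset.mem_sdiff] at hd ⊢
        obtain ⟨⟨hdn, hnotm⟩, hcop⟩ := hd
        have hdvd : d ∣ n := (Nat.mem_divisors.mp hdn).1
        have hd0 : 0 < d := Nat.pos_of_mem_divisors hdn
        have hdL : ¬ d ∣ L t := by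
          intro hdL
          exact hnotm (Nat.mem_divisors.mpr ⟨Nat.dvd_gcd hdvd hdL, hm0.ne'⟩)
        exact ⟨hdn, hhL t ht1 d hd0 hcop hdL⟩
      · intro d hd _
        have := hg_le d (Nat.pos_of_mem_divisors (Finset.mem_filter.mp hd).1)
        linarith
    have hfm0 : 0 ≤ f m := hf0 m hm0
    have hfm1 : f m ≤ 1 := hf1 m hm0
    have hE0 := herrQ0 n
    rw [hfact]
    have hmul := mul_le_mul_of_nonneg_right
      (le_trans (by linarith : 1 - errQ n ≤
        1 - (∑ d ∈ n.divisors \ m.divisors, (1 - g d))) hTge) hfm0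
    nlinarith
  -- the error sum bound
  have herr : ∀ M : ℕ, (∑ n ∈ Finset.Ioc 0 M, errQ n) ≤ ε / 4 * M := by
    intro M
    have hrw : ∀ n ∈ Finset.Ioc 0 M, errQ n
        = ∑ d ∈ Finset.Ioc 0 M,
            (if d ∣ n ∧ h (t : ℝ) < (d : ℝ) then (1 - g d) else 0) := by
      intro n hn
      obtain ⟨hn0, hnM⟩ := Finset.mem_Ioc.mp hn
      have hset : (Finset.Ioc 0 M).filter (fun d => d ∣ n ∧ h (t : ℝ) < (d : ℝ))
          = n.divisors.filter (fun d : ℕ => h (t : ℝ) < (d : ℝ)) := by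
        ext d
        simp only [Finset.mem_filter, Finset.mem_Ioc, Nat.mem_divisors]
        constructor
        · rintro ⟨⟨hd0, hdM⟩, hdn, hQ⟩
          exact ⟨⟨hdn, hn0.ne'⟩, hQ⟩
        · rintro ⟨⟨hdn, -⟩, hQ⟩
          exact ⟨⟨Nat.pos_of_dvd_of_pos hdn hn0, (Nat.le_of_dvd hn0 hdn).trans hnM⟩,
            hdn, hQ⟩
      rw [herrQdef]
      dsimp only
      rw [← hset, Finset.sum_filter]
    rw [Finset.sum_congr rfl hrw, Finset.sum_comm]
    have hinner : ∀ d ∈ Finset.Ioc 0 M,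
        (∑ n ∈ Finset.Ioc 0 M,
          if d ∣ n ∧ h (t : ℝ) < (d : ℝ) then (1 - g d) else 0)
        ≤ (if h (t : ℝ) < (d : ℝ) then (1 - g d) / d else 0) * M := by
      intro d hd
      obtain ⟨hd0, hdM⟩ := Finset.mem_Ioc.mp hd
      by_cases hQ : h (t : ℝ) < (d : ℝ)
      · simp only [hQ, and_true, if_true]
        have heq : (∑ n ∈ Finset.Ioc 0 M, if d ∣ n then (1 - g d) else 0)
            = (((Finset.Ioc 0 M).filter (fun n => d ∣ n)).card : ℝ) * (1 - g d) := by
          rw [← Finset.sum_filter, Finset.sum_const, nsmul_eq_mul]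
        rw [heq, Nat.Ioc_filter_dvd_card_eq_div]
        have hg0 : 0 ≤ 1 - g d := by have := hg_le d hd0; linarith
        have hcast : ((M / d : ℕ) : ℝ) ≤ (M : ℝ) / d := Nat.cast_div_le
        calc ((M / d : ℕ) : ℝ) * (1 - g d) ≤ (M : ℝ) / d * (1 - g d) :=
              mul_le_mul_of_nonneg_right hcast hg0
          _ = (1 - g d) / d * M := by ring
      · simp [hQ]
    calc (∑ d ∈ Finset.Ioc 0 M, ∑ n ∈ Finset.Ioc 0 M,
          if d ∣ n ∧ h (t : ℝ) < (d : ℝ) then (1 - g d) else 0)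
        ≤ ∑ d ∈ Finset.Ioc 0 M,
            (if h (t : ℝ) < (d : ℝ) then (1 - g d) / d else 0) * M :=
          Finset.sum_le_sum hinner
      _ = (∑ d ∈ (Finset.Ioc 0 M).filter (fun d : ℕ => h (t : ℝ) < (d : ℝ)),
            (1 - g d) / d) * M := by
          rw [← Finset.sum_mul, Finset.sum_filter]
      _ ≤ ε / 4 * M := by
          apply mul_le_mul_of_nonneg_right _ (Nat.cast_nonneg M)
          apply le_of_lt
          apply hD
          intro d hd
          have hQ := (Finset.mem_filter.mp hd).2
          have hlt : (D : ℝ) < (d : ℝ) := lt_of_le_of_lt htD hQ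
          exact_mod_cast hlt.le
  -- bounds via the periodic average
  have hPb : ∀ M : ℕ,
      |(∑ n ∈ Finset.Ioc 0 M, f (Nat.gcd n (L t))) - A t * M| ≤ (L t : ℝ) := by
    intro M
    have := aux_sum_gcd_bound f (L t) hLt hf0 hf1 M
    rw [hAS t ht1]
    exact this
  have key1 : ∀ M : ℕ, (∑ n ∈ Finset.Ioc 0 M, f n) ≤ A t * M + L t := by
    intro M
    have h1 : (∑ n ∈ Finset.Ioc 0 M, f n)
        ≤ ∑ n ∈ Finset.Ioc 0 M, f (Nat.gcd n (L t)) :=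
      Finset.sum_le_sum fun n hn =>
        hfanti _ n (Nat.gcd_dvd_left n (L t)) (Finset.mem_Ioc.mp hn).1
    have h2 := (abs_le.mp (hPb M)).2
    linarith
  have key2 : ∀ M : ℕ, A t * M - L t - ε / 4 * M ≤ ∑ n ∈ Finset.Ioc 0 M, f n := by
    intro M
    have h1 : (∑ n ∈ Finset.Ioc 0 M, (f (Nat.gcd n (L t)) - errQ n))
        ≤ ∑ n ∈ Finset.Ioc 0 M, f n := Finset.sum_le_sum (hpt M)
    rw [Finset.sum_sub_distrib] at h1
    have h2 := (abs_le.mp (hPb M)).1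
    have h3 := herr M
    linarith
  -- final estimate
  refine ⟨max 1 (4 * ((L t : ℝ) + 1) / ε), ?_⟩
  intro x hx
  have hx1 : (1 : ℝ) ≤ x := le_trans (le_max_left _ _) hx
  have hx0 : (0 : ℝ) < x := by linarith
  have hεx : 4 * ((L t : ℝ) + 1) ≤ ε * x := by
    have := le_trans (le_max_right 1 (4 * ((L t : ℝ) + 1) / ε)) hx
    rw [div_le_iff₀ hε] at this
    linarith
  set M := ⌊x⌋₊ with hMdef
  have hMx : (M : ℝ) ≤ x := Nat.floor_le hx0.le
  have hxM : x - 1 < (M : ℝ) := Nat.sub_one_lt_floor x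
  have hM0 : (0 : ℝ) ≤ (M : ℝ) := Nat.cast_nonneg M
  have hAt0 := hA0 t ht1
  have hAt1 := hA1 t ht1
  have hAfleT := hAfle t ht1
  rw [Real.dist_eq, abs_lt]
  have hsum_up : (∑ n ∈ Finset.Ioc 0 M, f n) ≤ A t * x + L t := by
    have := key1 M
    nlinarith
  have hsum_low : A t * (x - 1) - L t - ε / 4 * x ≤ ∑ n ∈ Finset.Ioc 0 M, f n := by
    have h1 := key2 M
    nlinarith
  have hC0 : (0 : ℝ) ≤ (L t : ℝ) := Nat.cast_nonneg _
  have hlow2 : (Af - ε) * x < ∑ n ∈ Finset.Ioc 0 M, f n := by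
    have hmul : Af * (x - 1) ≤ A t * (x - 1) :=
      mul_le_mul_of_nonneg_right hAfleT (by linarith)
    nlinarith
  have hup2 : (∑ n ∈ Finset.Ioc 0 M, f n) < (Af + ε) * x := by
    have hmul : A t * x < (Af + ε / 4) * x := mul_lt_mul_of_pos_right htA hx0
    nlinarith
  constructor
  · have := (lt_div_iff₀ hx0).mpr hlow2
    linarith
  · have := (div_lt_iff₀ hx0).mpr hup2
    linarith
end

section
/- Let N be a positive integer, let g be an N-density-like arithmetic function such that the series ∑_{d=1}^∞ (1 − g(d))/d converges, set f(n) = ∏_{d|n} g(d), and suppose additionally that there exists c > 0 such that g(d) > c for every d ≥ 1. Then the series A_f* := ∑_{d=1}^∞ (log g(d))/d converges, it equals ∑_{d≥1, gcd(d,N)=1} (log g(d))/d, and A_f* = lim_{x→∞} (1/x) ∑_{n ≤ x} log f(n). Moreover, the mean value A_f of f satisfies A_f ≥ exp(A_f*) = ∏_{d=1}^∞ g(d)^{1/d} > 0; in particular f has a nonzero mean value. -/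
open Filter Finset Topology

/-!
Since `c < g d ≤ 1`, `|log g d| ≤ (1 - g d) / c`, so `∑ log g(d) / d` converges absolutely.
Summing `log f n = ∑_{d ∣ n} log g d` over `n ≤ M` gives `∑_{d ≤ M} ⌊M/d⌋ log g d`, and since
`⌊M/d⌋ / M ≤ 1/d` and `⌊M/d⌋ / M → 1/d`, dominated convergence identifies the mean value of
`log f` with `∑ log g(d) / d`. The lower bound on `A_f` is AM–GM: the exponential of the mean
of `log f n` is at most the mean of `f n`, and both sides converge.
-/

theorem abs_log_le_one_sub_div {c x : ℝ} (hc : 0 < c) (hcx : c ≤ x) (hx : x ≤ 1) :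
    |Real.log x| ≤ (1 - x) / c := by
  have hx0 : 0 < x := hc.trans_le hcx
  rw [abs_of_nonpos (Real.log_nonpos hx0.le hx)]
  calc -Real.log x ≤ x⁻¹ - 1 := by linarith [Real.one_sub_inv_le_log_of_pos hx0]
    _ = (1 - x) / x := by field_simp
    _ ≤ (1 - x) / c := by gcongr

theorem sum_Icc_sum_divisors {R : Type*} [AddCommMonoid R] (h : ℕ → R) (M : ℕ) :
    ∑ n ∈ Icc 1 M, ∑ d ∈ n.divisors, h d = ∑ d ∈ Icc 1 M, (M / d) • h d := by
  rw [Finset.sum_comm' (t' := Icc 1 M) (s' := fun d => {n ∈ Ioc 0 M | d ∣ n})]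
  · simp only [sum_const, Nat.Ioc_filter_dvd_card_eq_div]
  · intro n d
    simp only [mem_Icc, Nat.mem_divisors, mem_filter, mem_Ioc]
    constructor
    · rintro ⟨⟨hn1, hnM⟩, hdn, -⟩
      exact ⟨⟨by omega, hdn⟩, Nat.pos_of_dvd_of_pos hdn hn1, (Nat.le_of_dvd hn1 hdn).trans hnM⟩
    · rintro ⟨⟨⟨hn0, hnM⟩, hdn⟩, -⟩
      exact ⟨⟨hn0, hnM⟩, hdn, hn0.ne'⟩

theorem natCast_div_div_le_inv (M d : ℕ) : ((M / d : ℕ) : ℝ) / M ≤ (d : ℝ)⁻¹ := by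
  rcases M.eq_zero_or_pos with rfl | hM
  · simp
  calc ((M / d : ℕ) : ℝ) / M ≤ (M / d : ℝ) / M := by gcongr; exact Nat.cast_div_le
    _ = (d : ℝ)⁻¹ := by field_simp

theorem tendsto_natCast_div_div_atTop (d : ℕ) :
    Tendsto (fun M : ℕ => ((M / d : ℕ) : ℝ) / M) atTop (𝓝 (d : ℝ)⁻¹) := by
  have := (tendsto_nat_floor_mul_div_atTop (inv_nonneg.mpr d.cast_nonneg)).comp
    (tendsto_natCast_atTop_atTop (R := ℝ))
  refine this.congr fun M => ?_
  simp [inv_mul_eq_div, Nat.floor_div_eq_div]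

theorem tendsto_sum_Icc_sum_divisors_div (h : ℕ → ℝ) (hh : Summable fun d => |h d| / d) :
    Tendsto (fun M : ℕ => (∑ n ∈ Icc 1 M, ∑ d ∈ n.divisors, h d) / M) atTop
      (𝓝 (∑' d, h d / d)) := by
  have hsum (M : ℕ) : (∑ n ∈ Icc 1 M, ∑ d ∈ n.divisors, h d) / M
      = ∑' d, ((M / d : ℕ) : ℝ) / M * h d := by
    rw [sum_Icc_sum_divisors, sum_div, tsum_eq_sum (s := Icc 1 M)]
    · refine sum_congr rfl fun d _ => ?_
      rw [nsmul_eq_mul]; ring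
    · -- `M / d = 0` in `ℕ` both for `d = 0` and for `d > M`
      intro d hd
      rw [mem_Icc, not_and_or] at hd
      have : M / d = 0 := by
        rcases hd with hd | hd
        · simp [show d = 0 by omega]
        · exact Nat.div_eq_of_lt (by omega)
      simp [this]
  have hlim (d : ℕ) : Tendsto (fun M : ℕ => ((M / d : ℕ) : ℝ) / M * h d) atTop (𝓝 (h d / d)) := by
    simpa [div_eq_inv_mul] using (tendsto_natCast_div_div_atTop d).mul_const (h d)
  have hbound : ∀ᶠ M : ℕ in atTop, ∀ d, ‖((M / d : ℕ) : ℝ) / M * h d‖ ≤ |h d| / d := by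
    refine Eventually.of_forall fun M d => ?_
    rw [Real.norm_eq_abs, abs_mul, abs_of_nonneg (by positivity), div_eq_inv_mul (|h d|)]
    exact mul_le_mul_of_nonneg_right (natCast_div_div_le_inv M d) (abs_nonneg _)
  simpa only [hsum] using tendsto_tsum_of_dominated_convergence hh hlim hbound

theorem tendsto_floor_div_of_tendsto_natCast_div {u : ℕ → ℝ} {L : ℝ}
    (hu : Tendsto (fun M : ℕ => u M / M) atTop (𝓝 L)) :
    Tendsto (fun x : ℝ => u ⌊x⌋₊ / x) atTop (𝓝 L) := by
  have := (hu.comp tendsto_nat_floor_atTop).mul (tendsto_nat_floor_div_atTop (R := ℝ))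
  rw [mul_one] at this
  refine this.congr' ?_
  filter_upwards [eventually_ge_atTop 1] with x hx
  have : (⌊x⌋₊ : ℝ) ≠ 0 := by exact_mod_cast (Nat.floor_pos.mpr hx).ne'
  simp only [Function.comp_apply]
  field_simp

theorem exp_sum_log_div_card_le {ι : Type*} {s : Finset ι} (hs : s.Nonempty) {u : ι → ℝ}
    (hu : ∀ i ∈ s, 0 < u i) :
    Real.exp ((∑ i ∈ s, Real.log (u i)) / #s) ≤ (∑ i ∈ s, u i) / #s := by
  have hcard : (0 : ℝ) < #s := by exact_mod_cast hs.card_pos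
  have hw : ∑ _i ∈ s, (#s : ℝ)⁻¹ = 1 := by simp [hcard.ne']
  have := convexOn_exp.map_sum_le (fun _ _ => by positivity) hw
    (fun i _ => Set.mem_univ (Real.log (u i)))
  simp only [smul_eq_mul, ← mul_sum] at this
  rwa [sum_congr rfl fun i hi => Real.exp_log (hu i hi), inv_mul_eq_div, inv_mul_eq_div] at this

theorem mean_value_log_and_lower_bound_general
    (N : ℕ) (g : ℕ → ℝ)
    (hg_pos : ∀ n : ℕ, 1 ≤ n → 0 < g n)
    (hg_le : ∀ n : ℕ, 1 ≤ n → g n ≤ 1)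
    (hg_N : ∀ n : ℕ, 1 ≤ n → 1 < Nat.gcd n N → g n = 1)
    (hsum : Summable fun d : ℕ => (1 - g d) / d)
    (f : ℕ → ℝ) (hf : ∀ n : ℕ, f n = ∏ d ∈ n.divisors, g d)
    (c : ℝ) (hc : 0 < c) (hgc : ∀ d : ℕ, 1 ≤ d → c < g d) :
    Summable (fun d : ℕ => Real.log (g d) / d) ∧
    (∑' d : ℕ, Real.log (g d) / d)
      = (∑' d : ℕ, if Nat.gcd d N = 1 then Real.log (g d) / d else 0) ∧
    Tendsto (fun x : ℝ => (∑ n ∈ Finset.Icc 1 ⌊x⌋₊, Real.log (f n)) / x) atTop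
      (nhds (∑' d : ℕ, Real.log (g d) / d)) ∧
    Real.exp (∑' d : ℕ, Real.log (g d) / d) = (∏' d : ℕ, (g d) ^ ((d : ℝ)⁻¹)) ∧
    0 < Real.exp (∑' d : ℕ, Real.log (g d) / d) ∧
    ∀ Af : ℝ,
      Tendsto (fun x : ℝ => (∑ n ∈ Finset.Icc 1 ⌊x⌋₊, f n) / x) atTop (nhds Af) →
        Real.exp (∑' d : ℕ, Real.log (g d) / d) ≤ Af ∧ Af ≠ 0 := by
  have habs : Summable fun d : ℕ => |Real.log (g d)| / d := by
    refine (hsum.mul_left c⁻¹).of_nonneg_of_le (fun d => by positivity) fun d => ?_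
    rcases d.eq_zero_or_pos with rfl | hd
    · simp
    rw [inv_mul_eq_div, div_right_comm]
    gcongr
    exact abs_log_le_one_sub_div hc (hgc d hd).le (hg_le d hd)
  have hS : Summable fun d : ℕ => Real.log (g d) / d :=
    habs.of_norm_bounded fun d => by rw [Real.norm_eq_abs, abs_div, Nat.abs_cast]
  set T := ∑' d : ℕ, Real.log (g d) / d
  have hlog_f (n : ℕ) : Real.log (f n) = ∑ d ∈ n.divisors, Real.log (g d) := by
    rw [hf, Real.log_prod fun d hd => (hg_pos d (Nat.pos_of_mem_divisors hd)).ne']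
  have hmean : Tendsto (fun M : ℕ => (∑ n ∈ Icc 1 M, Real.log (f n)) / M) atTop (𝓝 T) := by
    simpa only [hlog_f] using tendsto_sum_Icc_sum_divisors_div _ habs
  have hcoprime : T = ∑' d : ℕ, if Nat.gcd d N = 1 then Real.log (g d) / d else 0 := by
    refine tsum_congr fun d => ?_
    split_ifs with hdN
    · rfl
    rcases d.eq_zero_or_pos with rfl | hd
    · simp
    have : 1 < Nat.gcd d N := by have := Nat.gcd_pos_of_pos_left N hd; omega
    rw [hg_N d hd this, Real.log_one, zero_div]
  have hprod : HasProd (fun d : ℕ => g d ^ (d : ℝ)⁻¹) (Real.exp T) := by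
    refine hS.hasSum.rexp.congr_fun fun d => ?_
    rcases d.eq_zero_or_pos with rfl | hd
    · simp
    rw [Function.comp_apply, Real.rpow_def_of_pos (hg_pos d hd), div_eq_mul_inv]
  refine ⟨hS, hcoprime, tendsto_floor_div_of_tendsto_natCast_div hmean, hprod.tprod_eq.symm,
    Real.exp_pos T, fun Af hAf => ?_⟩
  have hAf_nat : Tendsto (fun M : ℕ => (∑ n ∈ Icc 1 M, f n) / M) atTop (𝓝 Af) := by
    simpa [Function.comp_def] using hAf.comp tendsto_natCast_atTop_atTop
  have hamgm : ∀ᶠ M : ℕ in atTop,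
      Real.exp ((∑ n ∈ Icc 1 M, Real.log (f n)) / M) ≤ (∑ n ∈ Icc 1 M, f n) / M := by
    filter_upwards [eventually_ge_atTop 1] with M hM
    simpa using exp_sum_log_div_card_le (nonempty_Icc.mpr hM)
      fun n _ => (hf n ▸ prod_pos fun d hd => hg_pos d (Nat.pos_of_mem_divisors hd))
  have hle : Real.exp T ≤ Af :=
    le_of_tendsto_of_tendsto ((Real.continuous_exp.tendsto T).comp hmean) hAf_nat hamgm
  exact ⟨hle, ((Real.exp_pos T).trans_le hle).ne'⟩

/-- **Main theorem, logarithmic part.**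
Under the hypotheses of the main theorem, if moreover `g d > c > 0` for every `d ≥ 1`,
then the series `A_f* = ∑ (log g d)/d` converges, equals the same series restricted to
`d` coprime with `N`, and is the mean value of `log f`.  Moreover any mean value `A_f`
of `f` satisfies `A_f ≥ exp(A_f*) = ∏ g(d)^{1/d} > 0`, so `f` has a nonzero mean value. -/
theorem mean_value_log_and_lower_bound
    (N : ℕ) (hN : 1 ≤ N) (g : ℕ → ℝ)
    (hg_pos : ∀ n : ℕ, 1 ≤ n → 0 < g n)
    (hg_le : ∀ n : ℕ, 1 ≤ n → g n ≤ 1)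
    (hg_N : ∀ n : ℕ, 1 ≤ n → 1 < Nat.gcd n N → g n = 1)
    (hsum : Summable fun d : ℕ => (1 - g d) / d)
    (f : ℕ → ℝ) (hf : ∀ n : ℕ, f n = ∏ d ∈ n.divisors, g d)
    (c : ℝ) (hc : 0 < c) (hgc : ∀ d : ℕ, 1 ≤ d → c < g d) :
    Summable (fun d : ℕ => Real.log (g d) / d) ∧
    (∑' d : ℕ, Real.log (g d) / d)
      = (∑' d : ℕ, if Nat.gcd d N = 1 then Real.log (g d) / d else 0) ∧
    Tendsto (fun x : ℝ => (∑ n ∈ Finset.Icc 1 ⌊x⌋₊, Real.log (f n)) / x) atTop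
      (nhds (∑' d : ℕ, Real.log (g d) / d)) ∧
    Real.exp (∑' d : ℕ, Real.log (g d) / d) = (∏' d : ℕ, (g d) ^ ((d : ℝ)⁻¹)) ∧
    0 < Real.exp (∑' d : ℕ, Real.log (g d) / d) ∧
    ∀ Af : ℝ,
      Tendsto (fun x : ℝ => (∑ n ∈ Finset.Icc 1 ⌊x⌋₊, f n) / x) atTop (nhds Af) →
        Real.exp (∑' d : ℕ, Real.log (g d) / d) ≤ Af ∧ Af ≠ 0 :=
  mean_value_log_and_lower_bound_general N g hg_pos hg_le hg_N hsum f hf c hc hgc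
end

section
/- Let N be a positive integer, let g be an N-density-like arithmetic function such that ∑_{d=1}^∞ (1 − g(d))/d converges, set f(n) = ∏_{d|n} g(d), and let {L_t}_{t≥1} satisfy: (i) L_t | L_{t+1}, (ii) L_t → ∞, and (iii) there exists h : ℝ_{>0} → ℝ with h(x) → ∞ such that every integer n ≥ 1 with gcd(n, N) = 1 not dividing L_t satisfies n > h(t). Set A_t = (1/L_t) ∑_{r | L_t} f(r) φ(L_t / r). For x > 0 let t = t(x) be the unique positive integer with L_t² ≤ x < L_{t+1}². Then (1/x) ∑_{n ≤ x} f(n) − A_{t(x)} → 0 as x → ∞. -/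
open Filter Finset

private lemma one_sub_prod_le (a : ℕ → ℝ) (s : Finset ℕ)
    (h0 : ∀ i ∈ s, 0 ≤ a i) (h1 : ∀ i ∈ s, a i ≤ 1) :
    1 - ∏ i ∈ s, a i ≤ ∑ i ∈ s, (1 - a i) := by
  classical
  induction s using Finset.induction_on with
  | empty => simp
  | @insert x s hx ih =>
    rw [Finset.prod_insert hx, Finset.sum_insert hx]
    have hP0 : (0:ℝ) ≤ ∏ i ∈ s, a i :=
      Finset.prod_nonneg fun i hi => h0 i (Finset.mem_insert_of_mem hi)
    have hP1 : ∏ i ∈ s, a i ≤ 1 :=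
      Finset.prod_le_one (fun i hi => h0 i (Finset.mem_insert_of_mem hi))
        (fun i hi => h1 i (Finset.mem_insert_of_mem hi))
    have hx0 : 0 ≤ a x := h0 x (Finset.mem_insert_self _ _)
    have hx1 : a x ≤ 1 := h1 x (Finset.mem_insert_self _ _)
    have ihs := ih (fun i hi => h0 i (Finset.mem_insert_of_mem hi))
      (fun i hi => h1 i (Finset.mem_insert_of_mem hi))
    nlinarith [mul_nonneg (sub_nonneg.2 hx1) (sub_nonneg.2 hP1)]

private lemma card_coprime_Ioc (k : ℕ) (hk : 0 < k) :
    ((Finset.Ioc 0 k).filter (fun m => Nat.gcd m k = 1)).card = Nat.totient k := by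
  rcases eq_or_lt_of_le (Nat.one_le_of_lt hk) with h1 | h2
  · rw [← h1]; decide
  · have hset : ((Finset.Ioc 0 k).filter (fun m => Nat.gcd m k = 1))
        = (Finset.range k).filter (k.Coprime ·) := by
      ext m
      simp only [Finset.mem_filter, Finset.mem_Ioc, Finset.mem_range]
      constructor
      · rintro ⟨⟨hm0, hmk⟩, hg⟩
        refine ⟨lt_of_le_of_ne hmk ?_, Nat.coprime_comm.mp hg⟩
        rintro rfl
        rw [Nat.gcd_self] at hg; omega
      · rintro ⟨hmk, hg⟩
        have hg' : Nat.gcd m k = 1 := Nat.coprime_comm.mp hg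
        refine ⟨⟨?_, hmk.le⟩, hg'⟩
        rcases Nat.eq_zero_or_pos m with rfl | h
        · rw [Nat.gcd_zero_left] at hg'; omega
        · exact h
    rw [hset]
    exact (Nat.totient_eq_card_coprime k).symm

private lemma card_gcd_fiber {Lt r : ℕ} (hL : 0 < Lt) (hr : r ∣ Lt) :
    ((Finset.Ioc 0 Lt).filter (fun n => Nat.gcd n Lt = r)).card
      = Nat.totient (Lt / r) := by
  have hr0 : 0 < r := Nat.pos_of_dvd_of_pos hr hL
  have hLr0 : 0 < Lt / r := Nat.div_pos (Nat.le_of_dvd hL hr) hr0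
  rw [← card_coprime_Ioc (Lt / r) hLr0]
  apply Finset.card_bij' (fun n _ => n / r) (fun m _ => m * r)
  · intro n hn
    rw [Finset.mem_filter, Finset.mem_Ioc] at hn
    obtain ⟨⟨hn0, hnL⟩, hg⟩ := hn
    have hrn : r ∣ n := hg ▸ Nat.gcd_dvd_left n Lt
    rw [Finset.mem_filter, Finset.mem_Ioc]
    refine ⟨⟨Nat.div_pos (Nat.le_of_dvd hn0 hrn) hr0, Nat.div_le_div_right hnL⟩, ?_⟩
    have := Nat.coprime_div_gcd_div_gcd (m := n) (n := Lt) (hg ▸ hr0)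
    rwa [hg] at this
  · intro m hm
    rw [Finset.mem_filter, Finset.mem_Ioc] at hm
    obtain ⟨⟨hm0, hmL⟩, hg⟩ := hm
    rw [Finset.mem_filter, Finset.mem_Ioc]
    have hLt : Lt = (Lt / r) * r := (Nat.div_mul_cancel hr).symm
    refine ⟨⟨Nat.mul_pos hm0 hr0, ?_⟩, ?_⟩
    · calc m * r ≤ (Lt / r) * r := Nat.mul_le_mul_right r hmL
        _ = Lt := (Nat.div_mul_cancel hr)
    · conv_lhs => rw [hLt]
      rw [Nat.gcd_mul_right, hg, one_mul]
  · intro n hn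
    rw [Finset.mem_filter] at hn
    have hrn : r ∣ n := hn.2 ▸ Nat.gcd_dvd_left n Lt
    exact Nat.div_mul_cancel hrn
  · intro m _
    exact Nat.mul_div_cancel m hr0

private lemma sum_gcd_eq (f : ℕ → ℝ) (Lt : ℕ) (hL : 0 < Lt) :
    ∑ n ∈ Finset.Ioc 0 Lt, f (Nat.gcd n Lt)
      = ∑ r ∈ Lt.divisors, f r * (Nat.totient (Lt / r) : ℝ) := by
  classical
  have hmaps : ∀ n ∈ Finset.Ioc 0 Lt, Nat.gcd n Lt ∈ Lt.divisors := by
    intro n _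
    rw [Nat.mem_divisors]
    exact ⟨Nat.gcd_dvd_right n Lt, hL.ne'⟩
  rw [← Finset.sum_fiberwise_of_maps_to hmaps (fun n => f (Nat.gcd n Lt))]
  refine Finset.sum_congr rfl fun r hr => ?_
  rw [Nat.mem_divisors] at hr
  have : ∀ n ∈ (Finset.Ioc 0 Lt).filter (fun n => Nat.gcd n Lt = r),
      f (Nat.gcd n Lt) = f r := by
    intro n hn
    rw [(Finset.mem_filter.mp hn).2]
  rw [Finset.sum_congr rfl this, Finset.sum_const, card_gcd_fiber hL hr.1,
    nsmul_eq_mul, mul_comm]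

private lemma sum_gcd_block (f : ℕ → ℝ) (Lt : ℕ) (k : ℕ) :
    ∑ n ∈ Finset.Ioc (k*Lt) ((k+1)*Lt), f (Nat.gcd n Lt)
      = ∑ n ∈ Finset.Ioc 0 Lt, f (Nat.gcd n Lt) := by
  have hkk : (k+1)*Lt = k*Lt + Lt := by ring
  refine Finset.sum_nbij' (fun n => n - k*Lt) (fun n => n + k*Lt) ?_ ?_ ?_ ?_ ?_
  · intro n hn
    rw [Finset.mem_Ioc] at hn ⊢
    rw [hkk] at hn
    omega
  · intro m hm
    rw [Finset.mem_Ioc] at hm ⊢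
    rw [hkk]
    omega
  · intro n hn
    rw [Finset.mem_Ioc] at hn
    rw [hkk] at hn
    omega
  · intro m _
    omega
  · intro n hn
    rw [Finset.mem_Ioc] at hn
    rw [hkk] at hn
    have h1 : n - k*Lt + k*Lt = n := by omega
    have : Nat.gcd (n - k*Lt) Lt = Nat.gcd n Lt := by
      conv_rhs => rw [← h1]
      rw [Nat.gcd_add_mul_right_left]
    rw [this]

private lemma sum_gcd_mul (f : ℕ → ℝ) (Lt : ℕ) (k : ℕ) :
    ∑ n ∈ Finset.Ioc 0 (k*Lt), f (Nat.gcd n Lt)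
      = k * ∑ n ∈ Finset.Ioc 0 Lt, f (Nat.gcd n Lt) := by
  induction k with
  | zero => simp
  | succ k ih =>
    rw [← Finset.sum_Ioc_consecutive _ (Nat.zero_le (k*Lt))
      (Nat.mul_le_mul_right Lt (Nat.le_succ k)), ih, sum_gcd_block]
    push_cast
    ring

private lemma sum_divisors_swap (c : ℕ → ℝ) (M : ℕ) :
    ∑ n ∈ Finset.Ioc 0 M, ∑ d ∈ n.divisors, c d
      = ∑ d ∈ Finset.Ioc 0 M, c d * ((M / d : ℕ) : ℝ) := by
  classical
  have hdiv : ∀ n ∈ Finset.Ioc 0 M, n.divisors = (Finset.Ioc 0 M).filter (· ∣ n) := by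
    intro n hn
    rw [Finset.mem_Ioc] at hn
    ext d
    rw [Nat.mem_divisors, Finset.mem_filter, Finset.mem_Ioc]
    constructor
    · rintro ⟨hd, -⟩
      exact ⟨⟨Nat.pos_of_dvd_of_pos hd hn.1, le_trans (Nat.le_of_dvd hn.1 hd) hn.2⟩, hd⟩
    · rintro ⟨-, hd⟩
      exact ⟨hd, by omega⟩
  calc ∑ n ∈ Finset.Ioc 0 M, ∑ d ∈ n.divisors, c d
      = ∑ n ∈ Finset.Ioc 0 M, ∑ d ∈ Finset.Ioc 0 M, if d ∣ n then c d else 0 := by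
        refine Finset.sum_congr rfl fun n hn => ?_
        rw [hdiv n hn, Finset.sum_filter]
    _ = ∑ d ∈ Finset.Ioc 0 M, ∑ n ∈ Finset.Ioc 0 M, if d ∣ n then c d else 0 :=
        Finset.sum_comm
    _ = ∑ d ∈ Finset.Ioc 0 M, c d * ((M / d : ℕ) : ℝ) := by
        refine Finset.sum_congr rfl fun d _ => ?_
        rw [← Finset.sum_filter, Finset.sum_const, nsmul_eq_mul,
          Nat.Ioc_filter_dvd_card_eq_div, mul_comm]

set_option maxHeartbeats 1000000 in
/-- **Key proposition.** With the notation of the main theorem, if for each (large) real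
`x` the positive integer `t x` satisfies `L (t x) ^ 2 ≤ x < L (t x + 1) ^ 2`, then
`(1/x) ∑_{n ≤ x} f n - A (t x) → 0` as `x → ∞`. -/
theorem mean_partial_sum_sub_A_tendsto_zero
    (N : ℕ) (hN : 1 ≤ N) (g : ℕ → ℝ)
    (hg_pos : ∀ n : ℕ, 1 ≤ n → 0 < g n)
    (hg_le : ∀ n : ℕ, 1 ≤ n → g n ≤ 1)
    (hg_N : ∀ n : ℕ, 1 ≤ n → 1 < Nat.gcd n N → g n = 1)
    (hsum : Summable fun d : ℕ => (1 - g d) / d)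
    (f : ℕ → ℝ) (hf : ∀ n : ℕ, f n = ∏ d ∈ n.divisors, g d)
    (L : ℕ → ℕ)
    (hLpos : ∀ t : ℕ, 1 ≤ t → 0 < L t)
    (hLdvd : ∀ t : ℕ, 1 ≤ t → L t ∣ L (t + 1))
    (hLtop : Tendsto (fun t : ℕ => L t) atTop atTop)
    (h : ℝ → ℝ) (hh : Tendsto h atTop atTop)
    (hhL : ∀ t : ℕ, 1 ≤ t → ∀ n : ℕ, 1 ≤ n → Nat.gcd n N = 1 → ¬ n ∣ L t → h t < n)
    (A : ℕ → ℝ)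
    (hA : ∀ t : ℕ, A t =
      (∑ r ∈ (L t).divisors, f r * (Nat.totient (L t / r) : ℝ)) / (L t : ℝ))
    (t : ℝ → ℕ)
    (ht : ∀ x : ℝ, ((L 1 : ℝ)) ^ 2 ≤ x →
      1 ≤ t x ∧ ((L (t x) : ℝ)) ^ 2 ≤ x ∧ x < ((L (t x + 1) : ℝ)) ^ 2) :
    Tendsto (fun x : ℝ => (∑ n ∈ Finset.Icc 1 ⌊x⌋₊, f n) / x - A (t x)) atTop
      (nhds 0) := by
  classical
  have hu0 : ∀ d : ℕ, 0 ≤ (1 - g d) / (d : ℝ) := by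
    intro d
    rcases Nat.eq_zero_or_pos d with rfl | hd
    · simp
    · have := hg_le d hd
      apply div_nonneg (by linarith) (Nat.cast_nonneg d)
  -- basic bounds on f
  have hf01 : ∀ m : ℕ, 0 ≤ f m ∧ f m ≤ 1 := by
    intro m
    rw [hf]
    constructor
    · exact Finset.prod_nonneg fun d hd => (hg_pos d (Nat.pos_of_mem_divisors hd)).le
    · exact Finset.prod_le_one
        (fun d hd => (hg_pos d (Nat.pos_of_mem_divisors hd)).le)
        (fun d hd => hg_le d (Nat.pos_of_mem_divisors hd))
  -- divisibility chain for L
  have hchain : ∀ a b : ℕ, 1 ≤ a → a ≤ b → L a ∣ L b := by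
    intro a b ha hab
    induction b, hab using Nat.le_induction with
    | base => exact dvd_rfl
    | succ b hab ih => exact ih.trans (hLdvd b (le_trans ha hab))
  -- t x → ∞
  have htx : Tendsto t atTop atTop := by
    rw [tendsto_atTop_atTop]
    intro T
    refine ⟨max ((L 1 : ℝ)^2) ((L (max T 1 + 1) : ℝ)^2), fun x hx => ?_⟩
    have h1 : ((L 1 : ℝ))^2 ≤ x := le_trans (le_max_left _ _) hx
    obtain ⟨ht1, _, ht3⟩ := ht x h1
    by_contra hc
    push_neg at hc
    have hTx : t x + 1 ≤ max T 1 + 1 := by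
      have : T ≤ max T 1 := le_max_left _ _
      omega
    have hdvd := hchain (t x + 1) (max T 1 + 1) (by omega) hTx
    have hle : (L (t x + 1) : ℝ) ≤ (L (max T 1 + 1) : ℝ) := by
      exact_mod_cast Nat.le_of_dvd (hLpos _ (by omega)) hdvd
    have h2 : x < ((L (max T 1 + 1) : ℝ))^2 :=
      lt_of_lt_of_le ht3 (pow_le_pow_left₀ (Nat.cast_nonneg _) hle 2)
    have h3 := le_trans (le_max_right _ _) hx
    linarith
  have hLt_top : Tendsto (fun x : ℝ => (L (t x) : ℝ)) atTop atTop :=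
    tendsto_natCast_atTop_atTop.comp (hLtop.comp htx)
  have hh_t : Tendsto (fun x : ℝ => h (t x)) atTop atTop :=
    hh.comp (tendsto_natCast_atTop_atTop.comp htx)
  -- partial sums of the series
  set S : ℝ := ∑' d : ℕ, (1 - g d) / (d : ℝ) with hS
  have hP : Tendsto (fun K : ℕ => ∑ i ∈ Finset.range K, (1 - g i) / (i : ℝ))
      atTop (nhds S) := hsum.hasSum.tendsto_sum_nat
  rw [NormedAddCommGroup.tendsto_nhds_zero]
  intro ε hε
  obtain ⟨K, hK⟩ := (Metric.tendsto_atTop.mp hP) (ε/4) (by positivity)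
  have hKK := hK K le_rfl
  have htail : S - ∑ i ∈ Finset.range K, (1 - g i) / (i : ℝ) < ε/4 := by
    rw [Real.dist_eq] at hKK
    have := abs_lt.mp hKK
    linarith [this.1]
  filter_upwards [eventually_ge_atTop ((L 1 : ℝ)^2), eventually_ge_atTop (1:ℝ),
    hh_t.eventually_ge_atTop (K : ℝ), hLt_top.eventually_ge_atTop (12/ε)]
    with x hx1 hx2 hx3 hx4
  obtain ⟨hτ1, hxL, hxU⟩ := ht x hx1
  set τ := t x with hτ
  set Λ := L τ with hΛdef
  have hΛ0 : 0 < Λ := hLpos τ hτ1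
  have hΛ0' : (0:ℝ) < (Λ:ℝ) := by exact_mod_cast hΛ0
  have hx0 : (0:ℝ) < x := by linarith
  set M := ⌊x⌋₊ with hMdef
  have hM1 : 1 ≤ M := Nat.le_floor (by exact_mod_cast hx2)
  have hMx : (M:ℝ) ≤ x := Nat.floor_le hx0.le
  have hxM : x < (M:ℝ) + 1 := Nat.lt_floor_add_one x
  have hIcc : Finset.Icc 1 M = Finset.Ioc 0 M := by
    ext a
    simp only [Finset.mem_Icc, Finset.mem_Ioc]
    omega
  -- key pointwise comparison
  have hkey : ∀ n ∈ Finset.Ioc 0 M,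
      f n ≤ f (Nat.gcd n Λ) ∧
      f (Nat.gcd n Λ) - f n
        ≤ ∑ d ∈ n.divisors, (if (K:ℝ) < (d:ℝ) then 1 - g d else 0) := by
    intro n hn
    rw [Finset.mem_Ioc] at hn
    have hn0 : 0 < n := hn.1
    have hgcd0 : 0 < Nat.gcd n Λ := Nat.gcd_pos_of_pos_left Λ hn0
    have hsplit : (Nat.gcd n Λ).divisors = n.divisors.filter (· ∣ Λ) := by
      ext d
      simp only [Nat.mem_divisors, Finset.mem_filter]
      constructor
      · rintro ⟨hd, -⟩
        exact ⟨⟨hd.trans (Nat.gcd_dvd_left _ _), hn0.ne'⟩,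
          hd.trans (Nat.gcd_dvd_right _ _)⟩
      · rintro ⟨⟨hdn, -⟩, hdΛ⟩
        exact ⟨Nat.dvd_gcd hdn hdΛ, hgcd0.ne'⟩
    have hprod : f n = f (Nat.gcd n Λ)
        * ∏ d ∈ n.divisors.filter (fun d => ¬ d ∣ Λ), g d := by
      rw [hf n, hf (Nat.gcd n Λ), hsplit,
        ← Finset.prod_filter_mul_prod_filter_not n.divisors (· ∣ Λ) g]
    set P : ℝ := ∏ d ∈ n.divisors.filter (fun d => ¬ d ∣ Λ), g d with hPdef
    have hg0' : ∀ d ∈ n.divisors.filter (fun d => ¬ d ∣ Λ), 0 ≤ g d := fun d hd =>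
      (hg_pos d (Nat.pos_of_mem_divisors (Finset.mem_filter.mp hd).1)).le
    have hg1' : ∀ d ∈ n.divisors.filter (fun d => ¬ d ∣ Λ), g d ≤ 1 := fun d hd =>
      hg_le d (Nat.pos_of_mem_divisors (Finset.mem_filter.mp hd).1)
    have hP0 : 0 ≤ P := Finset.prod_nonneg hg0'
    have hP1 : P ≤ 1 := Finset.prod_le_one hg0' hg1'
    have hFn := hf01 (Nat.gcd n Λ)
    constructor
    · rw [hprod]
      exact mul_le_of_le_one_right hFn.1 hP1
    · have h1 : f (Nat.gcd n Λ) - f n = f (Nat.gcd n Λ) * (1 - P) := by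
        rw [hprod]; ring
      have h2 : f (Nat.gcd n Λ) * (1 - P) ≤ 1 - P := by
        nlinarith [hFn.1, hFn.2, hP1]
      have h3 : 1 - P ≤ ∑ d ∈ n.divisors.filter (fun d => ¬ d ∣ Λ), (1 - g d) :=
        one_sub_prod_le g _ hg0' hg1'
      have h4 : ∑ d ∈ n.divisors.filter (fun d => ¬ d ∣ Λ), (1 - g d)
          ≤ ∑ d ∈ n.divisors.filter (fun d => ¬ d ∣ Λ),
              (if (K:ℝ) < (d:ℝ) then 1 - g d else 0) := by
        refine Finset.sum_le_sum fun d hd => ?_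
        rw [Finset.mem_filter] at hd
        have hd1 : 1 ≤ d := Nat.pos_of_mem_divisors hd.1
        by_cases hc : (K:ℝ) < (d:ℝ)
        · rw [if_pos hc]
        · rw [if_neg hc]
          push_neg at hc
          have hgcdN : Nat.gcd d N ≠ 1 := by
            intro hco
            have := hhL τ hτ1 d hd1 hco hd.2
            linarith
          have hgcdpos : 0 < Nat.gcd d N := Nat.gcd_pos_of_pos_right d hN
          have : g d = 1 := hg_N d hd1 (by omega)
          simp [this]
      have h5 : ∑ d ∈ n.divisors.filter (fun d => ¬ d ∣ Λ),
            (if (K:ℝ) < (d:ℝ) then 1 - g d else 0)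
          ≤ ∑ d ∈ n.divisors, (if (K:ℝ) < (d:ℝ) then 1 - g d else 0) := by
        refine Finset.sum_le_sum_of_subset_of_nonneg (Finset.filter_subset _ _)
          (fun d hd _ => ?_)
        by_cases hc : (K:ℝ) < (d:ℝ)
        · rw [if_pos hc]
          have := hg_le d (Nat.pos_of_mem_divisors hd)
          linarith
        · rw [if_neg hc]
      linarith
  set Sf : ℝ := ∑ n ∈ Finset.Ioc 0 M, f n with hSf
  set SF : ℝ := ∑ n ∈ Finset.Ioc 0 M, f (Nat.gcd n Λ) with hSF
  -- Part 1 : SF - Sf ≤ ε/4 * x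
  have hle : Sf ≤ SF := Finset.sum_le_sum fun n hn => (hkey n hn).1
  have hdiff : SF - Sf ≤ ε/4 * x := by
    have e1 : SF - Sf = ∑ n ∈ Finset.Ioc 0 M, (f (Nat.gcd n Λ) - f n) := by
      rw [hSF, hSf, ← Finset.sum_sub_distrib]
    have e2 : SF - Sf ≤ ∑ n ∈ Finset.Ioc 0 M,
        ∑ d ∈ n.divisors, (if (K:ℝ) < (d:ℝ) then 1 - g d else 0) := by
      rw [e1]
      exact Finset.sum_le_sum fun n hn => (hkey n hn).2
    rw [sum_divisors_swap (fun d => if (K:ℝ) < (d:ℝ) then 1 - g d else 0) M] at e2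
    have e3 : ∑ d ∈ Finset.Ioc 0 M,
        (if (K:ℝ) < (d:ℝ) then 1 - g d else 0) * ((M / d : ℕ) : ℝ)
        ≤ ∑ d ∈ Finset.Ioc 0 M,
            (if (K:ℝ) < (d:ℝ) then (1 - g d) / (d:ℝ) else 0) * x := by
      refine Finset.sum_le_sum fun d hd => ?_
      rw [Finset.mem_Ioc] at hd
      have hd0 : (0:ℝ) < (d:ℝ) := by exact_mod_cast hd.1
      by_cases hc : (K:ℝ) < (d:ℝ)
      · rw [if_pos hc, if_pos hc]
        have hcast : ((M / d : ℕ) : ℝ) ≤ x / (d:ℝ) := by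
          refine le_trans Nat.cast_div_le ?_
          gcongr
        have hg1 : 0 ≤ 1 - g d := by linarith [hg_le d hd.1]
        calc (1 - g d) * ((M / d : ℕ) : ℝ) ≤ (1 - g d) * (x / (d:ℝ)) :=
              mul_le_mul_of_nonneg_left hcast hg1
          _ = (1 - g d) / (d:ℝ) * x := by ring
      · rw [if_neg hc, if_neg hc, zero_mul, zero_mul]
    have e4 : ∑ d ∈ Finset.Ioc 0 M,
        (if (K:ℝ) < (d:ℝ) then (1 - g d) / (d:ℝ) else 0) ≤ ε/4 := by
      rw [← Finset.sum_filter]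
      have hdisj : Disjoint ((Finset.Ioc 0 M).filter (fun d : ℕ => (K:ℝ) < (d:ℝ)))
          (Finset.range K) := by
        rw [Finset.disjoint_left]
        intro a ha hb
        rw [Finset.mem_filter] at ha
        rw [Finset.mem_range] at hb
        have : K < a := by exact_mod_cast ha.2
        omega
      have hunion : ∑ d ∈ (Finset.Ioc 0 M).filter (fun d : ℕ => (K:ℝ) < (d:ℝ)),
            (1 - g d) / (d:ℝ) + ∑ d ∈ Finset.range K, (1 - g d) / (d:ℝ)
          = ∑ d ∈ ((Finset.Ioc 0 M).filter (fun d : ℕ => (K:ℝ) < (d:ℝ))) ∪ Finset.range K,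
            (1 - g d) / (d:ℝ) := (Finset.sum_union hdisj).symm
      have hU : ∑ d ∈ ((Finset.Ioc 0 M).filter (fun d : ℕ => (K:ℝ) < (d:ℝ))) ∪ Finset.range K,
          (1 - g d) / (d:ℝ) ≤ S := Summable.sum_le_tsum _ (fun i _ => hu0 i) hsum
      linarith
    have e5 : ∑ d ∈ Finset.Ioc 0 M,
        (if (K:ℝ) < (d:ℝ) then (1 - g d) / (d:ℝ) else 0) * x
        = (∑ d ∈ Finset.Ioc 0 M,
            (if (K:ℝ) < (d:ℝ) then (1 - g d) / (d:ℝ) else 0)) * x := by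
      rw [Finset.sum_mul]
    nlinarith [e2, e3, e4, e5, hx0]
  -- Part 2 : |SF / x - A τ| ≤ 2Λ/x
  have hSig : ∑ n ∈ Finset.Ioc 0 Λ, f (Nat.gcd n Λ) = A τ * (Λ:ℝ) := by
    rw [sum_gcd_eq f Λ hΛ0, hA τ, ← hΛdef]
    field_simp
  set q := M / Λ with hq
  have hqΛ : q * Λ ≤ M := Nat.div_mul_le_self M Λ
  have hMq : M < q * Λ + Λ := by
    have h1 : Λ * q + M % Λ = M := Nat.div_add_mod M Λ
    have h1' : q * Λ = Λ * q := Nat.mul_comm q Λ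
    have h2 : M % Λ < Λ := Nat.mod_lt M hΛ0
    omega
  have hdecomp : SF = (q:ℝ) * (A τ * (Λ:ℝ))
      + ∑ n ∈ Finset.Ioc (q*Λ) M, f (Nat.gcd n Λ) := by
    rw [hSF, ← Finset.sum_Ioc_consecutive (fun n => f (Nat.gcd n Λ))
      (Nat.zero_le (q*Λ)) hqΛ, sum_gcd_mul f Λ q, hSig]
  set R : ℝ := ∑ n ∈ Finset.Ioc (q*Λ) M, f (Nat.gcd n Λ) with hR
  have hR0 : 0 ≤ R := Finset.sum_nonneg fun n _ => (hf01 _).1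
  have hRΛ : R ≤ (Λ:ℝ) := by
    have := Finset.sum_le_card_nsmul (Finset.Ioc (q*Λ) M)
      (fun n => f (Nat.gcd n Λ)) 1 (fun n _ => (hf01 _).2)
    rw [Nat.card_Ioc, nsmul_eq_mul, mul_one] at this
    refine le_trans this ?_
    have hcard : M - q*Λ ≤ Λ := by omega
    exact_mod_cast hcard
  -- A bounds
  have hA0 : 0 ≤ A τ := by
    have hSig0 : 0 ≤ ∑ n ∈ Finset.Ioc 0 Λ, f (Nat.gcd n Λ) :=
      Finset.sum_nonneg fun n _ => (hf01 _).1
    rw [hSig] at hSig0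
    exact (mul_nonneg_iff_of_pos_right hΛ0').mp hSig0
  have hA1 : A τ ≤ 1 := by
    have hSigle : ∑ n ∈ Finset.Ioc 0 Λ, f (Nat.gcd n Λ) ≤ (Λ:ℝ) := by
      have := Finset.sum_le_card_nsmul (Finset.Ioc 0 Λ)
        (fun n => f (Nat.gcd n Λ)) 1 (fun n _ => (hf01 _).2)
      rw [Nat.card_Ioc, nsmul_eq_mul, mul_one, Nat.sub_zero] at this
      exact this
    rw [hSig] at hSigle
    exact (mul_le_iff_le_one_left hΛ0').mp hSigle
  have hqΛx : (q:ℝ) * (Λ:ℝ) ≤ x := by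
    have : ((q * Λ : ℕ) : ℝ) ≤ (M:ℝ) := by exact_mod_cast hqΛ
    push_cast at this
    linarith
  have hxqΛ : x < (q:ℝ) * (Λ:ℝ) + (Λ:ℝ) := by
    have : ((M:ℕ):ℝ) + 1 ≤ ((q * Λ + Λ : ℕ) : ℝ) := by exact_mod_cast hMq
    push_cast at this
    linarith
  have habs2 : |SF/x - A τ| ≤ 2*(Λ:ℝ)/x := by
    have h1 : |SF - A τ * x| ≤ 2*(Λ:ℝ) := by
      rw [abs_le]
      constructor
      · nlinarith [mul_nonneg (sub_nonneg.2 hA1) (sub_nonneg.2 hqΛx),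
          mul_nonneg hA0 (sub_nonneg.2 hqΛx)]
      · nlinarith [mul_nonneg (sub_nonneg.2 hA1) (sub_nonneg.2 hqΛx),
          mul_nonneg hA0 (sub_nonneg.2 hqΛx)]
    have h2 : SF/x - A τ = (SF - A τ * x)/x := by
      field_simp
    rw [h2, abs_div, abs_of_pos hx0]
    exact (div_le_div_iff_of_pos_right hx0).mpr h1
  have hpart2 : |SF/x - A τ| ≤ ε/4 := by
    refine le_trans habs2 ?_
    have e1 : 2*(Λ:ℝ)/x ≤ 2*(Λ:ℝ)/((Λ:ℝ)^2) :=
      div_le_div_of_nonneg_left (by positivity) (by positivity) hxL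
    have e2 : 2*(Λ:ℝ)/((Λ:ℝ)^2) = 2/(Λ:ℝ) := by
      field_simp
    have e3 : (2:ℝ)/(Λ:ℝ) ≤ ε/4 := by
      rw [div_le_div_iff₀ hΛ0' (by norm_num)]
      have h12 : 12 ≤ ε * (Λ:ℝ) := by
        rw [div_le_iff₀ hε] at hx4
        linarith
      nlinarith
    linarith
  -- conclusion
  rw [Real.norm_eq_abs, hIcc, ← hSf]
  have h1 : |Sf/x - SF/x| ≤ ε/4 := by
    have heq : Sf/x - SF/x = (Sf - SF)/x := by ring
    rw [heq, abs_div, abs_of_pos hx0, abs_of_nonpos (by linarith : Sf - SF ≤ 0)]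
    rw [div_le_iff₀ hx0]
    linarith
  calc |Sf/x - A τ| ≤ |Sf/x - SF/x| + |SF/x - A τ| := abs_sub_le _ _ _
    _ ≤ ε/4 + ε/4 := add_le_add h1 hpart2
    _ < ε := by linarith
end

section
/- Let N be a positive integer, let g be an N-density-like arithmetic function such that ∑_{d=1}^∞ (1 − g(d))/d converges, set f(n) = ∏_{d|n} g(d), and let {L_t}_{t≥1} be a sequence of positive integers with L_t dividing L_{t+1} for every t ≥ 1. Then the sequence A_t = (1/L_t) ∑_{r | L_t} f(r) φ(L_t / r) is nonincreasing in t, i.e. A_{t+1} ≤ A_t for all t ≥ 1. -/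
/-!
Exactly `φ(L / r)` residues `k mod L` have `gcd(L, k) = r`, so `A_t` is the mean of
`k ↦ f(gcd(L_t, k))` over `ℤ/L_t`. The function `f` is antitone for divisibility, being a product
of factors in `(0, 1]` over the divisors. If `L_t ∣ L_{t+1}`, then `gcd(L_t, k) ∣ gcd(L_{t+1}, k)`,
so the mean over `ℤ/L_{t+1}` is at most the mean of the `L_t`-periodic function
`k ↦ f(gcd(L_t, k))` over `ℤ/L_{t+1}`, which is its mean over `ℤ/L_t`.
-/

open Finset

theorem Function.Periodic.sum_range_mul {M : Type*} [AddCommMonoid M] {h : ℕ → M} {c : ℕ}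
    (hh : Function.Periodic h c) (m : ℕ) :
    ∑ k ∈ range (m * c), h k = m • ∑ k ∈ range c, h k := by
  induction m with
  | zero => simp
  | succ m ih =>
    rw [Nat.succ_mul, sum_range_add, ih, succ_nsmul]
    congr 1
    exact sum_congr rfl fun k _ => by rw [add_comm]; exact hh.nat_mul m k

theorem Nat.sum_divisors_mul_totient_eq_sum_range_gcd {R : Type*} [NonAssocSemiring R]
    (F : ℕ → R) (n : ℕ) :
    ∑ r ∈ n.divisors, F r * (n / r).totient = ∑ k ∈ range n, F (n.gcd k) := by
  rcases n.eq_zero_or_pos with rfl | hn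
  · simp
  rw [← sum_fiberwise_of_maps_to (s := range n) (g := n.gcd)
    (fun k _ => Nat.mem_divisors.2 ⟨n.gcd_dvd_left k, hn.ne'⟩) fun k => F (n.gcd k)]
  refine sum_congr rfl fun r hr => ?_
  rw [Nat.totient_div_of_dvd (Nat.dvd_of_mem_divisors hr), sum_congr rfl fun k hk =>
    congrArg F (mem_filter.1 hk).2, sum_const, nsmul_eq_mul']

theorem Nat.prod_divisors_le_of_dvd {R : Type*} [CommMonoidWithZero R] [Preorder R]
    [ZeroLEOneClass R] [PosMulMono R] {g : ℕ → R} {a b : ℕ} (hab : a ∣ b) (hb : b ≠ 0)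
    (hg0 : ∀ d ∈ b.divisors, 0 ≤ g d) (hg1 : ∀ d ∈ b.divisors, g d ≤ 1) :
    ∏ d ∈ b.divisors, g d ≤ ∏ d ∈ a.divisors, g d :=
  prod_le_prod_of_subset_of_le_one (Nat.divisors_subset_of_dvd hb hab) hg0
    fun d hd _ => hg1 d hd

theorem sum_range_gcd_div_le_of_dvd {f : ℕ → ℝ} (hf : ∀ ⦃a b : ℕ⦄, a ∣ b → b ≠ 0 → f b ≤ f a)
    {l M : ℕ} (hlM : l ∣ M) (hM : M ≠ 0) :
    (∑ k ∈ range M, f (M.gcd k)) / M ≤ (∑ k ∈ range l, f (l.gcd k)) / l := by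
  obtain ⟨m, rfl⟩ := hlM
  obtain ⟨hl, hm⟩ := mul_ne_zero_iff.1 hM
  have hterm : ∀ k, f ((l * m).gcd k) ≤ f (l.gcd k) := fun k =>
    hf (Nat.dvd_gcd ((l.gcd_dvd_left k).mul_right m) (l.gcd_dvd_right k))
      (Nat.gcd_ne_zero_left hM)
  have hperiodic : Function.Periodic (fun k => f (l.gcd k)) l := fun k => by
    simp only [Nat.gcd_add_self_right]
  calc (∑ k ∈ range (l * m), f ((l * m).gcd k)) / ↑(l * m)
      ≤ (∑ k ∈ range (m * l), f (l.gcd k)) / ↑(l * m) := by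
        rw [mul_comm m l]
        gcongr with k
        exact hterm k
    _ = (∑ k ∈ range l, f (l.gcd k)) / l := by
        rw [hperiodic.sum_range_mul, nsmul_eq_mul, Nat.cast_mul]
        field_simp

theorem A_antitone_general
    (g : ℕ → ℝ)
    (hg_pos : ∀ n : ℕ, 1 ≤ n → 0 < g n)
    (hg_le : ∀ n : ℕ, 1 ≤ n → g n ≤ 1)
    (f : ℕ → ℝ) (hf : ∀ n : ℕ, f n = ∏ d ∈ n.divisors, g d)
    (L : ℕ → ℕ)
    (hLpos : ∀ t : ℕ, 1 ≤ t → 0 < L t)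
    (hLdvd : ∀ t : ℕ, 1 ≤ t → L t ∣ L (t + 1))
    (A : ℕ → ℝ)
    (hA : ∀ t : ℕ, A t =
      (∑ r ∈ (L t).divisors, f r * (Nat.totient (L t / r) : ℝ)) / (L t : ℝ)) :
    ∀ t : ℕ, 1 ≤ t → A (t + 1) ≤ A t := by
  have hf_anti : ∀ ⦃a b : ℕ⦄, a ∣ b → b ≠ 0 → f b ≤ f a := fun a b hab hb => by
    rw [hf, hf]
    exact Nat.prod_divisors_le_of_dvd hab hb
      (fun d hd => (hg_pos d (Nat.pos_of_mem_divisors hd)).le)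
      (fun d hd => hg_le d (Nat.pos_of_mem_divisors hd))
  intro t ht
  rw [hA, hA, Nat.sum_divisors_mul_totient_eq_sum_range_gcd,
    Nat.sum_divisors_mul_totient_eq_sum_range_gcd]
  exact sum_range_gcd_div_le_of_dvd hf_anti (hLdvd t ht) (hLpos (t + 1) (by omega)).ne'

/-- **Monotonicity lemma.** With the notation of the main theorem (only divisibility of
the sequence `L` is needed), the sequence `A t = (1/L t) ∑_{r ∣ L t} f r · φ(L t / r)`
is nonincreasing. -/
theorem A_antitone
    (N : ℕ) (hN : 1 ≤ N) (g : ℕ → ℝ)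
    (hg_pos : ∀ n : ℕ, 1 ≤ n → 0 < g n)
    (hg_le : ∀ n : ℕ, 1 ≤ n → g n ≤ 1)
    (hg_N : ∀ n : ℕ, 1 ≤ n → 1 < Nat.gcd n N → g n = 1)
    (hsum : Summable fun d : ℕ => (1 - g d) / d)
    (f : ℕ → ℝ) (hf : ∀ n : ℕ, f n = ∏ d ∈ n.divisors, g d)
    (L : ℕ → ℕ)
    (hLpos : ∀ t : ℕ, 1 ≤ t → 0 < L t)
    (hLdvd : ∀ t : ℕ, 1 ≤ t → L t ∣ L (t + 1))
    (A : ℕ → ℝ)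
    (hA : ∀ t : ℕ, A t =
      (∑ r ∈ (L t).divisors, f r * (Nat.totient (L t / r) : ℝ)) / (L t : ℝ)) :
    ∀ t : ℕ, 1 ≤ t → A (t + 1) ≤ A t :=
  A_antitone_general g hg_pos hg_le f hf L hLpos hLdvd A hA
end

section
/- Fix α > 1. Let N be a positive integer, let g be an N-density-like arithmetic function such that ∑_{d=1}^∞ (1 − g(d))/d converges, set f(n) = ∏_{d|n} g(d), and let {L_t}_{t≥1} satisfy: (i) L_t | L_{t+1}, (ii) L_t → ∞, and (iii) there exists h : ℝ_{>0} → ℝ with h(x) → ∞ such that every integer n ≥ 1 with gcd(n, N) = 1 not dividing L_t satisfies n > h(t). Set A_t^{(α)} = (1/L_t) ∑_{r | L_t} f(r)^α φ(L_t / r). Then the sequence {A_t^{(α)}}_{t≥1} converges to a limit A_f^{(α)}, and A_f^{(α)} = lim_{x→∞} (1/x) ∑_{n ≤ x} f(n)^α is the mean value of f^α. -/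
/-!
Write `G = g ^ α`, so that `f n ^ α = ∏_{d ∣ n} G d =: F n` with `0 ≤ G ≤ 1`. For each `t`, the
`L_t`-periodic function `n ↦ F (gcd (L_t, n))` has mean value exactly `A_t` (count the `n` with a
given gcd by `φ`). It dominates `F`, and by the Weierstrass product inequality it exceeds `F n` by at
most `∑_{d ∣ n, d ∤ L_t} (1 - G d)`, whose average over `n ≤ x` is at most
`e_t = ∑_{d ∤ L_t} (1 - G d) / d`. Condition (iii) makes every `d` with `G d ≠ 1` divide `L_t`
eventually, so `e_t → 0` by dominated convergence. Thus `A_t - e_t ≤ liminf ≤ limsup ≤ A_s` for all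
`s, t`: the sequence `A_t` is Cauchy and its limit is the mean value of `F`.
-/

open Filter Finset Topology

namespace Finset

theorem one_sub_sum_one_sub_le_prod {ι : Type*} (s : Finset ι) {f : ι → ℝ}
    (h0 : ∀ i ∈ s, 0 ≤ f i) (h1 : ∀ i ∈ s, f i ≤ 1) :
    1 - ∑ i ∈ s, (1 - f i) ≤ ∏ i ∈ s, f i := by
  classical
  induction s using Finset.induction_on with
  | empty => simp
  | insert a s ha ih =>
    rw [sum_insert ha, prod_insert ha]
    have ih := ih (fun i hi => h0 i (mem_insert_of_mem hi))
      (fun i hi => h1 i (mem_insert_of_mem hi))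
    have ha0 := h0 a (mem_insert_self a s)
    have ha1 := h1 a (mem_insert_self a s)
    have hS : 0 ≤ ∑ i ∈ s, (1 - f i) :=
      sum_nonneg fun i hi => sub_nonneg.2 (h1 i (mem_insert_of_mem hi))
    nlinarith

theorem prod_filter_sub_prod_le_sum {ι : Type*} (s : Finset ι) (p : ι → Prop) [DecidablePred p]
    {f : ι → ℝ} (h0 : ∀ i ∈ s, 0 ≤ f i) (h1 : ∀ i ∈ s, f i ≤ 1) :
    ∏ i ∈ s with p i, f i - ∏ i ∈ s, f i ≤ ∑ i ∈ s, if p i then 0 else 1 - f i := by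
  rw [← prod_filter_mul_prod_filter_not s p, sum_ite, sum_const_zero, zero_add]
  set P := ∏ i ∈ s with p i, f i
  have hP0 : 0 ≤ P := prod_nonneg fun i hi => h0 i (mem_filter.1 hi).1
  have hP1 : P ≤ 1 := prod_le_one (fun i hi => h0 i (mem_filter.1 hi).1)
    (fun i hi => h1 i (mem_filter.1 hi).1)
  have hS : 0 ≤ ∑ i ∈ s with ¬p i, (1 - f i) :=
    sum_nonneg fun i hi => sub_nonneg.2 (h1 i (mem_filter.1 hi).1)
  have hW := one_sub_sum_one_sub_le_prod (s.filter (¬p ·))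
    (fun i hi => h0 i (mem_filter.1 hi).1) (fun i hi => h1 i (mem_filter.1 hi).1)
  nlinarith

end Finset

namespace Nat

theorem divisors_gcd_eq_filter (m : ℕ) {n : ℕ} (hn : n ≠ 0) :
    (m.gcd n).divisors = n.divisors.filter (· ∣ m) := by
  ext d
  simp [Nat.dvd_gcd_iff, hn, and_comm]

theorem sum_range_gcd_eq_sum_divisors_mul_totient {M : Type*} [Semiring M] (L : ℕ)
    (Φ : ℕ → M) :
    ∑ k ∈ range L, Φ (L.gcd k) = ∑ r ∈ L.divisors, Φ r * φ (L / r) := by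
  rcases L.eq_zero_or_pos with rfl | hL
  · simp
  rw [← sum_fiberwise_of_maps_to (t := L.divisors) (g := L.gcd)
    fun k _ => mem_divisors.2 ⟨gcd_dvd_left L k, hL.ne'⟩]
  refine sum_congr rfl fun r hr => ?_
  rw [sum_congr rfl fun k hk => congrArg Φ (mem_filter.1 hk).2, sum_const,
    totient_div_of_dvd (dvd_of_mem_divisors hr), nsmul_eq_mul']

end Nat

namespace Function.Periodic

theorem sum_Ico_eq_sum_range {M : Type*} [AddCommMonoid M] {q : ℕ → M} {L : ℕ}
    (hq : Periodic q L) (n : ℕ) : ∑ k ∈ Ico n (n + L), q k = ∑ k ∈ range L, q k := by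
  rw [← Nat.image_Ico_mod n L, sum_image (Nat.mod_injOn_Ico n L)]
  exact sum_congr rfl fun k _ => (hq.map_mod_nat k).symm

theorem tendsto_sum_range_div {q : ℕ → ℝ} {L : ℕ} (hq : Periodic q L) (hL : 0 < L) :
    Tendsto (fun m : ℕ => (∑ k ∈ range m, q k) / m) atTop
      (𝓝 ((∑ k ∈ range L, q k) / L)) := by
  set E : ℕ → ℝ := fun m => ∑ k ∈ range m, q k - m * ((∑ k ∈ range L, q k) / L)
  have hE : Periodic E L := fun m => by
    simp only [E, ← sum_range_add_sum_Ico q (m.le_add_right L), hq.sum_Ico_eq_sum_range]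
    field_simp
    push_cast
    ring
  have hE_bdd : ∀ m, |E m| ≤ ∑ k ∈ range L, |E k| := fun m => by
    rw [← hE.map_mod_nat m]
    exact single_le_sum (fun k _ => abs_nonneg (E k)) (mem_range.2 (m.mod_lt hL))
  have hE_div : Tendsto (fun m : ℕ => E m / m) atTop (𝓝 0) :=
    squeeze_zero_norm (fun m => by
        rw [norm_div, Real.norm_natCast]
        exact div_le_div_of_nonneg_right (hE_bdd m) m.cast_nonneg)
      (tendsto_const_div_atTop_nhds_zero_nat _)
  have hlim := hE_div.const_add ((∑ k ∈ range L, q k) / L)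
  rw [add_zero] at hlim
  refine hlim.congr' ?_
  filter_upwards [eventually_ne_atTop 0] with m hm
  simp only [E]
  field_simp
  ring

theorem tendsto_sum_Icc_div {q : ℕ → ℝ} {L : ℕ} (hq : Periodic q L) (hL : 0 < L) :
    Tendsto (fun m : ℕ => (∑ n ∈ Icc 1 m, q n) / m) atTop
      (𝓝 ((∑ k ∈ range L, q k) / L)) := by
  have hshift : ∀ m, ∑ k ∈ range m, q (k + 1) = ∑ n ∈ Ico 1 (1 + m), q n := fun m => by
    rw [range_eq_Ico, sum_Ico_add' q, zero_add, add_comm]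
  have hlim := (hq.add_const 1).tendsto_sum_range_div hL
  simp only [hshift, hq.sum_Ico_eq_sum_range] at hlim
  simpa only [add_comm 1, Ico_add_one_right_eq_Icc] using hlim

end Function.Periodic

theorem sum_Icc_sum_divisors_le_mul_tsum {w : ℕ → ℝ} (hw : ∀ d, 0 < d → 0 ≤ w d)
    (hs : Summable fun d : ℕ => w d / d) (m : ℕ) :
    ∑ n ∈ Icc 1 m, ∑ d ∈ n.divisors, w d ≤ m * ∑' d : ℕ, w d / d := by
  have hswap : ∑ n ∈ Icc 1 m, ∑ d ∈ n.divisors, w d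
      = ∑ d ∈ Icc 1 m, ∑ _n ∈ (Icc 1 m).filter (d ∣ ·), w d :=
    sum_comm' fun n d => by
      simp only [mem_Icc, Nat.mem_divisors, mem_filter]
      constructor
      · rintro ⟨hn, hdn, -⟩
        exact ⟨⟨hn, hdn⟩, Nat.pos_of_dvd_of_pos hdn hn.1, (Nat.le_of_dvd hn.1 hdn).trans hn.2⟩
      · rintro ⟨⟨hn, hdn⟩, -⟩
        exact ⟨hn, hdn, by omega⟩
  have hcount : ∀ d, ((Icc 1 m).filter (d ∣ ·)).card = m / d := fun d => by
    rw [← Nat.Ioc_filter_dvd_card_eq_div]; rfl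
  calc ∑ n ∈ Icc 1 m, ∑ d ∈ n.divisors, w d
      = ∑ d ∈ Icc 1 m, ((m / d : ℕ) : ℝ) * w d := by
        simp only [hswap, sum_const, hcount, nsmul_eq_mul]
    _ ≤ ∑ d ∈ Icc 1 m, m * (w d / d) := sum_le_sum fun d hd =>
        (mul_le_mul_of_nonneg_right Nat.cast_div_le (hw d (mem_Icc.1 hd).1)).trans_eq
          (mul_comm_div _ _ _)
    _ ≤ m * ∑' d : ℕ, w d / d := by
        have hs0 : ∀ d : ℕ, 0 ≤ w d / d := fun d => by
          rcases d.eq_zero_or_pos with rfl | hd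
          · simp
          · exact div_nonneg (hw d hd) d.cast_nonneg
        rw [← mul_sum]
        exact mul_le_mul_of_nonneg_left (hs.sum_le_tsum _ fun d _ => hs0 d) m.cast_nonneg

theorem Filter.Tendsto.comp_nat_floor_div {s : ℕ → ℝ} {c : ℝ}
    (hs : Tendsto (fun m : ℕ => s m / m) atTop (𝓝 c)) :
    Tendsto (fun x : ℝ => s ⌊x⌋₊ / x) atTop (𝓝 c) := by
  have hlim := (hs.comp (tendsto_nat_floor_atTop (α := ℝ))).mul tendsto_nat_floor_div_atTop
  rw [mul_one] at hlim
  refine hlim.congr' ?_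
  filter_upwards [eventually_ge_atTop 1] with x hx
  have hfloor : (⌊x⌋₊ : ℝ) ≠ 0 := by exact_mod_cast (Nat.floor_pos.2 hx).ne'
  simp only [Function.comp_apply]
  field_simp

theorem exists_tendsto_of_forall_approx {ι : Type*} {l : Filter ι} [l.NeBot] {M : ι → ℝ}
    {p : ℕ → ι → ℝ} {a e : ℕ → ℝ} (hp : ∀ t, Tendsto (p t) l (𝓝 (a t)))
    (he : Tendsto e atTop (𝓝 0)) (hlow : ∀ t, ∀ᶠ i in l, p t i - e t ≤ M i)
    (hup : ∀ t, ∀ᶠ i in l, M i ≤ p t i) :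
    ∃ c, Tendsto a atTop (𝓝 c) ∧ Tendsto M l (𝓝 c) := by
  have hae : ∀ s t, a s - e s ≤ a t := fun s t =>
    le_of_tendsto_of_tendsto ((hp s).sub_const (e s)) (hp t) <| by
      filter_upwards [hlow s, hup t] with i hs ht using hs.trans ht
  have ha : CauchySeq a := Metric.cauchySeq_iff'.2 fun ε hε => by
    obtain ⟨T, hT⟩ := eventually_atTop.1 (he.eventually (gt_mem_nhds hε))
    refine ⟨T, fun t ht => ?_⟩
    rw [Real.dist_eq, abs_lt]
    constructor <;> linarith [hae t T, hae T t, hT t ht, hT T le_rfl]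
  obtain ⟨c, hc⟩ := cauchySeq_tendsto_of_complete ha
  refine ⟨c, hc, tendsto_order.2 ⟨fun b hb => ?_, fun b hb => ?_⟩⟩
  · have hc' : Tendsto (fun t => a t - e t) atTop (𝓝 c) := by simpa using hc.sub he
    obtain ⟨t, ht⟩ := (hc'.eventually (lt_mem_nhds hb)).exists
    filter_upwards [hlow t, (hp t).eventually (lt_mem_nhds (show b + e t < a t by linarith))]
      with i hi hpi
    linarith
  · obtain ⟨t, ht⟩ := (hc.eventually (gt_mem_nhds hb)).exists
    filter_upwards [hup t, (hp t).eventually (gt_mem_nhds ht)] with i hi hpi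
    linarith

section DivisorProduct

variable {G : ℕ → ℝ}

theorem prod_divisors_le_prod_divisors_gcd (hG0 : ∀ d, 0 < d → 0 ≤ G d)
    (hG1 : ∀ d, 0 < d → G d ≤ 1) (L : ℕ) {n : ℕ} (hn : 0 < n) :
    ∏ d ∈ n.divisors, G d ≤ ∏ d ∈ (L.gcd n).divisors, G d :=
  prod_le_prod_of_subset_of_le_one (Nat.divisors_subset_of_dvd hn.ne' (Nat.gcd_dvd_right L n))
    (fun d hd => hG0 d (Nat.pos_of_mem_divisors hd))
    (fun d hd _ => hG1 d (Nat.pos_of_mem_divisors hd))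

theorem prod_divisors_gcd_sub_prod_divisors_le (hG0 : ∀ d, 0 < d → 0 ≤ G d)
    (hG1 : ∀ d, 0 < d → G d ≤ 1) (L : ℕ) {n : ℕ} (hn : 0 < n) :
    ∏ d ∈ (L.gcd n).divisors, G d - ∏ d ∈ n.divisors, G d
      ≤ ∑ d ∈ n.divisors, if d ∣ L then 0 else 1 - G d := by
  rw [Nat.divisors_gcd_eq_filter L hn.ne']
  exact prod_filter_sub_prod_le_sum _ _ (fun d hd => hG0 d (Nat.pos_of_mem_divisors hd))
    (fun d hd => hG1 d (Nat.pos_of_mem_divisors hd))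

theorem sum_Icc_prod_divisors_gcd_sub_le (hG0 : ∀ d, 0 < d → 0 ≤ G d)
    (hG1 : ∀ d, 0 < d → G d ≤ 1) (L : ℕ)
    (hs : Summable fun d : ℕ => (if d ∣ L then 0 else 1 - G d) / d) (m : ℕ) :
    ∑ n ∈ Icc 1 m, ∏ d ∈ (L.gcd n).divisors, G d - ∑ n ∈ Icc 1 m, ∏ d ∈ n.divisors, G d
      ≤ m * ∑' d : ℕ, (if d ∣ L then 0 else 1 - G d) / d := by
  rw [← sum_sub_distrib]
  refine (sum_le_sum fun n hn => ?_).trans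
    (sum_Icc_sum_divisors_le_mul_tsum (fun d hd => ?_) hs m)
  · exact prod_divisors_gcd_sub_prod_divisors_le hG0 hG1 L (mem_Icc.1 hn).1
  · split_ifs
    exacts [le_rfl, sub_nonneg.2 (hG1 d hd)]

theorem exists_tendsto_average_and_mean_prod_divisors (hG0 : ∀ d, 0 < d → 0 ≤ G d)
    (hG1 : ∀ d, 0 < d → G d ≤ 1) (hsum : Summable fun d : ℕ => (1 - G d) / d)
    {L : ℕ → ℕ} (hL : ∀ t, 0 < L t) (hdvd : ∀ d, 0 < d → G d ≠ 1 → ∀ᶠ t in atTop, d ∣ L t) :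
    ∃ c, Tendsto (fun t =>
          (∑ r ∈ (L t).divisors, (∏ d ∈ r.divisors, G d) * (Nat.totient (L t / r) : ℝ)) / L t)
        atTop (𝓝 c) ∧
      Tendsto (fun m : ℕ => (∑ n ∈ Icc 1 m, ∏ d ∈ n.divisors, G d) / m) atTop (𝓝 c) := by
  set w : ℕ → ℕ → ℝ := fun t d => if d ∣ L t then 0 else 1 - G d
  have hw_le : ∀ t d, ‖w t d / d‖ ≤ (1 - G d) / d := fun t d => by
    rcases d.eq_zero_or_pos with rfl | hd
    · simp
    have hGd := sub_nonneg.2 (hG1 d hd)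
    simp only [w]
    split_ifs
    · simpa using div_nonneg hGd d.cast_nonneg
    · rw [Real.norm_of_nonneg (div_nonneg hGd d.cast_nonneg)]
  have he : Tendsto (fun t => ∑' d, w t d / d) atTop (𝓝 0) := by
    refine tsum_zero (α := ℝ) (β := ℕ) ▸ tendsto_tsum_of_dominated_convergence hsum
      (fun d => ?_) (Eventually.of_forall hw_le)
    rcases d.eq_zero_or_pos with rfl | hd
    · simp
    by_cases hGd : G d = 1
    · simp [w, hGd]
    · exact tendsto_const_nhds.congr' ((hdvd d hd hGd).mono fun t ht => by simp [w, ht])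
  refine exists_tendsto_of_forall_approx
    (p := fun t m => (∑ n ∈ Icc 1 m, ∏ d ∈ ((L t).gcd n).divisors, G d) / m)
    (fun t => ?_) he (fun t => ?_) (fun t => ?_)
  · rw [← Nat.sum_range_gcd_eq_sum_divisors_mul_totient]
    exact ((Nat.periodic_gcd (L t)).comp fun r => ∏ d ∈ r.divisors, G d).tendsto_sum_Icc_div
      (hL t)
  · filter_upwards [eventually_gt_atTop 0] with m hm
    have hs : Summable fun d : ℕ => w t d / d := hsum.of_norm_bounded (hw_le t)
    have := sum_Icc_prod_divisors_gcd_sub_le hG0 hG1 (L t) hs m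
    have hm' : (m : ℝ) ≠ 0 := by positivity
    rw [sub_le_iff_le_add, ← div_le_div_iff_of_pos_right (by positivity : (0 : ℝ) < m), add_div,
      mul_div_cancel_left₀ _ hm'] at this
    exact sub_le_iff_le_add.2 (this.trans_eq (add_comm _ _))
  · exact Eventually.of_forall fun m => div_le_div_of_nonneg_right
      (sum_le_sum fun n hn => prod_divisors_le_prod_divisors_gcd hG0 hG1 (L t) (mem_Icc.1 hn).1)
      m.cast_nonneg

end DivisorProduct

theorem one_sub_rpow_le_mul_one_sub {x p : ℝ} (hx : 0 ≤ x) (hp : 1 ≤ p) :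
    1 - x ^ p ≤ p * (1 - x) := by
  have := one_add_mul_self_le_rpow_one_add (s := x - 1) (by linarith) hp
  rw [add_sub_cancel] at this
  linarith

theorem summable_one_sub_rpow_div {g : ℕ → ℝ} {p : ℝ} (hp : 1 ≤ p)
    (hg0 : ∀ d, 0 < d → 0 ≤ g d) (hg1 : ∀ d, 0 < d → g d ≤ 1)
    (hsum : Summable fun d : ℕ => (1 - g d) / d) :
    Summable fun d : ℕ => (1 - g d ^ p) / d := by
  refine Summable.of_nonneg_of_le (fun d => ?_) (fun d => ?_) (hsum.mul_left p)
  all_goals rcases d.eq_zero_or_pos with rfl | hd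
  · simp
  · exact div_nonneg (sub_nonneg.2 (Real.rpow_le_one (hg0 d hd) (hg1 d hd) (by linarith)))
      d.cast_nonneg
  · simp
  · rw [mul_div_assoc']
    exact div_le_div_of_nonneg_right (one_sub_rpow_le_mul_one_sub (hg0 d hd) hp) d.cast_nonneg

theorem eventually_dvd_of_forall_not_dvd_lt {N : ℕ} {L : ℕ → ℕ} {h : ℝ → ℝ}
    (hh : Tendsto h atTop atTop)
    (hhL : ∀ t : ℕ, 1 ≤ t → ∀ n : ℕ, 1 ≤ n → Nat.gcd n N = 1 → ¬ n ∣ L t → h t < n)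
    {d : ℕ} (hd : 0 < d) (hcop : Nat.gcd d N = 1) :
    ∀ᶠ t in atTop, d ∣ L t := by
  filter_upwards [(hh.comp tendsto_natCast_atTop_atTop).eventually_ge_atTop (d : ℝ),
    eventually_ge_atTop 1] with t ht ht1
  by_contra hnd
  exact (hhL t ht1 d hd hcop hnd).not_ge ht

theorem mean_value_of_power_general
    (α : ℝ) (hα : 1 < α)
    (N : ℕ) (g : ℕ → ℝ)
    (hg_pos : ∀ n : ℕ, 1 ≤ n → 0 < g n)
    (hg_le : ∀ n : ℕ, 1 ≤ n → g n ≤ 1)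
    (hg_N : ∀ n : ℕ, 1 ≤ n → 1 < Nat.gcd n N → g n = 1)
    (hsum : Summable fun d : ℕ => (1 - g d) / d)
    (f : ℕ → ℝ) (hf : ∀ n : ℕ, f n = ∏ d ∈ n.divisors, g d)
    (L : ℕ → ℕ)
    (hLpos : ∀ t : ℕ, 1 ≤ t → 0 < L t)
    (h : ℝ → ℝ) (hh : Tendsto h atTop atTop)
    (hhL : ∀ t : ℕ, 1 ≤ t → ∀ n : ℕ, 1 ≤ n → Nat.gcd n N = 1 → ¬ n ∣ L t → h t < n)
    (A : ℕ → ℝ)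
    (hA : ∀ t : ℕ, A t =
      (∑ r ∈ (L t).divisors, (f r) ^ α * (Nat.totient (L t / r) : ℝ)) / (L t : ℝ)) :
    ∃ Afα : ℝ,
      Tendsto A atTop (nhds Afα) ∧
      Tendsto (fun x : ℝ => (∑ n ∈ Finset.Icc 1 ⌊x⌋₊, (f n) ^ α) / x) atTop
        (nhds Afα) := by
  have hg0 : ∀ d, 0 < d → 0 ≤ g d := fun d hd => (hg_pos d hd).le
  have hG0 : ∀ d, 0 < d → 0 ≤ g d ^ α := fun d hd => Real.rpow_nonneg (hg0 d hd) α
  have hG1 : ∀ d, 0 < d → g d ^ α ≤ 1 := fun d hd =>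
    Real.rpow_le_one (hg0 d hd) (hg_le d hd) (by linarith)
  have hfα : ∀ n, f n ^ α = ∏ d ∈ n.divisors, g d ^ α := fun n => by
    rw [hf n, Real.finsetProd_rpow _ _ fun d hd => hg0 d (Nat.pos_of_mem_divisors hd)]
  have hdvd : ∀ d, 0 < d → g d ^ α ≠ 1 → ∀ᶠ t in atTop, d ∣ L (t + 1) := by
    intro d hd hgd
    have hcop : Nat.gcd d N = 1 := by
      by_contra hne
      have := Nat.gcd_pos_of_pos_left N hd
      exact hgd (by rw [hg_N d hd (by omega), Real.one_rpow])
    exact (tendsto_add_atTop_nat 1).eventually (eventually_dvd_of_forall_not_dvd_lt hh hhL hd hcop)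
  -- the hypotheses on `L t` only start at `t = 1`, so work with `t ↦ L (t + 1)`
  obtain ⟨c, hAc, hmean⟩ := exists_tendsto_average_and_mean_prod_divisors hG0 hG1
    (summable_one_sub_rpow_div hα.le hg0 hg_le hsum) (L := fun t => L (t + 1))
    (fun t => hLpos _ (by omega)) hdvd
  refine ⟨c, (tendsto_add_atTop_iff_nat 1).1 ?_, ?_⟩
  · simpa only [hA, hfα] using hAc
  · simpa only [hfα] using hmean.comp_nat_floor_div

/-- **Higher moments.** Fix `α > 1`.  Under the hypotheses of the main theorem, the
sequence `A_t^{(α)} = (1/L t) ∑_{r ∣ L t} f(r)^α φ(L t / r)` converges to a limit which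
is the mean value of `f^α`. -/
theorem mean_value_of_power
    (α : ℝ) (hα : 1 < α)
    (N : ℕ) (hN : 1 ≤ N) (g : ℕ → ℝ)
    (hg_pos : ∀ n : ℕ, 1 ≤ n → 0 < g n)
    (hg_le : ∀ n : ℕ, 1 ≤ n → g n ≤ 1)
    (hg_N : ∀ n : ℕ, 1 ≤ n → 1 < Nat.gcd n N → g n = 1)
    (hsum : Summable fun d : ℕ => (1 - g d) / d)
    (f : ℕ → ℝ) (hf : ∀ n : ℕ, f n = ∏ d ∈ n.divisors, g d)
    (L : ℕ → ℕ)
    (hLpos : ∀ t : ℕ, 1 ≤ t → 0 < L t)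
    (hLdvd : ∀ t : ℕ, 1 ≤ t → L t ∣ L (t + 1))
    (hLtop : Tendsto (fun t : ℕ => L t) atTop atTop)
    (h : ℝ → ℝ) (hh : Tendsto h atTop atTop)
    (hhL : ∀ t : ℕ, 1 ≤ t → ∀ n : ℕ, 1 ≤ n → Nat.gcd n N = 1 → ¬ n ∣ L t → h t < n)
    (A : ℕ → ℝ)
    (hA : ∀ t : ℕ, A t =
      (∑ r ∈ (L t).divisors, (f r) ^ α * (Nat.totient (L t / r) : ℝ)) / (L t : ℝ)) :
    ∃ Afα : ℝ,
      Tendsto A atTop (nhds Afα) ∧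
      Tendsto (fun x : ℝ => (∑ n ∈ Finset.Icc 1 ⌊x⌋₊, (f n) ^ α) / x) atTop
        (nhds Afα) :=
  mean_value_of_power_general α hα N g hg_pos hg_le hg_N hsum f hf L hLpos h hh hhL A hA
end

section
/- Let q be a power of a prime p, and for each prime power Q let ρ̄_Q denote the mean value lim_{x→∞} (1/x) ∑_{n ≤ x} φ(Q^n − 1)/Q^n (which exists and is positive). Then liminf_{i→∞} ρ̄_{q^i} = 0; that is, for every ε > 0 there exist infinitely many positive integers i such that ρ̄_{q^i} < ε. -/
open Filter Finset

/-!
Given `ε`, pick finitely many primes `ℓ ≠ p` with `∑ 1/ℓ > log (1/ε)` (the prime harmonic series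
diverges) and let `i` be a multiple of every `ℓ - 1`. By Fermat, each such `ℓ` divides
`q^(i n) - 1` for all `n`, so every term `φ(q^(i n) - 1)/q^(i n)` of the mean is at most
`∏ (1 - 1/ℓ) ≤ exp (-∑ 1/ℓ) < ε`, and hence so is `ρ̄_{q^i}`.
-/

theorem Real.prod_one_sub_le_exp_neg_sum {ι : Type*} (s : Finset ι) (x : ι → ℝ)
    (hx : ∀ i ∈ s, x i ≤ 1) : ∏ i ∈ s, (1 - x i) ≤ Real.exp (-∑ i ∈ s, x i) := by
  rw [← sum_neg_distrib, Real.exp_sum]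
  exact prod_le_prod (fun i hi => sub_nonneg.2 (hx i hi)) fun i _ => Real.one_sub_le_exp_neg _

theorem Nat.one_sub_inv_cast_nonneg (ℓ : ℕ) : (0 : ℝ) ≤ 1 - (ℓ : ℝ)⁻¹ :=
  sub_nonneg.2 (Nat.cast_inv_le_one ℓ)

theorem Nat.totient_div_le_prod_one_sub_inv {M : ℕ} {S : Finset ℕ} (hS : S ⊆ M.primeFactors) :
    (M.totient : ℝ) / M ≤ ∏ ℓ ∈ S, (1 - (ℓ : ℝ)⁻¹) := by
  rcases eq_or_ne M 0 with rfl | hM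
  · rw [Nat.cast_zero, div_zero]
    exact prod_nonneg fun ℓ _ => ℓ.one_sub_inv_cast_nonneg
  have euler : (M.totient : ℝ) = M * ∏ ℓ ∈ M.primeFactors, (1 - (ℓ : ℝ)⁻¹) := by
    simpa using congrArg (Rat.cast : ℚ → ℝ) (Nat.totient_eq_mul_prod_factors M)
  rw [euler, mul_div_cancel_left₀ _ (Nat.cast_ne_zero.2 hM)]
  exact prod_le_prod_of_subset_of_le_one hS (fun ℓ _ => ℓ.one_sub_inv_cast_nonneg)
    fun ℓ _ _ => sub_le_self _ (by positivity)

theorem Nat.totient_sub_one_div_le_prod_one_sub_inv {N : ℕ} {S : Finset ℕ}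
    (hS : ∀ ℓ ∈ S, ℓ.Prime ∧ ℓ ∣ N - 1) :
    ((N - 1).totient : ℝ) / N ≤ ∏ ℓ ∈ S, (1 - (ℓ : ℝ)⁻¹) := by
  rcases eq_or_ne (N - 1) 0 with hN | hN
  · rw [hN, Nat.totient_zero, Nat.cast_zero, zero_div]
    exact prod_nonneg fun ℓ _ => ℓ.one_sub_inv_cast_nonneg
  have hsub : S ⊆ (N - 1).primeFactors := fun ℓ hℓ =>
    Nat.mem_primeFactors.2 ⟨(hS ℓ hℓ).1, (hS ℓ hℓ).2, hN⟩
  refine le_trans ?_ (Nat.totient_div_le_prod_one_sub_inv hsub)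
  exact div_le_div_of_nonneg_left (by positivity) (by positivity)
    (by exact_mod_cast Nat.sub_le N 1)

theorem Nat.Prime.dvd_pow_sub_one_of_sub_one_dvd {ℓ q k : ℕ} (hℓ : ℓ.Prime) (hq : q.Coprime ℓ)
    (hk : ℓ - 1 ∣ k) : ℓ ∣ q ^ k - 1 :=
  (Nat.dvd_of_mod_eq_zero (Nat.pow_card_sub_one_sub_one_mod_card hℓ hq)).trans
    (Nat.pow_sub_one_dvd_pow_sub_one q hk)

theorem exists_finset_prime_ne_lt_sum_inv (p : ℕ) (B : ℝ) :
    ∃ S : Finset ℕ, (∀ ℓ ∈ S, ℓ.Prime ∧ ℓ ≠ p) ∧ B < ∑ ℓ ∈ S, (ℓ : ℝ)⁻¹ := by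
  by_contra! h
  refine not_summable_one_div_on_primes (summable_of_sum_le (c := B + 1)
    (fun n => Set.indicator_nonneg (fun _ _ => by positivity) n) fun u => ?_)
  set T := u.filter Nat.Prime
  have hT : ∑ n ∈ u, {ℓ : ℕ | ℓ.Prime}.indicator (fun n : ℕ => (1 : ℝ) / n) n
      = ∑ ℓ ∈ T, (ℓ : ℝ)⁻¹ := by
    rw [sum_filter]
    exact sum_congr rfl fun n _ => by simp [Set.indicator_apply]
  have hne : ∑ ℓ ∈ T.filter (· ≠ p), (ℓ : ℝ)⁻¹ ≤ B :=
    h _ fun ℓ hℓ => by simp only [T, mem_filter] at hℓ; exact ⟨hℓ.1.2, hℓ.2⟩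
  have heq : ∑ ℓ ∈ T.filter (¬ · ≠ p), (ℓ : ℝ)⁻¹ ≤ 1 := by
    simp only [ne_eq, not_not, filter_eq']
    split_ifs
    · simpa using Nat.cast_inv_le_one p
    · simp
  rw [hT, ← sum_filter_add_sum_filter_not T (· ≠ p)]
  linarith

theorem le_of_tendsto_sum_Icc_div {f : ℕ → ℝ} {C r : ℝ} (hC : 0 ≤ C) (hf : ∀ n, 1 ≤ n → f n ≤ C)
    (h : Tendsto (fun x : ℝ => (∑ n ∈ Icc 1 ⌊x⌋₊, f n) / x) atTop (nhds r)) : r ≤ C := by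
  refine le_of_tendsto h ?_
  filter_upwards [eventually_gt_atTop (0 : ℝ)] with x hx
  rw [div_le_iff₀ hx]
  calc ∑ n ∈ Icc 1 ⌊x⌋₊, f n ≤ ∑ n ∈ Icc 1 ⌊x⌋₊, C :=
        sum_le_sum fun n hn => hf n (mem_Icc.1 hn).1
    _ = ⌊x⌋₊ * C := by simp
    _ ≤ C * x := by rw [mul_comm]; exact mul_le_mul_of_nonneg_left (Nat.floor_le hx.le) hC

theorem liminf_mean_density_primitive_eq_zero_general
    (p : ℕ) (hp : p.Prime) (m : ℕ) (q : ℕ) (hq : q = p ^ m)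
    (rbar : ℕ → ℝ)
    (hrbar : ∀ i : ℕ, 1 ≤ i →
      Tendsto
        (fun x : ℝ =>
          (∑ n ∈ Finset.Icc 1 ⌊x⌋₊,
            (Nat.totient ((q ^ i) ^ n - 1) : ℝ) / ((q : ℝ) ^ i) ^ n) / x)
        atTop (nhds (rbar i))) :
    ∀ ε : ℝ, 0 < ε → ∀ i₀ : ℕ, ∃ i : ℕ, i₀ ≤ i ∧ 1 ≤ i ∧ rbar i < ε := by
  intro ε hε i₀
  obtain ⟨S, hS, hsum⟩ := exists_finset_prime_ne_lt_sum_inv p (-Real.log ε)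
  have hP : 0 < ∏ ℓ ∈ S, (ℓ - 1) := prod_pos fun ℓ hℓ => Nat.sub_pos_of_lt (hS ℓ hℓ).1.one_lt
  set i := (i₀ + 1) * ∏ ℓ ∈ S, (ℓ - 1)
  have hi : 1 ≤ i := Nat.mul_pos i₀.succ_pos hP
  have hdvd (n : ℕ) (ℓ : ℕ) (hℓ : ℓ ∈ S) : ℓ ∣ (q ^ i) ^ n - 1 := by
    have hcop : q.Coprime ℓ :=
      hq ▸ ((Nat.coprime_primes hp (hS ℓ hℓ).1).2 (hS ℓ hℓ).2.symm).pow_left m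
    rw [← pow_mul]
    exact (hS ℓ hℓ).1.dvd_pow_sub_one_of_sub_one_dvd hcop
      (((dvd_prod_of_mem _ hℓ).mul_left _).mul_right n)
  refine ⟨i, le_trans i₀.le_succ (Nat.le_mul_of_pos_right _ hP), hi, ?_⟩
  calc rbar i ≤ ∏ ℓ ∈ S, (1 - (ℓ : ℝ)⁻¹) := by
        refine le_of_tendsto_sum_Icc_div (prod_nonneg fun ℓ _ => ℓ.one_sub_inv_cast_nonneg)
          (fun n _ => ?_) (hrbar i hi)
        exact_mod_cast Nat.totient_sub_one_div_le_prod_one_sub_inv fun ℓ hℓ =>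
          ⟨(hS ℓ hℓ).1, hdvd n ℓ hℓ⟩
    _ ≤ Real.exp (-∑ ℓ ∈ S, (ℓ : ℝ)⁻¹) :=
        Real.prod_one_sub_le_exp_neg_sum _ _ fun ℓ _ => Nat.cast_inv_le_one ℓ
    _ < ε := (Real.lt_log_iff_exp_lt hε).1 (by linarith)

/-- Let `q` be a power of a prime `p` and, for each `i ≥ 1`, let `ρ̄_{q^i}` be the mean
value of `n ↦ φ((q^i)^n - 1)/(q^i)^n` (which exists and is positive).  Then
`liminf_{i → ∞} ρ̄_{q^i} = 0`: for every `ε > 0` there are infinitely many `i` with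
`ρ̄_{q^i} < ε`. -/
theorem liminf_mean_density_primitive_eq_zero
    (p : ℕ) (hp : p.Prime) (m : ℕ) (hm : 0 < m) (q : ℕ) (hq : q = p ^ m)
    (rbar : ℕ → ℝ)
    (hrbar : ∀ i : ℕ, 1 ≤ i →
      Tendsto
        (fun x : ℝ =>
          (∑ n ∈ Finset.Icc 1 ⌊x⌋₊,
            (Nat.totient ((q ^ i) ^ n - 1) : ℝ) / ((q : ℝ) ^ i) ^ n) / x)
        atTop (nhds (rbar i)))
    (hpos : ∀ i : ℕ, 1 ≤ i → 0 < rbar i) :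
    ∀ ε : ℝ, 0 < ε → ∀ i₀ : ℕ, ∃ i : ℕ, i₀ ≤ i ∧ 1 ≤ i ∧ rbar i < ε :=
  liminf_mean_density_primitive_eq_zero_general p hp m q hq rbar hrbar
end

section
/- Let q be a prime power with characteristic p, and for each positive integer d set g_q(d) = ∏_{ℓ prime, e_q(ℓ) = d} (1 − 1/ℓ), where the empty product equals 1. Then for every integer d ≥ 2, 0 ≤ 1 − g_q(d) ≤ ∑_{ℓ prime, e_q(ℓ) = d} 1/ℓ = O((log d)/d). In particular, g_q(d) → 1 as d → ∞ and the series ∑_{d=1}^∞ (1 − g_q(d))/d converges. -/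
/-!
Every prime `ℓ` with `e_q(ℓ) = d` satisfies `ℓ ≡ 1 (mod d)`, and these primes are distinct prime
factors of `q ^ d - 1 < 2 ^ (q d)`, so there are fewer than `q d` of them. Writing `ℓ = 1 + d k`
with distinct `k ≥ 1`, the sum of their reciprocals is at most `1/d` times a harmonic sum of
length `O(d)`, hence `O((log d)/d)`. The inequality `1 - ∏ (1 - xᵢ) ≤ ∑ xᵢ` for `xᵢ ∈ [0, 1]`
transfers this to `1 - g_q(d)`; both limit statements follow from the decay `O((log d)/d)`.
-/

open Filter Finset Asymptotics Real

theorem Finset.one_sub_prod_one_sub_le_sum {ι R : Type*} [CommRing R] [LinearOrder R]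
    [IsStrictOrderedRing R] (s : Finset ι) (f : ι → R) (h0 : ∀ i ∈ s, 0 ≤ f i)
    (h1 : ∀ i ∈ s, f i ≤ 1) :
    1 - ∏ i ∈ s, (1 - f i) ≤ ∑ i ∈ s, f i := by
  classical
  induction s using Finset.induction_on with
  | empty => simp
  | @insert a s ha ih =>
    simp only [mem_insert, forall_eq_or_imp] at h0 h1
    have hP : ∏ i ∈ s, (1 - f i) ≤ 1 :=
      prod_le_one (fun i hi => sub_nonneg.2 (h1.2 i hi)) fun i hi => sub_le_self _ (h0.2 i hi)
    rw [prod_insert ha, sum_insert ha]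
    nlinarith [ih h0.2 h1.2]

theorem sum_one_div_le_harmonic_card (T : Finset ℕ) (hT : 0 ∉ T) :
    ∑ k ∈ T, (1 : ℝ) / k ≤ harmonic #T := by
  induction T using Finset.induction_on_max with
  | empty => simp
  | insert a T hlt ih =>
    have ha : a ∉ T := fun h => (hlt a h).false
    have hcard : #T + 1 ≤ a := by
      have ha0 : a ≠ 0 := fun h => hT (h ▸ mem_insert_self a T)
      have hsub : T ⊆ Ico 1 a := fun k hk =>
        mem_Ico.2 ⟨Nat.one_le_iff_ne_zero.2 fun h => hT (h ▸ mem_insert_of_mem hk), hlt k hk⟩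
      have := card_le_card hsub
      rw [Nat.card_Ico] at this
      omega
    rw [sum_insert ha, card_insert_of_notMem ha, harmonic_succ, Rat.cast_add, add_comm]
    refine add_le_add (ih fun h => hT (mem_insert_of_mem h)) ?_
    rw [one_div, Rat.cast_inv, Rat.cast_natCast]
    gcongr

theorem sum_one_div_le_of_dvd_sub_one {d : ℕ} (hd : 0 < d) (S : Finset ℕ)
    (hS : ∀ ℓ ∈ S, 1 < ℓ ∧ d ∣ ℓ - 1) :
    ∑ ℓ ∈ S, (1 : ℝ) / ℓ ≤ (1 + log #S) / d := by
  have hquot : ∀ ℓ ∈ S, d * ((ℓ - 1) / d) = ℓ - 1 := fun ℓ hℓ => Nat.mul_div_cancel' (hS ℓ hℓ).2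
  have hinj : Set.InjOn (fun ℓ => (ℓ - 1) / d) S := fun a ha b hb hab => by
    have hsub : a - 1 = b - 1 := by rw [← hquot a ha, ← hquot b hb]; exact congrArg (d * ·) hab
    have := (hS a ha).1; have := (hS b hb).1
    omega
  have hzero : 0 ∉ S.image fun ℓ => (ℓ - 1) / d := fun h => by
    obtain ⟨ℓ, hℓ, h0⟩ := mem_image.1 h
    have hsub := hquot ℓ hℓ
    rw [h0, mul_zero] at hsub
    have := (hS ℓ hℓ).1
    omega
  calc ∑ ℓ ∈ S, (1 : ℝ) / ℓ ≤ ∑ ℓ ∈ S, (1 : ℝ) / d * (1 / ((ℓ - 1) / d : ℕ)) := by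
        refine sum_le_sum fun ℓ hℓ => ?_
        rw [one_div_mul_one_div, ← Nat.cast_mul, hquot ℓ hℓ]
        have := (hS ℓ hℓ).1
        gcongr
        · exact Nat.cast_pos.2 (by omega)
        · omega
    _ = 1 / d * ∑ k ∈ S.image (fun ℓ => (ℓ - 1) / d), (1 : ℝ) / k := by
        rw [sum_image hinj, mul_sum]
    _ ≤ 1 / d * harmonic #S := by
        grw [sum_one_div_le_harmonic_card _ hzero, card_image_of_injOn hinj]
    _ ≤ (1 + log #S) / d := by
        rw [one_div_mul_eq_div]
        gcongr
        exact harmonic_le_one_add_log _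

theorem summable_log_div_natCast_sq : Summable fun n : ℕ => log n / (n : ℝ) ^ 2 := by
  have hlog : (fun n : ℕ => log n) =o[atTop] fun n : ℕ => (n : ℝ) ^ (1 / 2 : ℝ) :=
    (isLittleO_log_rpow_atTop (by norm_num)).comp_tendsto tendsto_natCast_atTop_atTop
  refine summable_of_isBigO_nat (summable_nat_rpow.2 (by norm_num : (-3 / 2 : ℝ) < -1)) ?_
  refine (hlog.isBigO.mul (isBigO_refl (fun n : ℕ => ((n : ℝ) ^ 2)⁻¹) atTop)).congr' ?_ ?_
  · exact .of_eq (funext fun n => div_eq_mul_inv _ _).symm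
  · filter_upwards [eventually_gt_atTop 0] with n hn
    rw [← rpow_natCast, ← rpow_neg (by positivity), ← rpow_add (by positivity)]
    norm_num

theorem tendsto_zero_of_le_log_div {a : ℕ → ℝ} {C : ℝ}
    (h : ∀ᶠ n in atTop, 0 ≤ a n ∧ a n ≤ C * log n / n) : Tendsto a atTop (nhds 0) := by
  have hlog : Tendsto (fun n : ℕ => C * log n / n) atTop (nhds 0) := by
    simpa only [mul_div_assoc, mul_zero, Function.comp_def, id] using
      (isLittleO_log_id_atTop.tendsto_div_nhds_zero.comp tendsto_natCast_atTop_atTop).const_mul C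
  exact squeeze_zero' (h.mono fun _ hn => hn.1) (h.mono fun _ hn => hn.2) hlog

theorem summable_div_of_le_log_div {a : ℕ → ℝ} {C : ℝ}
    (h : ∀ᶠ n in atTop, 0 ≤ a n ∧ a n ≤ C * log n / n) : Summable fun n => a n / n := by
  refine (summable_log_div_natCast_sq.mul_left C).of_norm_bounded_eventually_nat ?_
  filter_upwards [h] with n hn
  rw [norm_of_nonneg (div_nonneg hn.1 n.cast_nonneg), mul_div_assoc', sq, ← div_div]
  gcongr
  exact hn.2

noncomputable def primesOfOrder (q d : ℕ) : Finset ℕ :=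
  (q ^ d - 1).divisors.filter fun ℓ => ℓ.Prime ∧ orderOf (q : ZMod ℓ) = d

section primesOfOrder

variable {q d ℓ : ℕ}

theorem dvd_sub_one_of_mem_primesOfOrder (h : ℓ ∈ primesOfOrder q d) : d ∣ ℓ - 1 := by
  obtain ⟨hdvd, hℓ, hord⟩ := mem_filter.1 h
  have : Fact ℓ.Prime := ⟨hℓ⟩
  refine hord ▸ ZMod.orderOf_dvd_card_sub_one fun hq => ?_
  simp [hq, ← hord] at hdvd

theorem card_primesOfOrder_le : #(primesOfOrder q d) ≤ q * d := by
  set S := primesOfOrder q d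
  rcases S.eq_empty_or_nonempty with hS | ⟨ℓ₀, hℓ₀⟩
  · simp [hS]
  have hmem : ∀ ℓ ∈ S, ℓ.Prime ∧ ℓ ∣ q ^ d - 1 := fun ℓ h =>
    ⟨(mem_filter.1 h).2.1, (Nat.mem_divisors.1 (mem_filter.1 h).1).1⟩
  have hN : q ^ d - 1 ≠ 0 := (Nat.mem_divisors.1 (mem_filter.1 hℓ₀).1).2
  have : 2 ^ #S < 2 ^ (q * d) := calc
    2 ^ #S = ∏ _ ∈ S, 2 := (prod_const 2).symm
    _ ≤ ∏ ℓ ∈ S, ℓ := prod_le_prod' fun ℓ h => (hmem ℓ h).1.two_le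
    _ ≤ q ^ d - 1 := Nat.le_of_dvd (Nat.pos_of_ne_zero hN)
        (prod_primes_dvd _ (fun ℓ h => (hmem ℓ h).1.prime) fun ℓ h => (hmem ℓ h).2)
    _ < q ^ d := by omega
    _ ≤ (2 ^ q) ^ d := by gcongr; exact q.lt_two_pow_self.le
    _ = 2 ^ (q * d) := (pow_mul ..).symm
  exact ((Nat.pow_lt_pow_iff_right (by norm_num)).1 this).le

theorem sum_primesOfOrder_one_div_le (hq : 0 < q) (hd : 0 < d) :
    ∑ ℓ ∈ primesOfOrder q d, (1 : ℝ) / ℓ ≤ (1 + log q + log d) / d := by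
  refine (sum_one_div_le_of_dvd_sub_one hd _ fun ℓ h =>
    ⟨(mem_filter.1 h).2.1.one_lt, dvd_sub_one_of_mem_primesOfOrder h⟩).trans ?_
  have hlog : log #(primesOfOrder q d) ≤ log q + log d := by
    rw [← log_mul (by positivity) (by positivity)]
    rcases Nat.eq_zero_or_pos #(primesOfOrder q d) with h0 | hpos
    · rw [h0, Nat.cast_zero, log_zero, ← Nat.cast_mul]
      exact log_natCast_nonneg _
    · exact log_le_log (by exact_mod_cast hpos) (by exact_mod_cast card_primesOfOrder_le)
  rw [add_assoc]
  gcongr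

theorem sum_primesOfOrder_one_div_le_mul_log_div (hq : 0 < q) (hd : 2 ≤ d) :
    ∑ ℓ ∈ primesOfOrder q d, (1 : ℝ) / ℓ ≤ ((1 + log q) / log 2 + 1) * log d / d := by
  refine (sum_primesOfOrder_one_div_le hq (by omega)).trans ?_
  have hlog2 : 0 < log 2 := log_pos one_lt_two
  have hlogd : log 2 ≤ log d := log_le_log two_pos (by exact_mod_cast hd)
  have hconst : 1 + log q ≤ (1 + log q) / log 2 * log d := by
    rw [div_mul_eq_mul_div, le_div_iff₀ hlog2]
    gcongr
  rw [add_one_mul]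
  exact div_le_div_of_nonneg_right (by linarith) d.cast_nonneg

end primesOfOrder

theorem gq_bounds_and_summable_general
    (q : ℕ) (hq2 : 2 ≤ q)
    (g : ℕ → ℝ)
    (hg : ∀ d : ℕ, g d =
      ∏ ℓ ∈ (q ^ d - 1).divisors.filter
        (fun ℓ => ℓ.Prime ∧ orderOf (q : ZMod ℓ) = d), (1 - 1 / (ℓ : ℝ))) :
    (∃ C : ℝ, 0 < C ∧ ∀ d : ℕ, 2 ≤ d →
      0 ≤ 1 - g d ∧
      1 - g d ≤ ∑ ℓ ∈ (q ^ d - 1).divisors.filter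
        (fun ℓ => ℓ.Prime ∧ orderOf (q : ZMod ℓ) = d), 1 / (ℓ : ℝ) ∧
      ∑ ℓ ∈ (q ^ d - 1).divisors.filter
        (fun ℓ => ℓ.Prime ∧ orderOf (q : ZMod ℓ) = d), 1 / (ℓ : ℝ)
          ≤ C * Real.log d / d) ∧
    Tendsto g atTop (nhds 1) ∧
    Summable (fun d : ℕ => (1 - g d) / d) := by
  have hrecip : ∀ d, ∀ ℓ ∈ primesOfOrder q d, 0 ≤ (1 : ℝ) / ℓ ∧ (1 : ℝ) / ℓ ≤ 1 :=
    fun d ℓ h => ⟨by positivity,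
      div_le_one_of_le₀ (by exact_mod_cast (mem_filter.1 h).2.1.one_le) (by positivity)⟩
  have hbounds : ∀ d : ℕ, 2 ≤ d → 0 ≤ 1 - g d ∧
      1 - g d ≤ ∑ ℓ ∈ primesOfOrder q d, (1 : ℝ) / ℓ ∧
      ∑ ℓ ∈ primesOfOrder q d, (1 : ℝ) / ℓ ≤ ((1 + log q) / log 2 + 1) * log d / d := by
    intro d hd
    rw [hg d]
    exact ⟨sub_nonneg.2 (prod_le_one (fun ℓ h => sub_nonneg.2 (hrecip d ℓ h).2)
        fun ℓ h => sub_le_self _ (hrecip d ℓ h).1),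
      one_sub_prod_one_sub_le_sum _ _ (fun ℓ h => (hrecip d ℓ h).1) fun ℓ h => (hrecip d ℓ h).2,
      sum_primesOfOrder_one_div_le_mul_log_div (by omega) hd⟩
  have hdecay : ∀ᶠ d : ℕ in atTop,
      0 ≤ 1 - g d ∧ 1 - g d ≤ ((1 + log q) / log 2 + 1) * log d / d :=
    eventually_atTop.2 ⟨2, fun d hd =>
      ⟨(hbounds d hd).1, (hbounds d hd).2.1.trans (hbounds d hd).2.2⟩⟩
  refine ⟨⟨_, by positivity, hbounds⟩, ?_, summable_div_of_le_log_div hdecay⟩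
  simpa using (tendsto_zero_of_le_log_div hdecay).const_sub 1

/-- For a prime power `q`, set `g_q(d) = ∏_{ℓ prime, e_q(ℓ) = d} (1 - 1/ℓ)` (the primes
`ℓ` with `e_q(ℓ) = d` are exactly the prime divisors of `q^d - 1` for which the order of
`q` mod `ℓ` is `d`).  Then for all `d ≥ 2`,
`0 ≤ 1 - g_q(d) ≤ ∑_{ℓ prime, e_q(ℓ) = d} 1/ℓ = O((log d)/d)`; in particular
`g_q(d) → 1` and `∑ (1 - g_q(d))/d` converges. -/
theorem gq_bounds_and_summable
    (q : ℕ) (hq2 : 2 ≤ q) (hq : ∃ p m : ℕ, p.Prime ∧ 0 < m ∧ q = p ^ m)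
    (g : ℕ → ℝ)
    (hg : ∀ d : ℕ, g d =
      ∏ ℓ ∈ (q ^ d - 1).divisors.filter
        (fun ℓ => ℓ.Prime ∧ orderOf (q : ZMod ℓ) = d), (1 - 1 / (ℓ : ℝ))) :
    (∃ C : ℝ, 0 < C ∧ ∀ d : ℕ, 2 ≤ d →
      0 ≤ 1 - g d ∧
      1 - g d ≤ ∑ ℓ ∈ (q ^ d - 1).divisors.filter
        (fun ℓ => ℓ.Prime ∧ orderOf (q : ZMod ℓ) = d), 1 / (ℓ : ℝ) ∧
      ∑ ℓ ∈ (q ^ d - 1).divisors.filter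
        (fun ℓ => ℓ.Prime ∧ orderOf (q : ZMod ℓ) = d), 1 / (ℓ : ℝ)
          ≤ C * Real.log d / d) ∧
    Tendsto g atTop (nhds 1) ∧
    Summable (fun d : ℕ => (1 - g d) / d) :=
  gq_bounds_and_summable_general q hq2 g hg
end

section
/- Let q be a power of a prime p, and define G_q(d) = (1 − q^{−e_q(d)})^{φ(d)/e_q(d)} if gcd(d, p) = 1 and G_q(d) = 1 otherwise. Then for every positive integer d with gcd(d, p) = 1, 0 ≤ 1 − G_q(d) ≤ φ(d)/(q^{e_q(d)} e_q(d)) ≤ (log q)/log(d + 1). In particular, G_q(d) → 1 as d → ∞ and the series ∑_{d=1}^∞ (1 − G_q(d))/d converges. -/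
open Filter Finset

private lemma aux_card_divisors (n : ℕ) : n.divisors.card ≤ 2 * Nat.sqrt n := by
  have hsub : n.divisors ⊆ (Finset.Icc 1 n.sqrt) ∪ (Finset.Icc 1 n.sqrt).image (n / ·) := by
    intro a ha
    obtain ⟨hdvd, hn⟩ := Nat.mem_divisors.mp ha
    have ha0 : 0 < a := Nat.pos_of_mem_divisors ha
    by_cases h : a ≤ n.sqrt
    · exact Finset.mem_union_left _ (Finset.mem_Icc.mpr ⟨ha0, h⟩)
    · refine Finset.mem_union_right _ (Finset.mem_image.mpr ⟨n / a, ?_, Nat.div_div_self hdvd hn⟩)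
      refine Finset.mem_Icc.mpr ⟨(Nat.one_le_div_iff ha0).mpr (Nat.le_of_dvd (Nat.pos_of_ne_zero hn) hdvd), ?_⟩
      have h1 : n / a ≤ n / (n.sqrt + 1) := Nat.div_le_div_left (by omega) (by omega)
      have h2 : n / (n.sqrt + 1) < n.sqrt + 1 :=
        Nat.div_lt_of_lt_mul (Nat.lt_succ_sqrt n)
      omega
  calc n.divisors.card ≤ _ := Finset.card_le_card hsub
    _ ≤ (Finset.Icc 1 n.sqrt).card + ((Finset.Icc 1 n.sqrt).image (n / ·)).card :=
        Finset.card_union_le _ _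
    _ ≤ (Finset.Icc 1 n.sqrt).card + (Finset.Icc 1 n.sqrt).card :=
        Nat.add_le_add_left Finset.card_image_le _
    _ ≤ 2 * Nat.sqrt n := by rw [Nat.card_Icc]; omega

private lemma aux_ord (q d : ℕ) (hq2 : 2 ≤ q) (hqd : Nat.Coprime q d) (hd : 1 ≤ d) :
    0 < orderOf ((q : ℕ) : ZMod d) ∧ d ∣ q ^ orderOf ((q : ℕ) : ZMod d) - 1 ∧
      orderOf ((q : ℕ) : ZMod d) ≤ d.totient := by
  haveI : NeZero d := ⟨by omega⟩
  obtain ⟨u, hu'⟩ := (ZMod.isUnit_iff_coprime q d).mpr hqd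
  have hordu : orderOf ((q : ℕ) : ZMod d) = orderOf u := by rw [← hu', orderOf_units]
  have hpos : 0 < orderOf ((q : ℕ) : ZMod d) := by rw [hordu]; exact orderOf_pos u
  set e := orderOf ((q : ℕ) : ZMod d) with he
  have hq1e : 1 ≤ q ^ e := Nat.one_le_pow _ _ (by omega)
  have hpow : ((q : ZMod d)) ^ e = 1 := pow_orderOf_eq_one _
  have hcast : ((q ^ e : ℕ) : ZMod d) = ((1 : ℕ) : ZMod d) := by push_cast; simpa using hpow
  have hdvd : d ∣ q ^ e - 1 :=
    (Nat.modEq_iff_dvd' hq1e).mp ((ZMod.natCast_eq_natCast_iff _ _ _).mp hcast).symm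
  refine ⟨hpos, hdvd, ?_⟩
  have hdvd2 : orderOf u ∣ Fintype.card (ZMod d)ˣ := orderOf_dvd_card
  rw [ZMod.card_units_eq_totient] at hdvd2
  rw [hordu]
  exact Nat.le_of_dvd (Nat.totient_pos.mpr (by omega)) hdvd2

/-- Let `q` be a power of a prime `p` and
`G_q(d) = (1 - q^{-e_q(d)})^{φ(d)/e_q(d)}` if `gcd(d, p) = 1`, `G_q(d) = 1` otherwise.
Then for every `d ≥ 1` coprime with `p`,
`0 ≤ 1 - G_q(d) ≤ φ(d)/(q^{e_q(d)} e_q(d)) ≤ log q / log (d + 1)`; in particular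
`G_q(d) → 1` and `∑ (1 - G_q(d))/d` converges. -/
theorem Gq_bounds_and_summable
    (p m q : ℕ) (hp : p.Prime) (hm : 0 < m) (hq : q = p ^ m)
    (G : ℕ → ℝ)
    (hG : ∀ d : ℕ, G d = if Nat.gcd d p = 1 then
      (1 - ((q : ℝ) ^ orderOf (q : ZMod d))⁻¹) ^ (d.totient / orderOf (q : ZMod d))
      else 1) :
    (∀ d : ℕ, 1 ≤ d → Nat.gcd d p = 1 →
      0 ≤ 1 - G d ∧
      1 - G d ≤ (d.totient : ℝ) /
        ((q : ℝ) ^ orderOf (q : ZMod d) * (orderOf (q : ZMod d) : ℝ)) ∧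
      (d.totient : ℝ) /
        ((q : ℝ) ^ orderOf (q : ZMod d) * (orderOf (q : ZMod d) : ℝ))
          ≤ Real.log q / Real.log (d + 1)) ∧
    Tendsto G atTop (nhds 1) ∧
    Summable (fun d : ℕ => (1 - G d) / d) := by
  have hq2 : 2 ≤ q := by
    subst hq
    calc 2 ≤ p := hp.two_le
      _ ≤ p ^ m := Nat.le_self_pow hm.ne' p
  have hcoprime : ∀ d : ℕ, Nat.gcd d p = 1 → Nat.Coprime q d := by
    intro d hcop
    rw [hq]
    exact Nat.Coprime.pow_left m (Nat.coprime_comm.mp hcop)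
  -- pointwise nonnegativity of 1 - G d for all d
  have h0 : ∀ d : ℕ, 0 ≤ 1 - G d := by
    intro d
    rw [hG d]
    split_ifs with h
    · have hQ1 : (1 : ℝ) ≤ (q : ℝ) ^ orderOf (q : ZMod d) :=
        one_le_pow₀ (by exact_mod_cast (by omega : 1 ≤ q))
      have ht0 : (0 : ℝ) < ((q : ℝ) ^ orderOf (q : ZMod d))⁻¹ := by positivity
      have ht1 : ((q : ℝ) ^ orderOf (q : ZMod d))⁻¹ ≤ 1 := inv_le_one_of_one_le₀ hQ1
      have := pow_le_one₀ (by linarith : (0:ℝ) ≤ 1 - ((q : ℝ) ^ orderOf (q : ZMod d))⁻¹)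
        (by linarith) (n := d.totient / orderOf (q : ZMod d))
      linarith
    · norm_num
  -- main key bounds
  have key : ∀ d : ℕ, 1 ≤ d → Nat.gcd d p = 1 →
      0 ≤ 1 - G d ∧
      1 - G d ≤ (d.totient : ℝ) /
        ((q : ℝ) ^ orderOf (q : ZMod d) * (orderOf (q : ZMod d) : ℝ)) ∧
      (d.totient : ℝ) /
        ((q : ℝ) ^ orderOf (q : ZMod d) * (orderOf (q : ZMod d) : ℝ))
          ≤ Real.log q / Real.log (d + 1) := by
    intro d hd hcop
    obtain ⟨hepos, hdvd, hele⟩ := aux_ord q d hq2 (hcoprime d hcop) hd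
    set e := orderOf ((q : ℕ) : ZMod d) with he
    have hq1e : 2 ≤ q ^ e := Nat.one_lt_pow hepos.ne' hq2
    have hdle : d + 1 ≤ q ^ e := by
      have := Nat.le_of_dvd (by omega) hdvd
      omega
    have hQ2 : (2 : ℝ) ≤ (q : ℝ) ^ e := by exact_mod_cast hq1e
    have hQ0 : (0 : ℝ) < (q : ℝ) ^ e := by linarith
    have hE0 : (0 : ℝ) < (e : ℝ) := by exact_mod_cast hepos
    set t : ℝ := ((q : ℝ) ^ e)⁻¹ with htdef
    have ht0 : 0 < t := by positivity
    have ht1 : t ≤ 1 := inv_le_one_of_one_le₀ (by linarith)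
    have hGd : G d = (1 - t) ^ (d.totient / e) := by rw [hG d, if_pos hcop]
    set n : ℕ := d.totient / e with hn
    have hber : 1 - (n : ℝ) * t ≤ (1 - t) ^ n := by
      have h := one_add_mul_le_pow (a := -t) (by linarith) n
      rw [show (1 : ℝ) + -t = 1 - t from by ring] at h
      nlinarith [h]
    refine ⟨h0 d, ?_, ?_⟩
    · rw [hGd]
      have hnd : ((n : ℕ) : ℝ) ≤ (d.totient : ℝ) / e := by
        rw [hn]; exact Nat.cast_div_le
      calc 1 - (1 - t) ^ n ≤ (n : ℝ) * t := by linarith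
        _ ≤ ((d.totient : ℝ) / e) * t := mul_le_mul_of_nonneg_right hnd ht0.le
        _ = (d.totient : ℝ) / ((q : ℝ) ^ e * (e : ℝ)) := by
            rw [htdef]; ring
    · have hlogq : 0 < Real.log q :=
        Real.log_pos (by exact_mod_cast (by omega : 1 < q))
      have hd1 : (2 : ℝ) ≤ (d : ℝ) + 1 := by
        have : (1 : ℝ) ≤ (d : ℝ) := by exact_mod_cast hd
        linarith
      have hlogd : 0 < Real.log ((d : ℝ) + 1) := Real.log_pos (by linarith)
      have hdQ : (d : ℝ) + 1 ≤ (q : ℝ) ^ e := by exact_mod_cast hdle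
      have hlogle : Real.log ((d : ℝ) + 1) ≤ (e : ℝ) * Real.log q := by
        calc Real.log ((d : ℝ) + 1) ≤ Real.log ((q : ℝ) ^ e) :=
              Real.log_le_log (by linarith) hdQ
          _ = (e : ℝ) * Real.log q := Real.log_pow (q : ℝ) e
      have hφ : (d.totient : ℝ) ≤ (q : ℝ) ^ e := by
        have h1 : (d.totient : ℝ) ≤ (d : ℝ) := by exact_mod_cast Nat.totient_le d
        linarith
      calc (d.totient : ℝ) / ((q : ℝ) ^ e * (e : ℝ))
          ≤ ((q : ℝ) ^ e) / ((q : ℝ) ^ e * (e : ℝ)) := by gcongr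
        _ = 1 / (e : ℝ) := by field_simp
        _ ≤ Real.log q / Real.log ((d : ℝ) + 1) := by
            rw [div_le_div_iff₀ hE0 hlogd]
            nlinarith [hlogle]
  refine ⟨key, ?_, ?_⟩
  · -- tendsto
    have hbound : ∀ d : ℕ, 1 - G d ≤ Real.log q / Real.log ((d : ℝ) + 1) := by
      intro d
      rcases Nat.eq_zero_or_pos d with rfl | hd
      · have : G 0 = 1 := by
          rw [hG 0]
          rw [if_neg (by simpa using hp.ne_one)]
        simp [this]
      · by_cases hcop : Nat.gcd d p = 1
        · exact ((key d hd hcop).2.1).trans ((key d hd hcop).2.2)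
        · have : G d = 1 := by rw [hG d, if_neg hcop]
          rw [this]
          have hlogq : 0 ≤ Real.log q := Real.log_nonneg (by exact_mod_cast (by omega : 1 ≤ q))
          have hlogd : 0 ≤ Real.log ((d : ℝ) + 1) := Real.log_nonneg (by
            have : (1 : ℝ) ≤ (d : ℝ) := by exact_mod_cast hd
            linarith)
          simpa using div_nonneg hlogq hlogd
    have htend : Tendsto (fun d : ℕ => Real.log q / Real.log ((d : ℝ) + 1)) atTop (nhds 0) := by
      have h1 : Tendsto (fun d : ℕ => Real.log ((d : ℝ) + 1)) atTop atTop :=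
        Real.tendsto_log_atTop.comp
          (tendsto_atTop_add_const_right _ 1 tendsto_natCast_atTop_atTop)
      have h2 := h1.inv_tendsto_atTop
      have := h2.const_mul (Real.log q)
      simpa [div_eq_mul_inv, Function.comp] using this
    have hsq : Tendsto (fun d : ℕ => 1 - G d) atTop (nhds 0) :=
      squeeze_zero h0 hbound htend
    have := tendsto_const_nhds (x := (1 : ℝ)) (f := atTop (α := ℕ)) |>.sub hsq
    simpa using this
  · -- summable
    set s : ℝ := Real.sqrt q with hs
    have hs1 : 1 < s := by
      rw [hs, show (1:ℝ) = Real.sqrt 1 by rw [Real.sqrt_one]]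
      exact Real.sqrt_lt_sqrt (by norm_num) (by exact_mod_cast (by omega : 1 < q))
    have hs0 : 0 < s := by linarith
    set r : ℝ := s⁻¹ with hrdef
    have hr0 : 0 ≤ r := by positivity
    have hr1 : r < 1 := by rw [hrdef]; exact inv_lt_one_of_one_lt₀ hs1
    have hsq2 : s ^ 2 = (q : ℝ) := Real.sq_sqrt (by positivity)
    have hfnn : ∀ d : ℕ, 0 ≤ (1 - G d) / (d : ℝ) := fun d =>
      div_nonneg (h0 d) (Nat.cast_nonneg d)
    apply summable_of_sum_range_le (c := 2 * (1 - r)⁻¹) hfnn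
    intro N
    set S : Finset ℕ := (Finset.range N).filter (fun d => Nat.gcd d p = 1 ∧ 1 ≤ d) with hS
    have hstep1 : ∑ d ∈ Finset.range N, (1 - G d) / (d : ℝ) =
        ∑ d ∈ S, (1 - G d) / (d : ℝ) := by
      rw [hS]
      refine (Finset.sum_filter_of_ne ?_).symm
      intro d _ hne
      constructor
      · by_contra hcop
        apply hne
        rw [hG d, if_neg hcop]
        simp
      · by_contra hd
        apply hne
        have : d = 0 := by omega
        simp [this]
    rw [hstep1]
    have hstep2 : ∑ d ∈ S, (1 - G d) / (d : ℝ) ≤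
        ∑ d ∈ S, ((q : ℝ) ^ orderOf ((q : ℕ) : ZMod d))⁻¹ := by
      apply Finset.sum_le_sum
      intro d hd
      rw [hS, Finset.mem_filter] at hd
      obtain ⟨_, hcop, hd1⟩ := hd
      obtain ⟨hepos, hdvd, _⟩ := aux_ord q d hq2 (hcoprime d hcop) hd1
      set e := orderOf ((q : ℕ) : ZMod d) with he
      have hQ0 : (0 : ℝ) < (q : ℝ) ^ e := by positivity
      have hE1 : (1 : ℝ) ≤ (e : ℝ) := by exact_mod_cast hepos
      have hd0 : (0 : ℝ) < (d : ℝ) := by exact_mod_cast hd1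
      have h1 := (key d hd1 hcop).2.1
      have h2 : (d.totient : ℝ) / ((q : ℝ) ^ e * (e : ℝ)) ≤ (d : ℝ) / ((q : ℝ) ^ e) := by
        have hφ : (d.totient : ℝ) ≤ (d : ℝ) := by exact_mod_cast Nat.totient_le d
        calc (d.totient : ℝ) / ((q : ℝ) ^ e * (e : ℝ))
            ≤ (d : ℝ) / ((q : ℝ) ^ e * 1) := by gcongr
          _ = (d : ℝ) / ((q : ℝ) ^ e) := by rw [mul_one]
      have h3 : 1 - G d ≤ (d : ℝ) / ((q : ℝ) ^ e) := h1.trans h2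
      rw [div_le_iff₀ hd0] at *
      calc 1 - G d ≤ (d : ℝ) / ((q : ℝ) ^ e) := h3
        _ = ((q : ℝ) ^ e)⁻¹ * (d : ℝ) := by ring
    refine hstep2.trans ?_
    have hmaps : ∀ d ∈ S, orderOf ((q : ℕ) : ZMod d) ∈ Finset.range N := by
      intro d hd
      rw [hS, Finset.mem_filter] at hd
      obtain ⟨hdN, hcop, hd1⟩ := hd
      obtain ⟨_, _, hele⟩ := aux_ord q d hq2 (hcoprime d hcop) hd1
      rw [Finset.mem_range] at hdN ⊢
      have := Nat.totient_le d
      omega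
    rw [← Finset.sum_fiberwise_of_maps_to hmaps
      (fun d => ((q : ℝ) ^ orderOf ((q : ℕ) : ZMod d))⁻¹)]
    have hinner : ∀ e ∈ Finset.range N,
        ∑ d ∈ S.filter (fun d => orderOf ((q : ℕ) : ZMod d) = e),
          ((q : ℝ) ^ orderOf ((q : ℕ) : ZMod d))⁻¹ ≤ 2 * r ^ e := by
      intro e _
      set T := S.filter (fun d => orderOf ((q : ℕ) : ZMod d) = e) with hT
      have hTsub : T ⊆ (q ^ e - 1).divisors := by
        intro d hd
        rw [hT, Finset.mem_filter, hS, Finset.mem_filter] at hd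
        obtain ⟨⟨_, hcop, hd1⟩, horde⟩ := hd
        obtain ⟨hepos, hdvd, _⟩ := aux_ord q d hq2 (hcoprime d hcop) hd1
        rw [horde] at hdvd hepos
        have : 2 ≤ q ^ e := Nat.one_lt_pow (by omega) hq2
        exact Nat.mem_divisors.mpr ⟨hdvd, by omega⟩
      have hcard : T.card ≤ 2 * Nat.sqrt (q ^ e - 1) :=
        (Finset.card_le_card hTsub).trans (aux_card_divisors _)
      have hsum : ∑ d ∈ T, ((q : ℝ) ^ orderOf ((q : ℕ) : ZMod d))⁻¹
          = T.card * ((q : ℝ) ^ e)⁻¹ := by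
        calc ∑ d ∈ T, ((q : ℝ) ^ orderOf ((q : ℕ) : ZMod d))⁻¹
            = ∑ _d ∈ T, ((q : ℝ) ^ e)⁻¹ := by
              refine Finset.sum_congr rfl (fun d hd => ?_)
              rw [hT, Finset.mem_filter] at hd
              rw [hd.2]
          _ = T.card * ((q : ℝ) ^ e)⁻¹ := by rw [Finset.sum_const, nsmul_eq_mul]
      rw [hsum]
      have hsqle : (Nat.sqrt (q ^ e - 1) : ℝ) ≤ s ^ e := by
        refine (pow_le_pow_iff_left₀ (by positivity) (by positivity) two_ne_zero).mp ?_
        have h1 : (Nat.sqrt (q ^ e - 1)) ^ 2 ≤ q ^ e - 1 := Nat.sqrt_le' _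
        have h2 : ((Nat.sqrt (q ^ e - 1)) : ℝ) ^ 2 ≤ ((q ^ e - 1 : ℕ) : ℝ) := by
          exact_mod_cast h1
        have h3 : ((q ^ e - 1 : ℕ) : ℝ) ≤ (q : ℝ) ^ e := by
          have : (q ^ e - 1 : ℕ) ≤ q ^ e := by omega
          exact_mod_cast this
        have h4 : (s ^ e) ^ 2 = (q : ℝ) ^ e := by
          rw [← pow_mul, mul_comm, pow_mul, hsq2]
        linarith
      have hQe : ((q : ℝ) ^ e) = (s ^ e) ^ 2 := by rw [← pow_mul, mul_comm, pow_mul, hsq2]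
      have hse : (0 : ℝ) < s ^ e := by positivity
      calc (T.card : ℝ) * ((q : ℝ) ^ e)⁻¹
          ≤ (2 * s ^ e) * ((q : ℝ) ^ e)⁻¹ := by
            apply mul_le_mul_of_nonneg_right _ (by positivity)
            calc (T.card : ℝ) ≤ (2 * Nat.sqrt (q ^ e - 1) : ℕ) := by exact_mod_cast hcard
              _ = 2 * (Nat.sqrt (q ^ e - 1) : ℝ) := by push_cast; ring
              _ ≤ 2 * s ^ e := by linarith
        _ = 2 * r ^ e := by
            rw [hQe, hrdef, inv_pow]
            field_simp
    calc ∑ e ∈ Finset.range N, ∑ d ∈ S.filter (fun d => orderOf ((q : ℕ) : ZMod d) = e),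
          ((q : ℝ) ^ orderOf ((q : ℕ) : ZMod d))⁻¹
        ≤ ∑ e ∈ Finset.range N, 2 * r ^ e := Finset.sum_le_sum hinner
      _ = 2 * ∑ e ∈ Finset.range N, r ^ e := by rw [Finset.mul_sum]
      _ ≤ 2 * (1 - r)⁻¹ := by
          have h1 : ∑ e ∈ Finset.range N, r ^ e ≤ ∑' e : ℕ, r ^ e :=
            Summable.sum_le_tsum _ (fun i _ => by positivity)
              (summable_geometric_of_lt_one hr0 hr1)
          rw [tsum_geometric_of_lt_one hr0 hr1] at h1
          linarith
end

section
/- Let q ≥ 4 be a power of a prime p, and let μ̄_q = lim_{x→∞} (1/x) ∑_{n ≤ x} μ_q(n) be the mean value of μ_q(n), where μ_q(n) = ∏_{d | n} G_q(d) with G_q(d) = (1 − q^{−e_q(d)})^{φ(d)/e_q(d)} if gcd(d, p) = 1 and G_q(d) = 1 otherwise. Then 1 − 1/q − 1/√q < μ̄_q ≤ 1 − 1/q. -/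
open Filter Finset

def Qf (n : ℕ) : ℕ := ∑ d ∈ n.divisors, Nat.totient d * (n / d)

def PhiAF : ArithmeticFunction ℕ := ⟨fun n => Nat.totient n, by simp⟩

lemma Qf_apply_eq (n : ℕ) : (PhiAF * ArithmeticFunction.id) n = Qf n := by
  rw [ArithmeticFunction.mul_apply]
  have h : ∀ x : ℕ × ℕ, PhiAF x.1 * ArithmeticFunction.id x.2 = Nat.totient x.1 * x.2 :=
    fun x => rfl
  simp only [h]
  rw [Nat.sum_divisorsAntidiagonal (fun d e => Nat.totient d * e)]
  rfl

lemma Qf_mul {a b : ℕ} (h : Nat.Coprime a b) : Qf (a * b) = Qf a * Qf b := by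
  have hFm : PhiAF.IsMultiplicative :=
    ⟨by show Nat.totient 1 = 1; simp, fun h => by show Nat.totient _ = Nat.totient _ * Nat.totient _; exact Nat.totient_mul h⟩
  have := (hFm.mul ArithmeticFunction.isMultiplicative_id).map_mul_of_coprime h
  rwa [Qf_apply_eq, Qf_apply_eq, Qf_apply_eq] at this

lemma Qf_one : Qf 1 = 1 := by decide

lemma Qf_prime_pow {p : ℕ} (hp : p.Prime) (a : ℕ) :
    Qf (p ^ (a + 1)) = p ^ a * (p + (a + 1) * (p - 1)) := by
  have h2 := hp.two_le
  induction a with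
  | zero =>
    simp only [Qf, Nat.sum_divisors_prime_pow hp, pow_one]
    rw [Finset.sum_range_succ, Finset.sum_range_succ, Finset.sum_range_zero]
    simp only [zero_add, pow_zero, pow_one, Nat.totient_one, Nat.totient_prime hp, one_mul,
      Nat.div_one, Nat.div_self hp.pos, mul_one]
  | succ a ih =>
    have key : Qf (p ^ (a + 2)) = Nat.totient (p ^ (a + 2)) + p * Qf (p ^ (a + 1)) := by
      simp only [Qf, Nat.sum_divisors_prime_pow hp]
      rw [show a + 2 + 1 = (a + 1 + 1) + 1 by omega, Finset.sum_range_succ]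
      have hcong : ∀ i ∈ Finset.range (a + 1 + 1),
          Nat.totient (p ^ i) * (p ^ (a + 2) / p ^ i)
            = p * (Nat.totient (p ^ i) * (p ^ (a + 1) / p ^ i)) := by
        intro i hi
        simp only [Finset.mem_range] at hi
        rw [Nat.pow_div (by omega) hp.pos, Nat.pow_div (by omega) hp.pos]
        rw [show a + 2 - i = (a + 1 - i) + 1 by omega, pow_succ]
        ring
      rw [Finset.sum_congr rfl hcong, ← Finset.mul_sum]
      rw [show a + 1 + 1 = a + 2 by omega]
      rw [Nat.div_self (pow_pos hp.pos _), mul_one]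
      omega
    rw [key, ih, Nat.totient_prime_pow hp (by omega)]
    rw [show a + 2 - 1 = a + 1 by omega]
    ring

lemma keysub (p X : ℕ) (hp : 3 ≤ p) (hX : 2 * p ≤ X + 1) : (X + (p - 1)) ^ 2 ≤ p * X ^ 2 := by
  obtain ⟨t, rfl⟩ : ∃ t, p = t + 1 := ⟨p - 1, by omega⟩
  simp only [Nat.add_sub_cancel]
  nlinarith [sq_nonneg X, sq_nonneg t]

lemma L1 (p : ℕ) (hp : 3 ≤ p) : ∀ a, 1 ≤ a → (p + a * (p - 1)) ^ 2 ≤ p ^ (a + 2) := by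
  intro a
  induction a with
  | zero => omega
  | succ a ih =>
    intro _
    rcases Nat.eq_zero_or_pos a with rfl | ha
    · obtain ⟨t, rfl⟩ : ∃ t, p = t + 2 := ⟨p - 2, by omega⟩
      rw [show t + 2 - 1 = t + 1 from rfl]
      ring_nf
      nlinarith [sq_nonneg t]
    · have h1 := ih ha
      have h2 : p + (a + 1) * (p - 1) = (p + a * (p - 1)) + (p - 1) := by ring
      rw [h2]
      calc ((p + a * (p - 1)) + (p - 1)) ^ 2 ≤ p * (p + a * (p - 1)) ^ 2 :=
            keysub p _ hp (by
              have h3 : 1 * (p - 1) ≤ a * (p - 1) := Nat.mul_le_mul_right _ ha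
              omega)
        _ ≤ p * p ^ (a + 2) := by exact Nat.mul_le_mul_left p h1
        _ = p ^ (a + 1 + 2) := by ring

lemma L2 (p : ℕ) (hp : 3 ≤ p) : ∀ a, (5 ≤ p ∧ 1 ≤ a) ∨ (p = 3 ∧ 2 ≤ a) →
    9 * (p + a * (p - 1)) ^ 2 ≤ 8 * p ^ (a + 2) := by
  intro a
  induction a with
  | zero => omega
  | succ a ih =>
    intro h
    rcases Nat.eq_zero_or_pos a with rfl | ha
    · -- a + 1 = 1, so we're in the case 5 ≤ p
      obtain ⟨t, rfl⟩ : ∃ t, p = t + 5 := ⟨p - 5, by omega⟩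
      rw [show t + 5 - 1 = t + 4 from rfl]
      ring_nf
      nlinarith [sq_nonneg t, t.zero_le]
    · -- step from a ≥ 1, unless a = 1 and p = 3 (base of 3-branch)
      by_cases hbase : p = 3 ∧ a = 1
      · obtain ⟨rfl, rfl⟩ := hbase
        norm_num
      · have hprev : (5 ≤ p ∧ 1 ≤ a) ∨ (p = 3 ∧ 2 ≤ a) := by
          rcases h with ⟨h5, _⟩ | ⟨h3, h2⟩
          · exact Or.inl ⟨h5, ha⟩
          · right
            refine ⟨h3, ?_⟩
            rcases Nat.lt_or_ge a 2 with h | h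
            · exfalso; exact hbase ⟨h3, by omega⟩
            · exact h
        have h1 := ih hprev
        have h2 : p + (a + 1) * (p - 1) = (p + a * (p - 1)) + (p - 1) := by ring
        rw [h2]
        have hkey : ((p + a * (p - 1)) + (p - 1)) ^ 2 ≤ p * (p + a * (p - 1)) ^ 2 :=
          keysub p _ hp (by
            have h3 : 1 * (p - 1) ≤ a * (p - 1) := Nat.mul_le_mul_right _ ha
            omega)
        calc 9 * ((p + a * (p - 1)) + (p - 1)) ^ 2 ≤ 9 * (p * (p + a * (p - 1)) ^ 2) :=
              Nat.mul_le_mul_left _ hkey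
          _ = p * (9 * (p + a * (p - 1)) ^ 2) := by ring
          _ ≤ p * (8 * p ^ (a + 2)) := Nat.mul_le_mul_left _ h1
          _ = 8 * p ^ (a + 1 + 2) := by ring

lemma L3 : ∀ a, 2 ≤ a → (a + 2) ^ 2 ≤ 2 ^ (a + 2) := by
  intro a
  induction a with
  | zero => omega
  | succ a ih =>
    intro h2
    rcases Nat.lt_or_ge a 2 with h | h
    · have : a = 1 := by omega
      subst this
      norm_num
    · have h1 := ih h
      calc (a + 1 + 2) ^ 2 ≤ 2 * (a + 2) ^ 2 := by nlinarith
        _ ≤ 2 * 2 ^ (a + 2) := Nat.mul_le_mul_left _ h1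
        _ = 2 ^ (a + 1 + 2) := by ring

lemma pp1 {p a : ℕ} (hp : p.Prime) (hodd : p ≠ 2) (ha : 1 ≤ a) : Qf (p ^ a) ^ 2 ≤ (p ^ a) ^ 3 := by
  have hp3 : 3 ≤ p := by
    have := hp.two_le
    rcases Nat.lt_or_ge p 3 with h | h
    · interval_cases p <;> simp_all
    · exact h
  obtain ⟨b, rfl⟩ : ∃ b, a = b + 1 := ⟨a - 1, by omega⟩
  rw [Qf_prime_pow hp]
  calc (p ^ b * (p + (b + 1) * (p - 1))) ^ 2 = p ^ (2 * b) * (p + (b + 1) * (p - 1)) ^ 2 := by ring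
    _ ≤ p ^ (2 * b) * p ^ (b + 1 + 2) := Nat.mul_le_mul_left _ (L1 p hp3 (b + 1) (by omega))
    _ = (p ^ (b + 1)) ^ 3 := by ring

lemma pp2 {p a : ℕ} (hp : p.Prime) (hodd : p ≠ 2) (ha : 1 ≤ a) (h3 : p ^ a ≠ 3) :
    9 * Qf (p ^ a) ^ 2 ≤ 8 * (p ^ a) ^ 3 := by
  have hp3 : 3 ≤ p := by
    have := hp.two_le
    rcases Nat.lt_or_ge p 3 with h | h
    · interval_cases p <;> simp_all
    · exact h
  obtain ⟨b, rfl⟩ : ∃ b, a = b + 1 := ⟨a - 1, by omega⟩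
  have hcase : (5 ≤ p ∧ 1 ≤ b + 1) ∨ (p = 3 ∧ 2 ≤ b + 1) := by
    rcases Nat.lt_or_ge p 5 with h | h
    · have hp4 : p = 3 ∨ p = 4 := by omega
      have hp' : p = 3 := by
        rcases hp4 with h' | h'
        · exact h'
        · exfalso; rw [h'] at hp; norm_num at hp
      subst hp'
      right
      refine ⟨rfl, ?_⟩
      rcases Nat.eq_zero_or_pos b with rfl | hb
      · exfalso; exact h3 (by norm_num)
      · omega
    · exact Or.inl ⟨h, by omega⟩
  rw [Qf_prime_pow hp]
  calc 9 * (p ^ b * (p + (b + 1) * (p - 1))) ^ 2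
      = p ^ (2 * b) * (9 * (p + (b + 1) * (p - 1)) ^ 2) := by ring
    _ ≤ p ^ (2 * b) * (8 * p ^ (b + 1 + 2)) := Nat.mul_le_mul_left _ (L2 p hp3 (b + 1) hcase)
    _ = 8 * (p ^ (b + 1)) ^ 3 := by ring

lemma pp3 {a : ℕ} (ha : 2 ≤ a) : Qf (2 ^ a) ^ 2 ≤ (2 ^ a) ^ 3 := by
  obtain ⟨b, rfl⟩ : ∃ b, a = b + 1 := ⟨a - 1, by omega⟩
  rw [Qf_prime_pow Nat.prime_two]
  have h21 : (2 : ℕ) - 1 = 1 := rfl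
  rw [h21, mul_one]
  calc (2 ^ b * (2 + (b + 1))) ^ 2 = 2 ^ (2 * b) * (b + 1 + 2) ^ 2 := by ring_nf
    _ ≤ 2 ^ (2 * b) * 2 ^ (b + 1 + 2) := Nat.mul_le_mul_left _ (L3 (b + 1) (by omega))
    _ = (2 ^ (b + 1)) ^ 3 := by ring

lemma Qf_two : Qf 2 = 3 := by decide
lemma Qf_three : Qf 3 = 5 := by decide

lemma odd_main : ∀ k : ℕ, (¬ 2 ∣ k → Qf k ^ 2 ≤ k ^ 3) ∧
    (¬ 2 ∣ k → k ≠ 1 → k ≠ 3 → 9 * Qf k ^ 2 ≤ 8 * k ^ 3) := by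
  intro k
  induction k using Nat.recOnPosPrimePosCoprime with
  | prime_pow p n hpp hn =>
    have hp' : p.Prime := hpp
    by_cases h2 : p = 2
    · subst h2
      constructor
      · intro hnd; exact absurd (dvd_pow_self 2 (by omega)) hnd
      · intro hnd _ _; exact absurd (dvd_pow_self 2 (by omega)) hnd
    · constructor
      · intro _; exact pp1 hp' h2 hn
      · intro _ _ h3; exact pp2 hp' h2 hn h3
  | zero =>
    constructor
    · intro hnd; exact absurd (dvd_zero 2) hnd
    · intro hnd; exact absurd (dvd_zero 2) hnd
  | one =>
    constructor
    · intro _; rw [Qf_one]; norm_num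
    · intro _ h1; exact absurd rfl h1
  | coprime a b ha hb hab iha ihb =>
    constructor
    · intro hnd
      have hna : ¬ 2 ∣ a := fun h => hnd (h.mul_right b)
      have hnb : ¬ 2 ∣ b := fun h => hnd (h.mul_left a)
      rw [Qf_mul hab]
      calc (Qf a * Qf b) ^ 2 = Qf a ^ 2 * Qf b ^ 2 := by ring
        _ ≤ a ^ 3 * b ^ 3 := Nat.mul_le_mul (iha.1 hna) (ihb.1 hnb)
        _ = (a * b) ^ 3 := by ring
    · intro hnd _ _
      have hna : ¬ 2 ∣ a := fun h => hnd (h.mul_right b)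
      have hnb : ¬ 2 ∣ b := fun h => hnd (h.mul_left a)
      rw [Qf_mul hab]
      by_cases ha3 : a = 3
      · subst ha3
        have hb3 : b ≠ 3 := by
          intro h; rw [h] at hab; norm_num [Nat.Coprime] at hab
        have h1 := ihb.2 hnb (by omega) hb3
        rw [Qf_three]
        calc 9 * (5 * Qf b) ^ 2 = 25 * (9 * Qf b ^ 2) := by ring
          _ ≤ 25 * (8 * b ^ 3) := Nat.mul_le_mul_left _ h1
          _ ≤ 8 * (3 * b) ^ 3 := by ring_nf; nlinarith [pow_pos (by omega : 0 < b) 3]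
      · have h1 := iha.2 hna (by omega) ha3
        have h2 := ihb.1 hnb
        calc 9 * (Qf a * Qf b) ^ 2 = (9 * Qf a ^ 2) * Qf b ^ 2 := by ring
          _ ≤ (8 * a ^ 3) * b ^ 3 := Nat.mul_le_mul h1 h2
          _ = 8 * (a * b) ^ 3 := by ring

lemma main23 {m : ℕ} (h1 : 1 ≤ m) (h2 : m ≠ 2) (h6 : m ≠ 6) : Qf m ^ 2 ≤ m ^ 3 := by
  have hm0 : m ≠ 0 := by omega
  set a := m.factorization 2 with ha
  have hsplit : 2 ^ a * (m / 2 ^ a) = m := Nat.ordProj_mul_ordCompl_eq_self m 2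
  set k := m / 2 ^ a with hk
  have hkodd : ¬ 2 ∣ k := Nat.not_dvd_ordCompl Nat.prime_two hm0
  have hcop : Nat.Coprime (2 ^ a) k :=
    Nat.Coprime.pow_left a (Nat.coprime_ordCompl Nat.prime_two hm0)
  rcases Nat.lt_or_ge a 2 with haa | haa
  · interval_cases a
    · -- a = 0 : m = k odd
      have : m = k := by omega
      rw [this]
      exact (odd_main k).1 hkodd
    · -- a = 1 : m = 2k
      have hm : m = 2 * k := by rw [← hsplit]; ring
      have hk1 : k ≠ 1 := by intro h; rw [h] at hm; omega
      have hk3 : k ≠ 3 := by intro h; rw [h] at hm; omega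
      have h := (odd_main k).2 hkodd hk1 hk3
      rw [hm, Qf_mul (by simpa using hcop), Qf_two]
      calc (3 * Qf k) ^ 2 = 9 * Qf k ^ 2 := by ring
        _ ≤ 8 * k ^ 3 := h
        _ = (2 * k) ^ 3 := by ring
  · rw [← hsplit, Qf_mul hcop]
    calc (Qf (2 ^ a) * Qf k) ^ 2 = Qf (2 ^ a) ^ 2 * Qf k ^ 2 := by ring
      _ ≤ (2 ^ a) ^ 3 * k ^ 3 := Nat.mul_le_mul (pp3 haa) ((odd_main k).1 hkodd)
      _ = (2 ^ a * k) ^ 3 := by ring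

lemma weier (s : Finset ℕ) (f : ℕ → ℝ) (h0 : ∀ i ∈ s, 0 ≤ f i) (h1 : ∀ i ∈ s, f i ≤ 1) :
    1 - ∑ i ∈ s, (1 - f i) ≤ ∏ i ∈ s, f i := by
  classical
  induction s using Finset.cons_induction with
  | empty => simp
  | cons a s ha ih =>
    rw [Finset.prod_cons, Finset.sum_cons]
    have hfa0 : 0 ≤ f a := h0 a (Finset.mem_cons_self a s)
    have hfa1 : f a ≤ 1 := h1 a (Finset.mem_cons_self a s)
    have IH : 1 - ∑ i ∈ s, (1 - f i) ≤ ∏ i ∈ s, f i :=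
      ih (fun i hi => h0 i (Finset.mem_cons_of_mem hi))
        (fun i hi => h1 i (Finset.mem_cons_of_mem hi))
    have hS0 : 0 ≤ ∑ i ∈ s, (1 - f i) :=
      Finset.sum_nonneg fun i hi => by linarith [h1 i (Finset.mem_cons_of_mem hi)]
    have k1 : f a * (1 - ∑ i ∈ s, (1 - f i)) ≤ f a * ∏ i ∈ s, f i :=
      mul_le_mul_of_nonneg_left IH hfa0
    have k2 : f a * ∑ i ∈ s, (1 - f i) ≤ ∑ i ∈ s, (1 - f i) :=
      mul_le_of_le_one_left hS0 hfa1
    nlinarith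

lemma geom2 (n : ℕ) {r : ℝ} (h0 : 0 ≤ r) (hr : r ≤ 1/2) : ∑ i ∈ Finset.range n, r ^ i ≤ 2 :=
  le_trans (Finset.sum_le_sum fun i _ => pow_le_pow_left₀ h0 (by linarith) i)
    (sum_geometric_two_le n)

lemma sum_phi_div_eq (m : ℕ) (hm : m ≠ 0) :
    ∑ d ∈ m.divisors, (Nat.totient d : ℝ) / d = (Qf m : ℝ) / m := by
  rw [Qf, Nat.cast_sum, Finset.sum_div]
  refine Finset.sum_congr rfl fun d hd => ?_
  obtain ⟨hdvd, -⟩ := Nat.mem_divisors.mp hd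
  have hd0 : (d : ℝ) ≠ 0 := by
    have := Nat.pos_of_mem_divisors hd
    positivity
  have hm0 : (m : ℝ) ≠ 0 := Nat.cast_ne_zero.mpr hm
  rw [Nat.cast_mul, Nat.cast_div_charZero hdvd]
  field_simp
lemma Qf_le_sqrt {m : ℕ} (h1 : 1 ≤ m) (h2 : m ≠ 2) (h6 : m ≠ 6) :
    (Qf m : ℝ) ≤ m * Real.sqrt m := by
  have hkey : (Qf m : ℝ) ^ 2 ≤ (m * Real.sqrt m) ^ 2 := by
    have hsq : Real.sqrt m ^ 2 = m := Real.sq_sqrt (by positivity)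
    have : (m * Real.sqrt m) ^ 2 = (m : ℝ) ^ 3 := by
      rw [mul_pow, hsq]; ring
    rw [this]
    calc (Qf m : ℝ) ^ 2 = ((Qf m ^ 2 : ℕ) : ℝ) := by push_cast; ring
      _ ≤ ((m ^ 3 : ℕ) : ℝ) := Nat.cast_le.mpr (main23 h1 h2 h6)
      _ = (m : ℝ) ^ 3 := by push_cast; ring
  have h0 : (0 : ℝ) ≤ m * Real.sqrt m := by positivity
  nlinarith [Nat.cast_nonneg (α := ℝ) (Qf m)]

lemma zmod_facts {p mm q : ℕ} (hp : p.Prime) (hq : q = p ^ mm) (hq4 : 4 ≤ q) {d : ℕ}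
    (hd2 : 2 ≤ d) (hgcd : Nat.gcd d p = 1) :
    1 ≤ orderOf ((q : ℕ) : ZMod d) ∧ orderOf ((q : ℕ) : ZMod d) ∣ d.totient ∧
      d ∣ q ^ orderOf ((q : ℕ) : ZMod d) - 1 := by
  haveI : NeZero d := ⟨by omega⟩
  have hcop : Nat.Coprime q d := by
    rw [hq]
    exact Nat.Coprime.pow_left mm (Nat.coprime_comm.mp hgcd)
  set u := ZMod.unitOfCoprime q hcop with hu_def
  have hu : ((u : (ZMod d)ˣ) : ZMod d) = ((q : ℕ) : ZMod d) := ZMod.coe_unitOfCoprime q hcop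
  have hord : orderOf ((q : ℕ) : ZMod d) = orderOf u := by rw [← hu, orderOf_units]
  have hpos : 0 < orderOf u := orderOf_pos u
  refine ⟨by rw [hord]; omega, ?_, ?_⟩
  · rw [hord, ← ZMod.card_units_eq_totient d]
    exact orderOf_dvd_card
  · have hpow : ((q : ℕ) : ZMod d) ^ orderOf ((q : ℕ) : ZMod d) = 1 := pow_orderOf_eq_one _
    have h1 : (1 : ℕ) ≤ q ^ orderOf ((q : ℕ) : ZMod d) := Nat.one_le_pow _ _ (by omega)
    have hz : ((q ^ orderOf ((q : ℕ) : ZMod d) - 1 : ℕ) : ZMod d) = 0 := by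
      rw [Nat.cast_sub h1, Nat.cast_pow, hpow, Nat.cast_one, sub_self]
    exact (ZMod.natCast_eq_zero_iff _ _).mp hz
set_option maxHeartbeats 1000000 in
lemma main_sum_bound (p mm q : ℕ) (hp : p.Prime) (hq : q = p ^ mm) (hq4 : 4 ≤ q)
    (G : ℕ → ℝ)
    (hG : ∀ d : ℕ, G d = if Nat.gcd d p = 1 then
      (1 - ((q : ℝ) ^ orderOf ((q : ℕ) : ZMod d))⁻¹) ^ (d.totient / orderOf ((q : ℕ) : ZMod d))
      else 1)
    (N : ℕ) (hN : 1 ≤ N) :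
    ∑ d ∈ Finset.Icc 1 N, (1 - G d) / d
      ≤ 1 / (q : ℝ) + (Real.sqrt q - 1) / q + 5 / (6 * q) := by
  have hq4' : (4 : ℝ) ≤ (q : ℝ) := by exact_mod_cast hq4
  have hq0 : (0 : ℝ) < q := by linarith
  have hsq : Real.sqrt q * Real.sqrt q = q := Real.mul_self_sqrt (by positivity)
  set s : ℝ := Real.sqrt q with hs_def
  have hs0 : 0 < s := Real.sqrt_pos.mpr hq0
  have hsq2 : (2 : ℝ) ≤ s := by nlinarith
  set r : ℝ := s⁻¹ with hr_def
  have hr0 : (0 : ℝ) ≤ r := by positivity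
  have hr2 : r ≤ 1 / 2 := by
    rw [hr_def, show (1 : ℝ) / 2 = 2⁻¹ by norm_num]
    exact inv_anti₀ (by norm_num) hsq2
  have hr2q : r ^ 2 = (q : ℝ)⁻¹ := by
    rw [hr_def, inv_pow, sq, hsq]
  -- G 1
  have hG1 : G 1 = 1 - (q : ℝ)⁻¹ := by
    rw [hG 1, if_pos (Nat.gcd_one_left p)]
    have h1 : ((q : ℕ) : ZMod 1) = 1 := Subsingleton.elim _ _
    rw [h1, orderOf_one]
    norm_num [Nat.totient_one]
  -- split off d = 1
  have hIcc : Finset.Icc 1 N = insert 1 (Finset.Icc 2 N) := by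
    ext a; simp only [Finset.mem_Icc, Finset.mem_insert]; omega
  rw [hIcc, Finset.sum_insert (by simp [Finset.mem_Icc])]
  have hfirst : (1 - G 1) / ((1 : ℕ) : ℝ) = 1 / (q : ℝ) := by
    rw [hG1]; norm_num
  rw [hfirst]
  have hrest : ∑ d ∈ Finset.Icc 2 N, (1 - G d) / d ≤ (s - 1) / q + 5 / (6 * q) := by
    rw [← Finset.sum_filter_add_sum_filter_not (Finset.Icc 2 N) (fun d => Nat.gcd d p = 1)]
    have hzero : ∑ d ∈ (Finset.Icc 2 N).filter (fun d => ¬ Nat.gcd d p = 1),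
        (1 - G d) / d = 0 := by
      apply Finset.sum_eq_zero
      intro d hd
      obtain ⟨-, hnc⟩ := Finset.mem_filter.mp hd
      rw [hG d, if_neg hnc]
      simp
    rw [hzero, add_zero]
    set B := (Finset.Icc 2 N).filter (fun d => Nat.gcd d p = 1) with hB_def
    set E : ℕ → ℕ := fun d => orderOf ((q : ℕ) : ZMod d) with hE_def
    have hBfacts : ∀ d ∈ B, 2 ≤ d ∧ Nat.gcd d p = 1 ∧ d ≤ N := by
      intro d hd
      obtain ⟨hd1, hd2⟩ := Finset.mem_filter.mp hd
      obtain ⟨ha, hb⟩ := Finset.mem_Icc.mp hd1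
      exact ⟨ha, hd2, hb⟩
    have hmaps : ∀ d ∈ B, E d ∈ Finset.Icc 1 N := by
      intro d hd
      obtain ⟨hd2, hgcd, hdN⟩ := hBfacts d hd
      obtain ⟨he1, hedvd, -⟩ := zmod_facts hp hq hq4 hd2 hgcd
      have htp : 0 < d.totient := Nat.totient_pos.mpr (by omega)
      have h1 : E d ≤ d.totient := Nat.le_of_dvd htp hedvd
      have h2 : d.totient ≤ d := Nat.totient_le d
      exact Finset.mem_Icc.mpr ⟨he1, by omega⟩
    rw [← Finset.sum_fiberwise_of_maps_to hmaps (fun d => (1 - G d) / d)]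
    have hfiber : ∀ e ∈ Finset.Icc 1 N,
        ∑ d ∈ B.filter (fun d => E d = e), (1 - G d) / d
          ≤ if e = 1 then (s - 1) / q else r ^ e * (e : ℝ)⁻¹ := by
      intro e he
      have he1 : 1 ≤ e := (Finset.mem_Icc.mp he).1
      have he0 : (0 : ℝ) < e := by exact_mod_cast he1
      have hqe1 : (1 : ℝ) ≤ (q : ℝ) ^ e := one_le_pow₀ (by linarith)
      have hm4 : 4 ≤ q ^ e := by
        calc 4 ≤ q := hq4
        _ = q ^ 1 := (pow_one q).symm
        _ ≤ q ^ e := Nat.pow_le_pow_right (by omega) he1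
      set M : ℕ := q ^ e - 1 with hM_def
      have hM0 : M ≠ 0 := by omega
      have hMpos : (0 : ℝ) < (M : ℝ) := by
        have : 1 ≤ M := by omega
        exact_mod_cast this
      -- step 1
      have hstep1 : ∑ d ∈ B.filter (fun d => E d = e), (1 - G d) / d
          ≤ ((Qf M : ℝ) / (M : ℝ) - 1) * ((e : ℝ)⁻¹ * ((q : ℝ) ^ e)⁻¹) := by
        have hpoint : ∀ d ∈ B.filter (fun d => E d = e),
            (1 - G d) / d ≤ (d.totient : ℝ) / d * ((e : ℝ)⁻¹ * ((q : ℝ) ^ e)⁻¹) := by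
          intro d hd
          obtain ⟨hdB, hEe⟩ := Finset.mem_filter.mp hd
          obtain ⟨hd2, hgcd, hdN⟩ := hBfacts d hdB
          obtain ⟨-, hedvd, -⟩ := zmod_facts hp hq hq4 hd2 hgcd
          have hEd : orderOf ((q : ℕ) : ZMod d) = e := hEe
          rw [hEd] at hedvd
          have hd0 : (0 : ℝ) < d := by
            have : (2:ℝ) ≤ d := by exact_mod_cast hd2
            linarith
          have hG_d : G d = (1 - ((q : ℝ) ^ e)⁻¹) ^ (d.totient / e) := by
            rw [hG d, if_pos hgcd, hEd]
          have hinv0 : (0 : ℝ) ≤ ((q : ℝ) ^ e)⁻¹ := by positivity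
          have hinv1 : ((q : ℝ) ^ e)⁻¹ ≤ 1 := inv_le_one_of_one_le₀ hqe1
          have hb := one_add_mul_le_pow (a := -((q : ℝ) ^ e)⁻¹) (by linarith) (d.totient / e)
          have h1G : 1 - G d ≤ ((d.totient / e : ℕ) : ℝ) * ((q : ℝ) ^ e)⁻¹ := by
            rw [hG_d]
            have : (1 + -((q : ℝ) ^ e)⁻¹) = (1 - ((q : ℝ) ^ e)⁻¹) := by ring
            rw [this] at hb
            nlinarith [hb]
          have hcast : ((d.totient / e : ℕ) : ℝ) = (d.totient : ℝ) / e :=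
            Nat.cast_div hedvd (by positivity)
          rw [hcast] at h1G
          calc (1 - G d) / d ≤ ((d.totient : ℝ) / e * ((q : ℝ) ^ e)⁻¹) / d :=
                (div_le_div_iff_of_pos_right hd0).mpr h1G
            _ = (d.totient : ℝ) / d * ((e : ℝ)⁻¹ * ((q : ℝ) ^ e)⁻¹) := by ring
        have hsub : B.filter (fun d => E d = e) ⊆ M.divisors.erase 1 := by
          intro d hd
          obtain ⟨hdB, hEe⟩ := Finset.mem_filter.mp hd
          obtain ⟨hd2, hgcd, hdN⟩ := hBfacts d hdB
          obtain ⟨-, -, hddvd⟩ := zmod_facts hp hq hq4 hd2 hgcd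
          have hEd : orderOf ((q : ℕ) : ZMod d) = e := hEe
          rw [hEd] at hddvd
          exact Finset.mem_erase.mpr ⟨by omega, Nat.mem_divisors.mpr ⟨hddvd, hM0⟩⟩
        have h1mem : 1 ∈ M.divisors := Nat.one_mem_divisors.mpr hM0
        have heq : ∑ d ∈ M.divisors.erase 1,
            (d.totient : ℝ) / d * ((e : ℝ)⁻¹ * ((q : ℝ) ^ e)⁻¹)
            = ((Qf M : ℝ) / (M : ℝ) - 1) * ((e : ℝ)⁻¹ * ((q : ℝ) ^ e)⁻¹) := by
          have hkey := Finset.sum_erase_add M.divisors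
            (fun d => (d.totient : ℝ) / d * ((e : ℝ)⁻¹ * ((q : ℝ) ^ e)⁻¹)) h1mem
          have hall : ∑ d ∈ M.divisors,
              (d.totient : ℝ) / d * ((e : ℝ)⁻¹ * ((q : ℝ) ^ e)⁻¹)
              = (Qf M : ℝ) / (M : ℝ) * ((e : ℝ)⁻¹ * ((q : ℝ) ^ e)⁻¹) := by
            rw [← Finset.sum_mul, sum_phi_div_eq M hM0]
          have hone : (Nat.totient 1 : ℝ) / (1 : ℕ) * ((e : ℝ)⁻¹ * ((q : ℝ) ^ e)⁻¹)
              = (e : ℝ)⁻¹ * ((q : ℝ) ^ e)⁻¹ := by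
            simp [Nat.totient_one]
          rw [hall] at hkey
          norm_num [Nat.totient_one] at hkey
          linarith [hkey]
        calc ∑ d ∈ B.filter (fun d => E d = e), (1 - G d) / d
            ≤ ∑ d ∈ B.filter (fun d => E d = e),
                (d.totient : ℝ) / d * ((e : ℝ)⁻¹ * ((q : ℝ) ^ e)⁻¹) :=
              Finset.sum_le_sum hpoint
          _ ≤ ∑ d ∈ M.divisors.erase 1,
                (d.totient : ℝ) / d * ((e : ℝ)⁻¹ * ((q : ℝ) ^ e)⁻¹) :=
              Finset.sum_le_sum_of_subset_of_nonneg hsub (fun i _ _ => by positivity)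
          _ = _ := heq
      -- step 2: branch on e = 1
      by_cases he_1 : e = 1
      · subst he_1
        rw [if_pos rfl]
        have hq3 : 3 ≤ q - 1 := by omega
        have hM_eq : M = q - 1 := by rw [hM_def, pow_one]
        have hQle : (Qf M : ℝ) ≤ (M : ℝ) * s := by
          by_cases hq7 : q = 7
          · subst hq7
            have hM6 : M = 6 := by rw [hM_eq, show (7:ℕ) - 1 = 6 from rfl]
            rw [hM6]
            have h15 : Qf 6 = 15 := by decide
            rw [h15]
            have h7 : s * s = 7 := by exact_mod_cast hsq
            have hs0' : (0 : ℝ) ≤ s := le_of_lt hs0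
            have : (0:ℝ) ≤ 15 + 6 * s := by linarith
            push_cast
            nlinarith
          · have hMne2 : M ≠ 2 := by omega
            have hMne6 : M ≠ 6 := by
              simp only [hM_def, pow_one]
              omega
            have h1 : (Qf M : ℝ) ≤ (M : ℝ) * Real.sqrt M :=
              Qf_le_sqrt (by omega) hMne2 hMne6
            have h2 : Real.sqrt (M : ℝ) ≤ s := by
              rw [hs_def]
              apply Real.sqrt_le_sqrt
              have : M ≤ q := by omega
              exact_mod_cast this
            calc (Qf M : ℝ) ≤ (M : ℝ) * Real.sqrt M := h1
              _ ≤ (M : ℝ) * s := by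
                  apply mul_le_mul_of_nonneg_left h2 (le_of_lt hMpos)
        have hdiv : (Qf M : ℝ) / (M : ℝ) ≤ s := by
          rw [div_le_iff₀ hMpos]
          linarith [hQle]
        refine le_trans hstep1 ?_
        have hc0 : (0 : ℝ) ≤ ((1 : ℕ) : ℝ)⁻¹ * ((q : ℝ) ^ 1)⁻¹ := by positivity
        calc ((Qf M : ℝ) / (M : ℝ) - 1) * (((1 : ℕ) : ℝ)⁻¹ * ((q : ℝ) ^ 1)⁻¹)
            ≤ (s - 1) * (((1 : ℕ) : ℝ)⁻¹ * ((q : ℝ) ^ 1)⁻¹) :=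
              mul_le_mul_of_nonneg_right (by linarith) hc0
          _ = (s - 1) / q := by
              rw [pow_one]
              push_cast
              ring
      · rw [if_neg he_1]
        have he2 : 2 ≤ e := by omega
        have h16 : 16 ≤ q ^ e := by
          calc 16 = 4 ^ 2 := by norm_num
          _ ≤ q ^ 2 := Nat.pow_le_pow_left hq4 2
          _ ≤ q ^ e := Nat.pow_le_pow_right (by omega) he2
        have hse2 : (s ^ e) ^ 2 = (q : ℝ) ^ e := by
          rw [← pow_mul, mul_comm, pow_mul, sq, hsq]
        have hQle : (Qf M : ℝ) ≤ (M : ℝ) * s ^ e := by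
          have h1 : (Qf M : ℝ) ≤ (M : ℝ) * Real.sqrt M :=
            Qf_le_sqrt (by omega) (by omega) (by omega)
          have h2 : Real.sqrt (M : ℝ) ≤ s ^ e := by
            rw [Real.sqrt_le_iff]
            constructor
            · positivity
            · rw [hse2]
              have : M ≤ q ^ e := by omega
              exact_mod_cast this
          calc (Qf M : ℝ) ≤ (M : ℝ) * Real.sqrt M := h1
            _ ≤ (M : ℝ) * s ^ e := mul_le_mul_of_nonneg_left h2 (le_of_lt hMpos)
        have hdiv : (Qf M : ℝ) / (M : ℝ) ≤ s ^ e := by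
          rw [div_le_iff₀ hMpos]
          linarith [hQle]
        refine le_trans hstep1 ?_
        have hc0 : (0 : ℝ) ≤ (e : ℝ)⁻¹ * ((q : ℝ) ^ e)⁻¹ := by positivity
        have hre : s ^ e * ((q : ℝ) ^ e)⁻¹ = r ^ e := by
          have hqe : (q : ℝ) ^ e = s ^ e * s ^ e := by rw [← mul_pow, hsq]
          rw [hqe, mul_inv, ← mul_assoc,
            mul_inv_cancel₀ (ne_of_gt (pow_pos hs0 e)), one_mul, hr_def, inv_pow]
        calc ((Qf M : ℝ) / (M : ℝ) - 1) * ((e : ℝ)⁻¹ * ((q : ℝ) ^ e)⁻¹)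
            ≤ s ^ e * ((e : ℝ)⁻¹ * ((q : ℝ) ^ e)⁻¹) :=
              mul_le_mul_of_nonneg_right (by linarith) hc0
          _ = (s ^ e * ((q : ℝ) ^ e)⁻¹) * (e : ℝ)⁻¹ := by ring
          _ = r ^ e * (e : ℝ)⁻¹ := by rw [hre]
    -- assemble the fiberwise bounds
    have htotal : ∑ e ∈ Finset.Icc 1 N, ∑ d ∈ B.filter (fun d => E d = e), (1 - G d) / d
        ≤ ∑ e ∈ Finset.Icc 1 N, (if e = 1 then (s - 1) / q else r ^ e * (e : ℝ)⁻¹) :=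
      Finset.sum_le_sum hfiber
    refine le_trans htotal ?_
    rw [hIcc, Finset.sum_insert (by simp [Finset.mem_Icc]), if_pos rfl]
    have hcong : ∑ e ∈ Finset.Icc 2 N, (if e = 1 then (s - 1) / q else r ^ e * (e : ℝ)⁻¹)
        = ∑ e ∈ Finset.Icc 2 N, r ^ e * (e : ℝ)⁻¹ := by
      refine Finset.sum_congr rfl fun e he => ?_
      have : 2 ≤ e := (Finset.mem_Icc.mp he).1
      rw [if_neg (by omega)]
    rw [hcong]
    have htail : ∑ e ∈ Finset.Icc 2 N, r ^ e * (e : ℝ)⁻¹ ≤ 5 / (6 * q) := by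
      have hsub23 : Finset.Icc 2 N ⊆ insert 2 (Finset.Icc 3 N) := by
        intro a ha
        simp only [Finset.mem_Icc, Finset.mem_insert] at *
        omega
      have h1 : ∑ e ∈ Finset.Icc 2 N, r ^ e * (e : ℝ)⁻¹
          ≤ ∑ e ∈ insert 2 (Finset.Icc 3 N), r ^ e * (e : ℝ)⁻¹ :=
        Finset.sum_le_sum_of_subset_of_nonneg hsub23 (fun i _ _ => by positivity)
      rw [Finset.sum_insert (by simp [Finset.mem_Icc])] at h1
      have h2 : ∑ e ∈ Finset.Icc 3 N, r ^ e * (e : ℝ)⁻¹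
          ≤ (1 / 3) * ∑ e ∈ Finset.Icc 3 N, r ^ e := by
        rw [Finset.mul_sum]
        refine Finset.sum_le_sum fun e he => ?_
        have he3 : 3 ≤ e := (Finset.mem_Icc.mp he).1
        have : (e : ℝ)⁻¹ ≤ 1 / 3 := by
          rw [show (1:ℝ)/3 = (3:ℝ)⁻¹ by norm_num]
          apply inv_anti₀ (by norm_num)
          exact_mod_cast he3
        calc r ^ e * (e : ℝ)⁻¹ ≤ r ^ e * (1 / 3) :=
              mul_le_mul_of_nonneg_left this (by positivity)
          _ = 1 / 3 * r ^ e := by ring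
      have h3 : ∑ e ∈ Finset.Icc 3 N, r ^ e ≤ 2 * r ^ 3 := by
        rw [← Finset.Ico_add_one_right_eq_Icc, Finset.sum_Ico_eq_sum_range]
        have : ∀ i ∈ Finset.range (N + 1 - 3), r ^ (3 + i) = r ^ 3 * r ^ i := by
          intro i _
          rw [pow_add]
        rw [Finset.sum_congr rfl this, ← Finset.mul_sum]
        have hg := geom2 (N + 1 - 3) hr0 hr2
        calc r ^ 3 * ∑ i ∈ Finset.range (N + 1 - 3), r ^ i ≤ r ^ 3 * 2 :=
              mul_le_mul_of_nonneg_left hg (by positivity)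
          _ = 2 * r ^ 3 := by ring
      have hr3 : r ^ 3 ≤ r ^ 2 * (1 / 2) := by
        have : r ^ 3 = r ^ 2 * r := by ring
        rw [this]
        exact mul_le_mul_of_nonneg_left hr2 (by positivity)
      have hfin : r ^ 2 * (2 : ℝ)⁻¹ + (1/3) * (2 * r ^ 3) ≤ (5/6) * r ^ 2 := by
        nlinarith
      have : (5/6 : ℝ) * r ^ 2 = 5 / (6 * q) := by
        rw [hr2q]
        field_simp
      linarith
    linarith
  linarith


set_option maxHeartbeats 1000000 in
/-- For a prime power `q ≥ 4`, the mean value `μ̄_q` of the density `μ_q(n)` of normal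
elements satisfies `1 - 1/q - 1/√q < μ̄_q ≤ 1 - 1/q`. -/
theorem mean_value_density_normal_bounds
    (p m q : ℕ) (hp : p.Prime) (hm : 0 < m) (hq : q = p ^ m) (hq4 : 4 ≤ q)
    (G : ℕ → ℝ)
    (hG : ∀ d : ℕ, G d = if Nat.gcd d p = 1 then
      (1 - ((q : ℝ) ^ orderOf (q : ZMod d))⁻¹) ^ (d.totient / orderOf (q : ZMod d))
      else 1)
    (μ : ℕ → ℝ) (hμ : ∀ n : ℕ, μ n = ∏ d ∈ n.divisors, G d)
    (μbar : ℝ)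
    (hμbar : Tendsto (fun x : ℝ => (∑ n ∈ Finset.Icc 1 ⌊x⌋₊, μ n) / x) atTop
      (nhds μbar)) :
    1 - 1 / (q : ℝ) - 1 / Real.sqrt q < μbar ∧ μbar ≤ 1 - 1 / (q : ℝ) := by
  have hq4' : (4 : ℝ) ≤ (q : ℝ) := by exact_mod_cast hq4
  have hq0 : (0 : ℝ) < q := by linarith
  have hsq : Real.sqrt q * Real.sqrt q = q := Real.mul_self_sqrt (by positivity)
  have hs0 : 0 < Real.sqrt q := Real.sqrt_pos.mpr hq0
  have hsq2 : (2 : ℝ) ≤ Real.sqrt q := by nlinarith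
  -- basic bounds on G
  have hG0 : ∀ d, 0 ≤ G d := by
    intro d
    rw [hG d]
    split
    · apply pow_nonneg
      have h1 : (1 : ℝ) ≤ (q : ℝ) ^ orderOf ((q : ℕ) : ZMod d) := one_le_pow₀ (by linarith)
      have : ((q : ℝ) ^ orderOf ((q : ℕ) : ZMod d))⁻¹ ≤ 1 := inv_le_one_of_one_le₀ h1
      linarith
    · norm_num
  have hG1le : ∀ d, G d ≤ 1 := by
    intro d
    rw [hG d]
    split
    · apply pow_le_one₀
      · have h1 : (1 : ℝ) ≤ (q : ℝ) ^ orderOf ((q : ℕ) : ZMod d) := one_le_pow₀ (by linarith)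
        have : ((q : ℝ) ^ orderOf ((q : ℕ) : ZMod d))⁻¹ ≤ 1 := inv_le_one_of_one_le₀ h1
        linarith
      · have : (0:ℝ) ≤ ((q : ℝ) ^ orderOf ((q : ℕ) : ZMod d))⁻¹ := by positivity
        linarith
    · norm_num
  have hG1v : G 1 = 1 - (q : ℝ)⁻¹ := by
    rw [hG 1, if_pos (Nat.gcd_one_left p)]
    have h1 : ((q : ℕ) : ZMod 1) = 1 := Subsingleton.elim _ _
    rw [h1, orderOf_one]
    norm_num [Nat.totient_one]
  -- the uniform bound constant
  set T : ℝ := 1 / (q : ℝ) + (Real.sqrt q - 1) / q + 5 / (6 * q) with hT_def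
  -- Upper bound
  have hub : μbar ≤ 1 - 1 / (q : ℝ) := by
    apply le_of_tendsto hμbar
    filter_upwards [eventually_ge_atTop (1 : ℝ)] with x hx
    have hx0 : (0 : ℝ) < x := by linarith
    set N := ⌊x⌋₊ with hN_def
    have hsum : ∑ n ∈ Finset.Icc 1 N, μ n ≤ (N : ℝ) * (1 - 1 / q) := by
      have hptw : ∀ n ∈ Finset.Icc 1 N, μ n ≤ 1 - 1 / q := by
        intro n hn
        have hn1 : 1 ≤ n := (Finset.mem_Icc.mp hn).1
        have h1mem : 1 ∈ n.divisors := Nat.one_mem_divisors.mpr (by omega)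
        rw [hμ n, ← Finset.mul_prod_erase _ _ h1mem]
        have hpr1 : ∏ d ∈ n.divisors.erase 1, G d ≤ 1 :=
          Finset.prod_le_one (fun i _ => hG0 i) (fun i _ => hG1le i)
        have hpr0 : 0 ≤ ∏ d ∈ n.divisors.erase 1, G d :=
          Finset.prod_nonneg (fun i _ => hG0 i)
        calc G 1 * ∏ d ∈ n.divisors.erase 1, G d ≤ G 1 * 1 :=
              mul_le_mul_of_nonneg_left hpr1 (hG0 1)
          _ = 1 - 1 / q := by rw [hG1v, mul_one, one_div]
      calc ∑ n ∈ Finset.Icc 1 N, μ n ≤ ∑ n ∈ Finset.Icc 1 N, (1 - 1 / (q:ℝ)) :=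
            Finset.sum_le_sum hptw
        _ = (N : ℝ) * (1 - 1 / q) := by
            rw [Finset.sum_const, Nat.card_Icc]
            simp [nsmul_eq_mul]
    have hNx : (N : ℝ) ≤ x := Nat.floor_le (le_of_lt hx0)
    have h1q : (0:ℝ) ≤ 1 - 1 / q := by
      have : (1:ℝ)/q ≤ 1/4 := by
        apply div_le_div_of_nonneg_left (by norm_num) (by norm_num) hq4'
      linarith
    rw [div_le_iff₀ hx0]
    calc ∑ n ∈ Finset.Icc 1 N, μ n ≤ (N : ℝ) * (1 - 1 / q) := hsum
      _ ≤ x * (1 - 1/q) := mul_le_mul_of_nonneg_right hNx h1q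
      _ = (1 - 1/q) * x := by ring
  -- Lower bound
  set c : ℝ := 1 - T with hc_def
  have hlbev : ∀ᶠ x in atTop, ((⌊x⌋₊ : ℝ) / x) * c ≤ (∑ n ∈ Finset.Icc 1 ⌊x⌋₊, μ n) / x := by
    filter_upwards [eventually_ge_atTop (1 : ℝ)] with x hx
    have hx0 : (0 : ℝ) < x := by linarith
    set N := ⌊x⌋₊ with hN_def
    have hN1 : 1 ≤ N := Nat.le_floor (by exact_mod_cast hx)
    -- Weierstrass inequality pointwise
    have hweier : ∀ n ∈ Finset.Icc 1 N, 1 - ∑ d ∈ n.divisors, (1 - G d) ≤ μ n := by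
      intro n hn
      rw [hμ n]
      exact weier n.divisors G (fun i _ => hG0 i) (fun i _ => hG1le i)
    -- divisor swap
    have hdiveq : ∀ n ∈ Finset.Icc 1 N, n.divisors = (Finset.Icc 1 N).filter (· ∣ n) := by
      intro n hn
      obtain ⟨hn1, hnN⟩ := Finset.mem_Icc.mp hn
      ext a
      simp only [Nat.mem_divisors, Finset.mem_filter, Finset.mem_Icc]
      constructor
      · rintro ⟨hadvd, -⟩
        have ha1 : 1 ≤ a := Nat.pos_of_dvd_of_pos hadvd (by omega)
        have haN : a ≤ N := le_trans (Nat.le_of_dvd (by omega) hadvd) hnN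
        exact ⟨⟨ha1, haN⟩, hadvd⟩
      · rintro ⟨-, hadvd⟩
        exact ⟨hadvd, by omega⟩
    have hswap : ∑ n ∈ Finset.Icc 1 N, ∑ d ∈ n.divisors, (1 - G d)
        = ∑ d ∈ Finset.Icc 1 N, (1 - G d) * (((Finset.Icc 1 N).filter (d ∣ ·)).card : ℝ) := by
      have h1 : ∑ n ∈ Finset.Icc 1 N, ∑ d ∈ n.divisors, (1 - G d)
          = ∑ n ∈ Finset.Icc 1 N, ∑ d ∈ Finset.Icc 1 N, if d ∣ n then (1 - G d) else 0 := by
        refine Finset.sum_congr rfl fun n hn => ?_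
        rw [hdiveq n hn, Finset.sum_filter]
      rw [h1, Finset.sum_comm]
      refine Finset.sum_congr rfl fun d hd => ?_
      rw [← Finset.sum_filter, Finset.sum_const, nsmul_eq_mul]
      ring
    have hcard : ∀ d, (((Finset.Icc 1 N).filter (d ∣ ·)).card : ℝ) ≤ (N : ℝ) / d := by
      intro d
      have hIoc : Finset.Icc 1 N = Finset.Ioc 0 N := rfl
      have : ((Finset.Icc 1 N).filter (d ∣ ·)).card = N / d := by
        rw [hIoc]
        exact Nat.Ioc_filter_dvd_card_eq_div N d
      rw [this]
      exact Nat.cast_div_le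
    have hdsum : ∑ d ∈ Finset.Icc 1 N, (1 - G d) * (((Finset.Icc 1 N).filter (d ∣ ·)).card : ℝ)
        ≤ (N : ℝ) * ∑ d ∈ Finset.Icc 1 N, (1 - G d) / d := by
      rw [Finset.mul_sum]
      refine Finset.sum_le_sum fun d hd => ?_
      have hd1 : 1 ≤ d := (Finset.mem_Icc.mp hd).1
      have hd0 : (0:ℝ) < d := by exact_mod_cast hd1
      have hg0 : 0 ≤ 1 - G d := by linarith [hG1le d]
      calc (1 - G d) * (((Finset.Icc 1 N).filter (d ∣ ·)).card : ℝ)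
          ≤ (1 - G d) * ((N : ℝ) / d) := mul_le_mul_of_nonneg_left (hcard d) hg0
        _ = (N : ℝ) * ((1 - G d) / d) := by ring
    have hmain := main_sum_bound p m q hp hq hq4 G hG N hN1
    have hlow : (N : ℝ) * c ≤ ∑ n ∈ Finset.Icc 1 N, μ n := by
      have h1 : ∑ n ∈ Finset.Icc 1 N, (1 - ∑ d ∈ n.divisors, (1 - G d))
          ≤ ∑ n ∈ Finset.Icc 1 N, μ n := Finset.sum_le_sum hweier
      have h2 : ∑ n ∈ Finset.Icc 1 N, (1 - ∑ d ∈ n.divisors, (1 - G d))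
          = (N : ℝ) - ∑ n ∈ Finset.Icc 1 N, ∑ d ∈ n.divisors, (1 - G d) := by
        rw [Finset.sum_sub_distrib, Finset.sum_const, Nat.card_Icc]
        simp [nsmul_eq_mul]
      have h3 : ∑ n ∈ Finset.Icc 1 N, ∑ d ∈ n.divisors, (1 - G d) ≤ (N : ℝ) * T := by
        rw [hswap]
        refine le_trans hdsum ?_
        have hN0 : (0:ℝ) ≤ N := Nat.cast_nonneg N
        exact mul_le_mul_of_nonneg_left hmain hN0
      have : (N : ℝ) * c = (N : ℝ) - (N : ℝ) * T := by rw [hc_def]; ring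
      rw [this]
      linarith
    calc ((N : ℝ) / x) * c = ((N:ℝ) * c) / x := by ring
      _ ≤ (∑ n ∈ Finset.Icc 1 N, μ n) / x := (div_le_div_iff_of_pos_right hx0).mpr hlow
  have htendc : Tendsto (fun x : ℝ => ((⌊x⌋₊ : ℝ) / x) * c) atTop (nhds (1 * c)) :=
    tendsto_nat_floor_div_atTop.mul_const c
  have hlb : 1 * c ≤ μbar := le_of_tendsto_of_tendsto htendc hμbar hlbev
  constructor
  · have h1s : (1:ℝ) / Real.sqrt q = Real.sqrt q / q := by
      rw [div_eq_div_iff hs0.ne' hq0.ne', one_mul, hsq]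
    have hq6 : 0 < 5 / (6 * (q:ℝ)) := by positivity
    have hgap : 1 - 1 / (q : ℝ) - 1 / Real.sqrt q < c := by
      rw [hc_def, hT_def, h1s]
      have h5 : 5 / (6 * (q:ℝ)) < 1 / q := by
        rw [div_lt_div_iff₀ (by positivity) hq0]
        linarith
      have hexp : (Real.sqrt q - 1) / (q:ℝ) = Real.sqrt q / q - 1 / q := by ring
      linarith
    linarith
  · exact hub
end
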